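/- arXiv:math/9909044 — 9 statements merged into one kernel-verified Lean document; each statement's English description precedes it below -/
import Mathlib

section
/- For nonnegative integers L1, L2, M and integer ℓ with L1, L2 ≥ 0, the q-Saalschütz summation holds: ∑_{i=0}^{M} q^{i(i+ℓ)} · binq(L1+L2+M−i, M−i) · binq(L1, i+ℓ) · binq(L2, i) = binq(L1+M, M+ℓ) · binq(L2+M+ℓ, M), where binq(n, k) denotes the Gaussian (q-binomial) coefficient, defined to be 0 when k < 0 or k > n. -/
/-!
STATEMENT 0: the q-Saalschütz summation for Gaussian binomial coefficients,
stated over the field of rational functions `K = ℚ(q)` with `q` the variable.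
-/

noncomputable section

namespace Stmt0

abbrev K : Type := RatFunc ℚ

def q : K := RatFunc.X

/-- `(q;q)_n = ∏_{k=1}^n (1 - q^k)`. -/
def poch (n : ℕ) : K := ∏ k ∈ Finset.range n, (1 - q ^ (k + 1))

/-- Gaussian binomial coefficient `binq n k`, equal to
`(q)_n / ((q)_k (q)_{n-k})` for `0 ≤ k ≤ n` and `0` otherwise. -/
def binq (n k : ℤ) : K :=
  if 0 ≤ k ∧ k ≤ n then poch n.toNat / (poch k.toNat * poch (n - k).toNat) else 0

lemma q_ne_zero : q ≠ 0 := by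
  simpa [q] using RatFunc.X_ne_zero (K := ℚ)

lemma q_pow_ne_one {n : ℕ} (hn : n ≠ 0) : q ^ n ≠ (1 : K) := by
  intro h
  have : (Polynomial.X ^ n : Polynomial ℚ) = 1 := by
    apply RatFunc.algebraMap_injective ℚ ?_
    · simpa [q, RatFunc.algebraMap_X] using h
  have := congrArg Polynomial.natDegree this
  simp [Polynomial.natDegree_X_pow] at this
  exact hn this

lemma one_sub_q_pow_ne_zero {n : ℕ} (hn : n ≠ 0) : (1 : K) - q ^ n ≠ 0 := by
  intro h
  exact q_pow_ne_one hn (by linear_combination -h)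

lemma poch_zero : poch 0 = 1 := by simp [poch]

lemma poch_succ (n : ℕ) : poch (n + 1) = poch n * (1 - q ^ (n + 1)) := by
  simp [poch, Finset.prod_range_succ]

lemma poch_ne_zero (n : ℕ) : poch n ≠ 0 := by
  induction n with
  | zero => simp [poch]
  | succ m ih =>
    rw [poch_succ]
    exact mul_ne_zero ih (one_sub_q_pow_ne_zero (Nat.succ_ne_zero m))

lemma zq_mul (a b : ℤ) : q ^ a * q ^ b = q ^ (a + b) := (zpow_add₀ q_ne_zero a b).symm

lemma binq_of_neg {n k : ℤ} (h : k < 0) : binq n k = 0 := by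
  rw [binq, if_neg]; omega

lemma binq_of_gt {n k : ℤ} (h : n < k) : binq n k = 0 := by
  rw [binq, if_neg]; omega

lemma binq_eq (a b : ℕ) : binq ((a : ℤ) + b) a = poch (a + b) / (poch a * poch b) := by
  rw [binq, if_pos (by omega)]
  rw [show ((a : ℤ) + b).toNat = a + b by omega, show ((a : ℤ)).toNat = a by omega,
    show ((a : ℤ) + b - a).toNat = b by omega]

lemma binq_eq' {n k : ℤ} (a b : ℕ) (ha : k = (a : ℤ)) (hb : n = (a : ℤ) + b) :
    binq n k = poch (a + b) / (poch a * poch b) := by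
  rw [ha, hb, binq_eq]

/-- (L-bot) -/
lemma Lbot (n : ℤ) (hn : 0 ≤ n) (k : ℤ) :
    (1 - q ^ k) * binq n k = (1 - q ^ (n - k + 1)) * binq n (k - 1) := by
  rcases lt_trichotomy k 0 with hk | hk | hk
  · rw [binq_of_neg hk, binq_of_neg (show k - 1 < 0 by omega)]; ring
  · subst hk
    rw [show (0:ℤ) - 1 = -1 by norm_num, binq_of_neg (show (-1:ℤ) < 0 by norm_num)]
    simp
  · rcases le_or_gt k n with hkn | hkn
    · -- 1 ≤ k ≤ n
      obtain ⟨c, b, hc, hb⟩ : ∃ c b : ℕ, k = (c : ℤ) + 1 ∧ n = (c : ℤ) + 1 + b :=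
        ⟨(k - 1).toNat, (n - k).toNat, by omega, by omega⟩
      rw [binq_eq' (c + 1) b (by push_cast; omega) (by push_cast; omega),
        binq_eq' c (b + 1) (by push_cast; omega) (by push_cast; omega)]
      rw [show k = ((c + 1 : ℕ) : ℤ) by push_cast; omega,
        show n - ((c + 1 : ℕ) : ℤ) + 1 = ((b + 1 : ℕ) : ℤ) by push_cast; omega]
      rw [zpow_natCast, zpow_natCast]
      rw [congrArg poch (show c + 1 + b = c + (b + 1) by omega),
        poch_succ c, poch_succ b]
      have h1 := poch_ne_zero c
      have h2 := poch_ne_zero b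
      have h3 := poch_ne_zero (c + (b + 1))
      have h4 := one_sub_q_pow_ne_zero (Nat.succ_ne_zero c)
      have h5 := one_sub_q_pow_ne_zero (Nat.succ_ne_zero b)
      field_simp
    · rcases eq_or_lt_of_le (show n + 1 ≤ k by omega) with hk1 | hk1
      · rw [binq_of_gt (show n < k by omega), show n - k + 1 = 0 by omega, zpow_zero]
        simp
      · rw [binq_of_gt (show n < k by omega), binq_of_gt (show n < k - 1 by omega)]
        ring

/-- (L-top) -/
lemma Ltop (n : ℤ) (hn : 0 ≤ n) (k : ℤ) :
    (1 - q ^ (n + 1 - k)) * binq (n + 1) k = (1 - q ^ (n + 1)) * binq n k := by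
  rcases lt_or_ge k 0 with hk | hk
  · rw [binq_of_neg hk, binq_of_neg hk]; ring
  · rcases le_or_gt k n with hkn | hkn
    · obtain ⟨a, b, ha, hb⟩ : ∃ a b : ℕ, k = (a : ℤ) ∧ n = (a : ℤ) + b :=
        ⟨k.toNat, (n - k).toNat, by omega, by omega⟩
      rw [binq_eq' a (b + 1) (by push_cast; omega) (by push_cast; omega),
        binq_eq' a b (by push_cast; omega) (by push_cast; omega)]
      rw [show n + 1 - k = ((b + 1 : ℕ) : ℤ) by push_cast; omega,
        show n + 1 = ((a + b + 1 : ℕ) : ℤ) by push_cast; omega]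
      rw [zpow_natCast, zpow_natCast]
      rw [congrArg poch (show a + (b + 1) = (a + b) + 1 by omega),
        poch_succ (a + b), poch_succ b]
      have h1 := poch_ne_zero a
      have h2 := poch_ne_zero b
      have h3 := poch_ne_zero (a + b)
      have h4 := one_sub_q_pow_ne_zero (Nat.succ_ne_zero (a + b))
      have h5 := one_sub_q_pow_ne_zero (Nat.succ_ne_zero b)
      field_simp
    · rcases eq_or_lt_of_le (show n + 1 ≤ k by omega) with hk1 | hk1
      · rw [show n + 1 - k = 0 by omega, zpow_zero, binq_of_gt (show n < k by omega)]
        simp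
      · rw [binq_of_gt (show n + 1 < k by omega), binq_of_gt (show n < k by omega)]
        ring

lemma pascal (n : ℤ) (hn : 0 ≤ n) (k : ℤ) :
    binq (n + 1) k = binq n (k - 1) + q ^ k * binq n k := by
  rcases lt_trichotomy k 0 with hk | hk | hk
  · rw [binq_of_neg hk, binq_of_neg hk, binq_of_neg (show k - 1 < 0 by omega)]; ring
  · subst hk
    obtain ⟨N, hN⟩ : ∃ N : ℕ, n = (N : ℤ) := ⟨n.toNat, by omega⟩
    rw [show (0:ℤ) - 1 = -1 by norm_num, binq_of_neg (show (-1:ℤ) < 0 by norm_num)]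
    rw [binq_eq' 0 (N + 1) (by push_cast; try omega) (by push_cast; try omega),
      binq_eq' 0 N (by push_cast; try omega) (by push_cast; try omega)]
    rw [zpow_zero, poch_zero]
    simp only [Nat.zero_add, one_mul, zero_add, one_mul]
    rw [div_self (poch_ne_zero (N + 1)), div_self (poch_ne_zero N)]
  · rcases le_or_gt k n with hkn | hkn
    · obtain ⟨c, b, hc, hb⟩ : ∃ c b : ℕ, k = (c : ℤ) + 1 ∧ n = (c : ℤ) + 1 + b :=
        ⟨(k - 1).toNat, (n - k).toNat, by omega, by omega⟩
      rw [binq_eq' (c + 1) (b + 1) (by push_cast; omega) (by push_cast; omega),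
        binq_eq' c (b + 1) (by push_cast; omega) (by push_cast; omega),
        binq_eq' (c + 1) b (by push_cast; omega) (by push_cast; omega)]
      rw [show k = ((c + 1 : ℕ) : ℤ) by push_cast; omega, zpow_natCast]
      rw [congrArg poch (show c + 1 + (b + 1) = (c + (b + 1)) + 1 by omega),
        congrArg poch (show c + 1 + b = c + (b + 1) by omega),
        poch_succ (c + (b + 1)), poch_succ c, poch_succ b]
      have h1 := poch_ne_zero c
      have h2 := poch_ne_zero b
      have h3 := poch_ne_zero (c + (b + 1))
      have h4 := one_sub_q_pow_ne_zero (Nat.succ_ne_zero c)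
      have h5 := one_sub_q_pow_ne_zero (Nat.succ_ne_zero b)
      have h6 := one_sub_q_pow_ne_zero (Nat.succ_ne_zero (c + (b + 1)))
      field_simp
      ring
    · rcases eq_or_lt_of_le (show n + 1 ≤ k by omega) with hk1 | hk1
      · obtain ⟨N, hN⟩ : ∃ N : ℕ, n = (N : ℤ) := ⟨n.toNat, by omega⟩
        rw [binq_of_gt (show n < k by omega)]
        rw [binq_eq' (N + 1) 0 (by push_cast; omega) (by push_cast; omega),
          binq_eq' N 0 (by push_cast; try omega) (by push_cast; try omega)]
        simp only [Nat.add_zero, poch_zero, mul_one, mul_zero, add_zero]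
        rw [div_self (poch_ne_zero (N + 1)), div_self (poch_ne_zero N)]
      · rw [binq_of_gt (show n + 1 < k by omega), binq_of_gt (show n < k by omega),
          binq_of_gt (show n < k - 1 by omega)]
        ring


lemma LS_abstract {R : Type*} [CommRing R] (qq A B2 C D x y z u vp : R)
    (hy : y * x = qq * A * B2 * C)
    (hz : z * x = C)
    (hu : u * x * D = A)
    (hyu : y = qq * u * B2 * C * D)
    (hv : vp * x = B2) :
    (1 - y) * (1 - x) + x * (1 - qq * B2 * D) * (1 - y)
      - (1 - qq * A * B2) * (1 - qq * B2 * C * D)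
      + x * x * qq * D * vp * (1 - z) * (1 - u) = 0 := by
  linear_combination qq * B2 * D * hy + (-(qq * D * B2) + qq * u * D * B2) * hz
    + (-(qq * B2)) * hu + (-1 : R) * hyu + qq * x * D * (1 - z) * (1 - u) * hv

lemma key_abstract {R : Type*} [CommRing R]
    (qq A B2 C D x y z u vp w P1 P1pp P1m Q Qp C2 C2m C2p1 D1 D2 D2p : R)
    (h1 : C2p1 = C2m + x * C2)
    (h2 : (1 - qq * A * B2) * P1pp = (1 - y) * P1)
    (h3 : (1 - qq * B2 * D) * D2p = (1 - qq * B2 * C * D) * D2)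
    (h4 : (1 - z) * P1 = (1 - qq * A * B2) * P1m)
    (h5 : (1 - qq * x * D) * Qp = (1 - u) * Q)
    (h6 : (1 - x) * C2 = (1 - qq * vp) * C2m)
    (hv : vp * x = B2)
    (hLS : (1 - y) * (1 - x) + x * (1 - qq * B2 * D) * (1 - y)
      - (1 - qq * A * B2) * (1 - qq * B2 * C * D)
      + x * x * qq * D * vp * (1 - z) * (1 - u) = 0) :
    (1 - qq * A * B2) * (1 - qq * B2 * D) *
        (w * P1pp * Q * C2p1 * D1 * D2 - w * P1 * Q * C2 * D1 * D2p)
      = (1 - qq * A * B2) *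
        (-(w * x * x * qq * D * vp * (1 - qq * x * D) * P1m * Qp * C2 * D1 * D2)
          - -(w * qq * vp * (1 - x * D) * P1pp * Q * C2m * D1 * D2)) := by
  linear_combination
    ((1 - qq * A * B2) * (1 - qq * B2 * D) * w * P1pp * Q * D1 * D2) * h1
    + (w * Q * D1 * D2 * ((1 - qq * B2 * D) * (C2m + x * C2) - qq * vp * (1 - x * D) * C2m)) * h2
    + (-((1 - qq * A * B2) * w * P1 * Q * C2 * D1)) * h3
    + (-(w * x * x * qq * D * vp * (1 - qq * x * D) * Qp * C2 * D1 * D2)) * h4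
    + (w * x * x * qq * D * vp * (1 - z) * P1 * C2 * D1 * D2) * h5
    + (-((1 - y) * (w * P1 * Q * D1 * D2))) * h6
    + (qq * D * (1 - y) * (w * P1 * Q * D1 * D2) * C2m) * hv
    + (w * P1 * Q * D1 * D2 * C2) * hLS


lemma zq_congr {a b : ℤ} (h : a = b) : (q : K) ^ a = q ^ b := by rw [h]

def Sterm (L1 L2 M l i : ℕ) : K :=
  q ^ ((i : ℤ) * ((i : ℤ) + l)) * binq ((L1 : ℤ) + L2 + M - i) ((M : ℤ) - i) *
    binq (L1 : ℤ) ((i : ℤ) + l) * binq (L2 : ℤ) (i : ℤ)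

def RRR (L1 L2 M l : ℕ) : K :=
  binq ((L1 : ℤ) + M) ((M : ℤ) + l) * binq ((L2 : ℤ) + M + l) (M : ℤ)

def HH (L1 L2 M l i : ℕ) : K :=
  -(q ^ ((i : ℤ) * ((i : ℤ) + l) + (L2 : ℤ) + 1 - i) * (1 - q ^ ((i : ℤ) + l)) *
    binq ((L1 : ℤ) + L2 + M - i + 1) ((M : ℤ) - i) * binq (L1 : ℤ) ((i : ℤ) + l) *
    binq (L2 : ℤ) ((i : ℤ) - 1) * binq ((L1 : ℤ) + M) ((M : ℤ) + l) *
    binq ((L2 : ℤ) + M + l) (M : ℤ))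

lemma step (L1 L2 M l i : ℕ) (hi : i ≤ M) :
    (1 - q ^ ((L1 : ℤ) + L2 + 1)) * (1 - q ^ ((L2 : ℤ) + l + 1)) *
      (Sterm L1 (L2 + 1) M l i * RRR L1 L2 M l - Sterm L1 L2 M l i * RRR L1 (L2 + 1) M l)
    = (1 - q ^ ((L1 : ℤ) + L2 + 1)) * (HH L1 L2 M l (i + 1) - HH L1 L2 M l i) := by
  have hq := q_ne_zero
  have h1 := pascal (L2 : ℤ) (by omega) (i : ℤ)
  have h2 := Ltop ((L1 : ℤ) + L2 + M - i) (by omega) ((M : ℤ) - i)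
  have h3 := Ltop ((L2 : ℤ) + M + l) (by omega) (M : ℤ)
  have h4 := Lbot ((L1 : ℤ) + L2 + M - i) (by omega) ((M : ℤ) - i)
  have h5 := Lbot (L1 : ℤ) (by omega) ((i : ℤ) + l + 1)
  have h6 := Lbot (L2 : ℤ) (by omega) (i : ℤ)
  have hv : (q : K) ^ ((L2 : ℤ) - i) * q ^ (i : ℤ) = q ^ (L2 : ℤ) := by
    simp only [← zpow_add₀ hq]; exact zq_congr (by ring)
  have hy : (q : K) ^ ((L1 : ℤ) + L2 + M - i + 1) * q ^ (i : ℤ)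
      = q ^ (1 : ℤ) * q ^ (L1 : ℤ) * q ^ (L2 : ℤ) * q ^ (M : ℤ) := by
    simp only [← zpow_add₀ hq]; exact zq_congr (by ring)
  have hz : (q : K) ^ ((M : ℤ) - i) * q ^ (i : ℤ) = q ^ (M : ℤ) := by
    simp only [← zpow_add₀ hq]; exact zq_congr (by ring)
  have hu : (q : K) ^ ((L1 : ℤ) - i - l) * q ^ (i : ℤ) * q ^ (l : ℤ) = q ^ (L1 : ℤ) := by
    simp only [← zpow_add₀ hq]; exact zq_congr (by ring)
  have hyu : (q : K) ^ ((L1 : ℤ) + L2 + M - i + 1)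
      = q ^ (1 : ℤ) * q ^ ((L1 : ℤ) - i - l) * q ^ (L2 : ℤ) * q ^ (M : ℤ) * q ^ (l : ℤ) := by
    simp only [← zpow_add₀ hq]; exact zq_congr (by ring)
  have hLS := LS_abstract (q ^ (1 : ℤ)) (q ^ (L1 : ℤ)) (q ^ (L2 : ℤ)) (q ^ (M : ℤ))
    (q ^ (l : ℤ)) (q ^ (i : ℤ)) (q ^ ((L1 : ℤ) + L2 + M - i + 1)) (q ^ ((M : ℤ) - i))
    (q ^ ((L1 : ℤ) - i - l)) (q ^ ((L2 : ℤ) - i)) hy hz hu hyu hv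
  have h2' : (1 - q ^ (1 : ℤ) * q ^ (L1 : ℤ) * q ^ (L2 : ℤ)) *
      binq ((L1 : ℤ) + L2 + M - i + 1) ((M : ℤ) - i)
      = (1 - q ^ ((L1 : ℤ) + L2 + M - i + 1)) * binq ((L1 : ℤ) + L2 + M - i) ((M : ℤ) - i) := by
    simp only [← zpow_add₀ hq]; linear_combination (norm := ring_nf) h2
  have h3' : (1 - q ^ (1 : ℤ) * q ^ (L2 : ℤ) * q ^ (l : ℤ)) * binq ((L2 : ℤ) + M + l + 1) (M : ℤ)
      = (1 - q ^ (1 : ℤ) * q ^ (L2 : ℤ) * q ^ (M : ℤ) * q ^ (l : ℤ)) *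
        binq ((L2 : ℤ) + M + l) (M : ℤ) := by
    simp only [← zpow_add₀ hq]; linear_combination (norm := ring_nf) h3
  have h4' : (1 - q ^ ((M : ℤ) - i)) * binq ((L1 : ℤ) + L2 + M - i) ((M : ℤ) - i)
      = (1 - q ^ (1 : ℤ) * q ^ (L1 : ℤ) * q ^ (L2 : ℤ)) *
        binq ((L1 : ℤ) + L2 + M - i) ((M : ℤ) - i - 1) := by
    simp only [← zpow_add₀ hq]; linear_combination (norm := ring_nf) h4
  have h5' : (1 - q ^ (1 : ℤ) * q ^ (i : ℤ) * q ^ (l : ℤ)) * binq (L1 : ℤ) ((i : ℤ) + l + 1)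
      = (1 - q ^ ((L1 : ℤ) - i - l)) * binq (L1 : ℤ) ((i : ℤ) + l) := by
    simp only [← zpow_add₀ hq]
    have e : binq (L1 : ℤ) ((i : ℤ) + l + 1 - 1) = binq (L1 : ℤ) ((i : ℤ) + l) := by
      norm_num
    rw [e] at h5
    linear_combination (norm := ring_nf) h5
  have h6' : (1 - q ^ (i : ℤ)) * binq (L2 : ℤ) (i : ℤ)
      = (1 - q ^ (1 : ℤ) * q ^ ((L2 : ℤ) - i)) * binq (L2 : ℤ) ((i : ℤ) - 1) := by
    simp only [← zpow_add₀ hq]; linear_combination (norm := ring_nf) h6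
  have KEY := key_abstract (q ^ (1 : ℤ)) (q ^ (L1 : ℤ)) (q ^ (L2 : ℤ)) (q ^ (M : ℤ))
    (q ^ (l : ℤ)) (q ^ (i : ℤ)) (q ^ ((L1 : ℤ) + L2 + M - i + 1)) (q ^ ((M : ℤ) - i))
    (q ^ ((L1 : ℤ) - i - l)) (q ^ ((L2 : ℤ) - i)) (q ^ ((i : ℤ) * ((i : ℤ) + l)))
    (binq ((L1 : ℤ) + L2 + M - i) ((M : ℤ) - i))
    (binq ((L1 : ℤ) + L2 + M - i + 1) ((M : ℤ) - i))
    (binq ((L1 : ℤ) + L2 + M - i) ((M : ℤ) - i - 1))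
    (binq (L1 : ℤ) ((i : ℤ) + l)) (binq (L1 : ℤ) ((i : ℤ) + l + 1))
    (binq (L2 : ℤ) (i : ℤ)) (binq (L2 : ℤ) ((i : ℤ) - 1)) (binq ((L2 : ℤ) + 1) (i : ℤ))
    (binq ((L1 : ℤ) + M) ((M : ℤ) + l)) (binq ((L2 : ℤ) + M + l) (M : ℤ))
    (binq ((L2 : ℤ) + M + l + 1) (M : ℤ))
    h1 h2' h3' h4' h5' h6' hv hLS
  simp only [Sterm, RRR, HH]
  push_cast
  simp only [← zpow_add₀ hq] at KEY
  linear_combination (norm := ring_nf) KEY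

lemma one_sub_zq_ne_zero (e : ℕ) (he : e ≠ 0) : (1 : K) - q ^ ((e : ℕ) : ℤ) ≠ 0 := by
  rw [zpow_natCast]; exact one_sub_q_pow_ne_zero he

lemma HH_zero_left (L1 L2 M l : ℕ) : HH L1 L2 M l 0 = 0 := by
  rw [HH, binq_of_neg (show ((0:ℕ):ℤ) - 1 < 0 by norm_num)]
  ring

lemma HH_zero_right (L1 L2 M l : ℕ) : HH L1 L2 M l (M + 1) = 0 := by
  rw [HH, binq_of_neg (show (M:ℤ) - ((M+1 : ℕ) : ℤ) < 0 by push_cast; omega)]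
  ring

lemma RRR_ne_zero (L1 L2 M l : ℕ) (hl : l ≤ L1) : RRR L1 L2 M l ≠ 0 := by
  rw [RRR,
    binq_eq' (M + l) (L1 - l) (by push_cast; omega) (by push_cast; omega),
    binq_eq' M (L2 + l) (by push_cast; omega) (by push_cast; omega)]
  exact mul_ne_zero
    (div_ne_zero (poch_ne_zero _) (mul_ne_zero (poch_ne_zero _) (poch_ne_zero _)))
    (div_ne_zero (poch_ne_zero _) (mul_ne_zero (poch_ne_zero _) (poch_ne_zero _)))

lemma sum_base (L1 M l : ℕ) (hl : l ≤ L1) :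
    ∑ i ∈ Finset.range (M + 1), Sterm L1 0 M l i = RRR L1 0 M l := by
  rw [Finset.sum_eq_single_of_mem 0 (by simp)]
  · rw [Sterm, RRR]
    push_cast
    norm_num
    rw [binq_eq' M L1 (show ((M:ℕ):ℤ) = ((M:ℕ):ℤ) from rfl)
          (show (L1:ℤ) + (M:ℤ) = ((M:ℕ):ℤ) + ((L1:ℕ):ℤ) by omega),
        binq_eq' l (L1 - l) (show ((l:ℕ):ℤ) = ((l:ℕ):ℤ) from rfl)
          (show (L1:ℤ) = ((l:ℕ):ℤ) + ((L1 - l : ℕ):ℤ) by omega),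
        binq_eq' 0 0 (show (0:ℤ) = ((0:ℕ):ℤ) by norm_num)
          (show (0:ℤ) = ((0:ℕ):ℤ) + ((0:ℕ):ℤ) by norm_num),
        binq_eq' (M + l) (L1 - l) (show (M:ℤ) + (l:ℤ) = ((M + l : ℕ):ℤ) by push_cast; omega)
          (show (L1:ℤ) + (M:ℤ) = ((M + l : ℕ):ℤ) + ((L1 - l : ℕ):ℤ) by push_cast; omega),
        binq_eq' M l (show ((M:ℕ):ℤ) = ((M:ℕ):ℤ) from rfl)
          (show (M:ℤ) + (l:ℤ) = ((M:ℕ):ℤ) + ((l:ℕ):ℤ) from rfl)]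
    rw [congrArg poch (show l + (L1 - l) = L1 by omega),
      congrArg poch (show M + l + (L1 - l) = M + L1 by omega)]
    have p1 := poch_ne_zero M
    have p2 := poch_ne_zero l
    have p3 := poch_ne_zero (L1 - l)
    have p4 := poch_ne_zero (M + l)
    have p5 := poch_ne_zero (M + L1)
    have p6 := poch_ne_zero L1
    have p0 := poch_ne_zero 0
    field_simp
    rw [poch_zero]
  · intro b _ hb
    rw [Sterm, binq_of_gt (show ((0:ℕ):ℤ) < (b:ℤ) by push_cast; omega)]
    ring

lemma sum_eq (L1 M l : ℕ) (hl : l ≤ L1) :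
    ∀ L2 : ℕ, ∑ i ∈ Finset.range (M + 1), Sterm L1 L2 M l i = RRR L1 L2 M l := by
  intro L2
  induction L2 with
  | zero => exact sum_base L1 M l hl
  | succ L2 ih =>
    have tele : ∑ i ∈ Finset.range (M + 1),
        ((1 - q ^ ((L1 : ℤ) + L2 + 1)) * (1 - q ^ ((L2 : ℤ) + l + 1)) *
          (Sterm L1 (L2 + 1) M l i * RRR L1 L2 M l - Sterm L1 L2 M l i * RRR L1 (L2 + 1) M l))
        = ∑ i ∈ Finset.range (M + 1),
          ((1 - q ^ ((L1 : ℤ) + L2 + 1)) * (HH L1 L2 M l (i + 1) - HH L1 L2 M l i)) :=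
      Finset.sum_congr rfl (fun i hi => step L1 L2 M l i (by
        simp only [Finset.mem_range] at hi; omega))
    rw [← Finset.mul_sum, ← Finset.mul_sum, Finset.sum_range_sub (f := HH L1 L2 M l),
      HH_zero_right, HH_zero_left, sub_zero, mul_zero] at tele
    rw [Finset.sum_sub_distrib, ← Finset.sum_mul, ← Finset.sum_mul, ih] at tele
    have c1 : (1 : K) - q ^ ((L1 : ℤ) + L2 + 1) ≠ 0 := by
      have := one_sub_zq_ne_zero (L1 + L2 + 1) (by omega)
      rwa [show ((L1 + L2 + 1 : ℕ) : ℤ) = (L1 : ℤ) + L2 + 1 by push_cast; omega] at this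
    have c2 : (1 : K) - q ^ ((L2 : ℤ) + l + 1) ≠ 0 := by
      have := one_sub_zq_ne_zero (L2 + l + 1) (by omega)
      rwa [show ((L2 + l + 1 : ℕ) : ℤ) = (L2 : ℤ) + l + 1 by push_cast; omega] at this
    have hR := RRR_ne_zero L1 L2 M l hl
    have h0 : (∑ i ∈ Finset.range (M + 1), Sterm L1 (L2 + 1) M l i) * RRR L1 L2 M l
        - RRR L1 L2 M l * RRR L1 (L2 + 1) M l = 0 := by
      have := mul_eq_zero.mp tele
      rcases this with h | h
      · exact absurd (mul_eq_zero.mp h) (by tauto)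
      · exact h
    have h1 : (∑ i ∈ Finset.range (M + 1), Sterm L1 (L2 + 1) M l i) * RRR L1 L2 M l
        = RRR L1 (L2 + 1) M l * RRR L1 L2 M l := by
      rw [sub_eq_zero] at h0
      rw [h0]; ring
    exact mul_right_cancel₀ hR h1

lemma main_nonneg (L1 L2 M l : ℕ) :
    ∑ i ∈ Finset.range (M + 1), Sterm L1 L2 M l i = RRR L1 L2 M l := by
  rcases le_or_gt l L1 with hl | hl
  · exact sum_eq L1 M l hl L2
  · rw [RRR, binq_of_gt (show (L1 : ℤ) + M < (M : ℤ) + l by push_cast; omega), zero_mul]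
    apply Finset.sum_eq_zero
    intro i _
    rw [Sterm, binq_of_gt (show (L1 : ℤ) < (i : ℤ) + l by push_cast; omega)]
    ring

theorem q_saalschutz (L1 L2 M : ℕ) (ℓ : ℤ) :
    ∑ i ∈ Finset.range (M + 1),
      q ^ ((i : ℤ) * (i + ℓ)) * binq ((L1 : ℤ) + L2 + M - i) ((M : ℤ) - i) *
        binq (L1 : ℤ) ((i : ℤ) + ℓ) * binq (L2 : ℤ) (i : ℤ)
    = binq ((L1 : ℤ) + M) ((M : ℤ) + ℓ) * binq ((L2 : ℤ) + M + ℓ) (M : ℤ) := by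
  rcases le_or_gt 0 ℓ with hl | hl
  · obtain ⟨l, rfl⟩ : ∃ l : ℕ, ℓ = (l : ℤ) := ⟨ℓ.toNat, by omega⟩
    simpa only [Sterm, RRR] using main_nonneg L1 L2 M l
  · rcases le_or_gt 0 ((M : ℤ) + ℓ) with hM | hM
    · obtain ⟨M', hM'⟩ : ∃ M' : ℕ, (M' : ℤ) = (M : ℤ) + ℓ := ⟨((M:ℤ) + ℓ).toNat, by omega⟩
      obtain ⟨c, hc⟩ : ∃ c : ℕ, (c : ℤ) = -ℓ := ⟨(-ℓ).toNat, by omega⟩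
      have hc' : (c : ℤ) + ℓ = 0 := by omega
      have key := main_nonneg L2 L1 M' c
      rw [show M + 1 = c + (M' + 1) by omega, Finset.sum_range_add]
      have z1 : ∀ i ∈ Finset.range c,
          (q ^ ((i : ℤ) * (i + ℓ)) * binq ((L1 : ℤ) + L2 + M - i) ((M : ℤ) - i) *
            binq (L1 : ℤ) ((i : ℤ) + ℓ) * binq (L2 : ℤ) (i : ℤ) : K) = 0 := by
        intro i hi
        simp only [Finset.mem_range] at hi
        rw [binq_of_neg (show (i : ℤ) + ℓ < 0 by omega)]
        ring
      rw [Finset.sum_eq_zero z1, zero_add]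
      refine Eq.trans (Finset.sum_congr rfl fun i' hi' => ?_) (key.trans ?_)
      · simp only [Finset.mem_range] at hi'
        rw [Sterm]
        push_cast
        rw [show ((c : ℤ) + i') * ((c : ℤ) + i' + ℓ) = (i' : ℤ) * ((i' : ℤ) + c) by
            linear_combination ((c : ℤ) + i') * hc',
          show (L1 : ℤ) + L2 + M - ((c : ℤ) + i') = (L2 : ℤ) + L1 + M' - i' by omega,
          show (M : ℤ) - ((c : ℤ) + i') = (M' : ℤ) - i' by omega,
          show (c : ℤ) + i' + ℓ = (i' : ℤ) by omega]
        ring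
      · rw [RRR]
        rw [show (L2 : ℤ) + M' = (L2 : ℤ) + M + ℓ by omega,
          show (M' : ℤ) + c = (M : ℤ) by omega,
          show (L1 : ℤ) + M' + c = (L1 : ℤ) + M by omega, hM']
        ring
    · rw [binq_of_neg (show (M : ℤ) + ℓ < 0 from hM), zero_mul]
      apply Finset.sum_eq_zero
      intro i hi
      simp only [Finset.mem_range] at hi
      rw [binq_of_neg (show (i : ℤ) + ℓ < 0 by omega)]
      ring


end Stmt0
end
end

section
/- For every nonnegative integer M and every integer ℓ with M + ℓ ≥ 0, one has ∑_{i=0}^{M} q^{i(i+ℓ)} / ((q)_{M−i} (q)_i (q)_{i+ℓ}) = 1 / ((q)_M (q)_{M+ℓ}), as an identity of formal power series in q (equivalently, for complex q with |q| < 1). -/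
/-!
STATEMENT 2: the conjugate Bailey pair identity
`∑_{i=0}^M q^{i(i+ℓ)}/((q)_{M−i}(q)_i(q)_{i+ℓ}) = 1/((q)_M (q)_{M+ℓ})`,
over the field of rational functions `K = ℚ(q)` (equivalent to the formal
power series identity).  Here `1/(q)_n := 0` for `n < 0`.
-/

noncomputable section

namespace Stmt2

abbrev K : Type := RatFunc ℚ

def q : K := RatFunc.X

def poch (n : ℕ) : K := ∏ k ∈ Finset.range n, (1 - q ^ (k + 1))

/-- `1/(q)_n`, defined to be `0` for `n < 0`. -/
def pochInv (n : ℤ) : K := if 0 ≤ n then (poch n.toNat)⁻¹ else 0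

lemma q_ne_zero : q ≠ 0 := RatFunc.X_ne_zero

lemma one_sub_q_pow_ne_zero (k : ℕ) : (1 : K) - q ^ (k + 1) ≠ 0 := by
  intro h
  have h1 : q ^ (k + 1) = 1 := by linear_combination -h
  have h2 : (Polynomial.X : Polynomial ℚ) ^ (k + 1) = 1 := by
    apply RatFunc.algebraMap_injective
    simpa [q, RatFunc.algebraMap_X] using h1
  have := congrArg Polynomial.natDegree h2
  simp [Polynomial.natDegree_X_pow] at this

lemma poch_ne_zero (n : ℕ) : poch n ≠ 0 := by
  unfold poch
  exact Finset.prod_ne_zero_iff.2 fun k _ => one_sub_q_pow_ne_zero k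

lemma poch_succ (n : ℕ) : poch (n + 1) = poch n * (1 - q ^ (n + 1)) :=
  Finset.prod_range_succ _ n

lemma poch_zero : poch 0 = 1 := Finset.prod_range_zero _

lemma pochInv_natCast (n : ℕ) : pochInv (n : ℤ) = (poch n)⁻¹ := by
  simp [pochInv]

lemma pochInv_neg {n : ℤ} (h : n < 0) : pochInv n = 0 := by
  simp [pochInv, not_le.2 h]

/-- `1/(q)_{n-1} = (1-q^n)/(q)_n` for all integers `n`. -/
lemma pochInv_sub_one (n : ℤ) : pochInv (n - 1) = (1 - q ^ n) * pochInv n := by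
  rcases lt_trichotomy n 0 with h | h | h
  · rw [pochInv_neg h, pochInv_neg (by omega), mul_zero]
  · subst h
    simp [pochInv_neg (show (0:ℤ) - 1 < 0 by omega), pochInv]
  · obtain ⟨m, rfl⟩ : ∃ m : ℕ, n = (m : ℤ) + 1 := ⟨(n - 1).toNat, by omega⟩
    have h1 : ((m : ℤ) + 1 - 1) = (m : ℤ) := by ring
    rw [h1, pochInv_natCast]
    have h2 : ((m : ℤ) + 1) = ((m + 1 : ℕ) : ℤ) := by push_cast; ring
    rw [h2, pochInv_natCast, zpow_natCast, poch_succ]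
    rw [mul_inv, ← mul_assoc, mul_comm (1 - q ^ (m+1)) (poch m)⁻¹, mul_assoc,
      mul_inv_cancel₀ (by
        have := poch_ne_zero (m+1)
        rw [poch_succ] at this
        exact right_ne_zero_of_mul this), mul_one]

lemma pochInv_step (n : ℤ) :
    pochInv n + q ^ (n + 1) * pochInv (n + 1) = pochInv (n + 1) := by
  have h := pochInv_sub_one (n + 1)
  rw [show n + 1 - 1 = n by ring] at h
  rw [h]; ring

/-- Gaussian binomial coefficient as an element of `K`. -/
def gauss (M i : ℕ) : K :=
  if i ≤ M then poch M * ((poch i)⁻¹ * (poch (M - i))⁻¹) else 0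

lemma gauss_zero (M : ℕ) : gauss M 0 = 1 := by
  simp [gauss, poch_zero, mul_inv_cancel₀ (poch_ne_zero M)]

lemma gauss_self (M : ℕ) : gauss M M = 1 := by
  simp [gauss, poch_zero, mul_inv_cancel₀ (poch_ne_zero M)]

lemma gauss_of_gt {M i : ℕ} (h : M < i) : gauss M i = 0 := by
  simp [gauss, not_le.2 h]

/-- Pascal recurrence for Gaussian binomials. -/
lemma pascal (M i : ℕ) :
    gauss (M + 1) (i + 1) = gauss M (i + 1) + q ^ (M - i) * gauss M i := by
  rcases lt_trichotomy i M with h | rfl | h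
  · obtain ⟨j, rfl⟩ : ∃ j, M = i + 1 + j := ⟨M - i - 1, by omega⟩
    have h1 : i + 1 ≤ i + 1 + j + 1 := by omega
    have h2 : i + 1 ≤ i + 1 + j := by omega
    have h3 : i ≤ i + 1 + j := by omega
    rw [gauss, if_pos h1, gauss, if_pos h2, gauss, if_pos h3]
    have e1 : i + 1 + j + 1 - (i + 1) = j + 1 := by omega
    have e2 : i + 1 + j - (i + 1) = j := by omega
    have e3 : i + 1 + j - i = j + 1 := by omega
    rw [e1, e2, e3, poch_succ (i + 1 + j), poch_succ j, poch_succ i]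
    simp only [mul_inv]
    have ha := one_sub_q_pow_ne_zero i
    have hb := one_sub_q_pow_ne_zero j
    have key2 : (1 - q ^ (i + 1 + j + 1)) * (1 - q ^ (i + 1))⁻¹ * (1 - q ^ (j + 1))⁻¹
        = (1 - q ^ (i + 1))⁻¹ + q ^ (j + 1) * (1 - q ^ (j + 1))⁻¹ := by
      field_simp
      ring
    linear_combination (poch (i + 1 + j) * (poch i)⁻¹ * (poch j)⁻¹) * key2
  · rw [gauss_self, gauss_of_gt (by omega), gauss_self, Nat.sub_self, pow_zero]
    ring
  · rw [gauss_of_gt (by omega), gauss_of_gt (by omega), gauss_of_gt h]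
    ring

/-- The key identity: `∑_{i=0}^M binom(M,i)_q q^{i(i+ℓ)} / (q)_{i+ℓ} = 1/(q)_{M+ℓ}`
for every integer `ℓ`. -/
lemma key : ∀ (M : ℕ) (ℓ : ℤ),
    ∑ i ∈ Finset.range (M + 1),
      q ^ ((i : ℤ) * (i + ℓ)) * gauss M i * pochInv ((i : ℤ) + ℓ)
    = pochInv ((M : ℤ) + ℓ) := by
  intro M
  induction M with
  | zero =>
      intro ℓ
      simp [gauss_zero]
  | succ M ih =>
      intro ℓ
      rw [Finset.sum_range_succ']
      have hterm : ∀ i ∈ Finset.range (M + 1),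
          q ^ (((i+1 : ℕ) : ℤ) * ((i+1 : ℕ) + ℓ)) * gauss (M + 1) (i + 1) *
              pochInv (((i+1 : ℕ) : ℤ) + ℓ)
          = q ^ (((i+1 : ℕ) : ℤ) * ((i+1 : ℕ) + ℓ)) * gauss M (i + 1) *
              pochInv (((i+1 : ℕ) : ℤ) + ℓ)
            + (q ^ ((i : ℤ) * ((i : ℤ) + (ℓ + 1))) * gauss M i *
                pochInv ((i : ℤ) + (ℓ + 1))) * q ^ ((M : ℤ) + 1 + ℓ) := by
        intro i hi
        have hiM : i ≤ M := by have := Finset.mem_range.1 hi; omega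
        have harg : (((i+1 : ℕ) : ℤ) + ℓ) = ((i : ℤ) + (ℓ + 1)) := by push_cast; ring
        rw [pascal M i, harg]
        have hexp : q ^ (((i+1 : ℕ) : ℤ) * ((i : ℤ) + (ℓ + 1))) * (q : K) ^ (M - i)
            = q ^ ((i : ℤ) * ((i : ℤ) + (ℓ + 1))) * q ^ ((M : ℤ) + 1 + ℓ) := by
          rw [← zpow_natCast q (M - i), ← zpow_add₀ q_ne_zero, ← zpow_add₀ q_ne_zero]
          congr 1
          push_cast [Nat.cast_sub hiM]
          ring
        linear_combination (gauss M i * pochInv ((i : ℤ) + (ℓ + 1))) * hexp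
      rw [Finset.sum_congr rfl hterm, Finset.sum_add_distrib, ← Finset.sum_mul,
        ih (ℓ + 1), add_right_comm]
      have hg0 : gauss (M + 1) 0 = gauss M 0 := by rw [gauss_zero, gauss_zero]
      rw [hg0]
      have hsum := Finset.sum_range_succ'
        (fun i : ℕ => q ^ ((i : ℤ) * ((i : ℤ) + ℓ)) * gauss M i * pochInv ((i : ℤ) + ℓ))
        (M + 1)
      rw [← hsum, Finset.sum_range_succ, gauss_of_gt (Nat.lt_succ_self M), mul_zero,
        zero_mul, add_zero, ih ℓ]
      have hre : ((M + 1 : ℕ) : ℤ) + ℓ = ((M : ℤ) + ℓ) + 1 := by push_cast; ring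
      have he1 : (M : ℤ) + (ℓ + 1) = ((M : ℤ) + ℓ) + 1 := by ring
      have he2 : (M : ℤ) + 1 + ℓ = ((M : ℤ) + ℓ) + 1 := by ring
      rw [hre, he1, he2]
      linear_combination pochInv_step ((M : ℤ) + ℓ)

theorem conjugate_bailey_level_one (M : ℕ) (ℓ : ℤ) (hMℓ : 0 ≤ (M : ℤ) + ℓ) :
    ∑ i ∈ Finset.range (M + 1),
      q ^ ((i : ℤ) * (i + ℓ)) * pochInv ((M : ℤ) - i) * pochInv (i : ℤ) *
        pochInv ((i : ℤ) + ℓ)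
    = pochInv (M : ℤ) * pochInv ((M : ℤ) + ℓ) := by
  have hterm : ∀ i ∈ Finset.range (M + 1),
      q ^ ((i : ℤ) * (i + ℓ)) * pochInv ((M : ℤ) - i) * pochInv (i : ℤ) *
        pochInv ((i : ℤ) + ℓ)
      = pochInv (M : ℤ) *
          (q ^ ((i : ℤ) * ((i : ℤ) + ℓ)) * gauss M i * pochInv ((i : ℤ) + ℓ)) := by
    intro i hi
    have hiM : i ≤ M := by have := Finset.mem_range.1 hi; omega
    have h1 : pochInv ((M : ℤ) - i) = (poch (M - i))⁻¹ := by
      rw [show (M : ℤ) - i = ((M - i : ℕ) : ℤ) by push_cast [Nat.cast_sub hiM]; ring,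
        pochInv_natCast]
    rw [h1, pochInv_natCast, pochInv_natCast, gauss, if_pos hiM]
    have hc : poch M * (poch M)⁻¹ = 1 := mul_inv_cancel₀ (poch_ne_zero M)
    linear_combination (-(q ^ ((i : ℤ) * ((i : ℤ) + ℓ))) * (poch i)⁻¹ * (poch (M - i))⁻¹ *
      pochInv ((i : ℤ) + ℓ)) * hc
  rw [Finset.sum_congr rfl hterm, ← Finset.mul_sum, key M ℓ]

end Stmt2
end
end

section
/- For every integer ℓ ≥ 0, the Durfee rectangle identity holds as an identity of formal power series (or for |q| < 1): ∑_{i=0}^{∞} q^{i(i+ℓ)} / ((q)_i (q)_{i+ℓ}) = 1/(q)_∞. -/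
/-!
Write `S ℓ` for the Durfee rectangle sum with excess `ℓ`. Comparing the terms of `S ℓ` and
`S (ℓ + 1)` with the same index gives the three-term recurrence
`S ℓ - S (ℓ + 1) = q ^ (ℓ + 1) * (S (ℓ + 2) - S (ℓ + 1))`.
Modulo `q ^ (d + 1)`, once `ℓ > d` every term but the first of `S ℓ` vanishes, so
`S ℓ ≡ 1 / (q)_ℓ ≡ 1 / (q)_d`; the recurrence then carries the congruence `S ℓ ≡ 1 / (q)_d`
down from `ℓ + 1` and `ℓ + 2` to `ℓ`, so it holds for every `ℓ`.
-/

noncomputable section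

namespace Stmt3

abbrev K : Type := PowerSeries ℚ

def q : K := PowerSeries.X

/-- `(q;q)_n = ∏_{k=1}^n (1 - q^k)`. -/
def poch (n : ℕ) : K := ∏ k ∈ Finset.range n, (1 - q ^ (k + 1))

open PowerSeries

theorem _root_.Nat.forall_of_forall_ge_of_two_step_down {P : ℕ → Prop} {N : ℕ}
    (large : ∀ ℓ, N ≤ ℓ → P ℓ) (down : ∀ ℓ, P (ℓ + 1) → P (ℓ + 2) → P ℓ) (ℓ : ℕ) : P ℓ := by
  suffices h : ∀ n ℓ, N ≤ ℓ + n → P ℓ from h N ℓ (by omega)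
  intro n
  induction n with
  | zero => exact large
  | succ n ih =>
    intro ℓ hℓ
    by_cases hN : N ≤ ℓ
    · exact large ℓ hN
    · exact down ℓ (ih (ℓ + 1) (by omega)) (ih (ℓ + 2) (by omega))

lemma constantCoeff_poch_ne_zero (n : ℕ) : constantCoeff (poch n) ≠ 0 := by
  simp [poch, q]

lemma poch_succ (n : ℕ) : poch (n + 1) = poch n * (1 - q ^ (n + 1)) :=
  Finset.prod_range_succ _ n

lemma inv_poch_zero : (poch 0)⁻¹ = 1 := by
  simp [poch]

lemma inv_poch_eq_mul_inv_poch_succ (n : ℕ) :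
    (poch n)⁻¹ = (1 - q ^ (n + 1)) * (poch (n + 1))⁻¹ := by
  rw [eq_mul_inv_iff_mul_eq (constantCoeff_poch_ne_zero _), poch_succ, ← mul_assoc,
    PowerSeries.inv_mul_cancel _ (constantCoeff_poch_ne_zero n), one_mul]

lemma q_pow_dvd_inv_poch_sub {d m : ℕ} (hdm : d ≤ m) :
    q ^ (d + 1) ∣ (poch m)⁻¹ - (poch d)⁻¹ := by
  induction m, hdm using Nat.le_induction with
  | base => simp
  | succ m hdm ih =>
    have h : (poch (m + 1))⁻¹ - (poch d)⁻¹
        = q ^ (m + 1) * (poch (m + 1))⁻¹ + ((poch m)⁻¹ - (poch d)⁻¹) := by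
      linear_combination -inv_poch_eq_mul_inv_poch_succ m
    rw [h]
    exact dvd_add ((pow_dvd_pow q (by omega)).mul_right _) ih

def durfeeTerm (ℓ i : ℕ) : K := q ^ (i * (i + ℓ)) * (poch i)⁻¹ * (poch (i + ℓ))⁻¹

def durfeeSum (n ℓ : ℕ) : K := ∑ i ∈ Finset.range n, durfeeTerm ℓ i

lemma durfeeSum_succ (n ℓ : ℕ) : durfeeSum (n + 1) ℓ = durfeeSum n ℓ + durfeeTerm ℓ n :=
  Finset.sum_range_succ _ n

lemma q_pow_dvd_durfeeTerm {m ℓ i : ℕ} (h : m ≤ i * (i + ℓ)) : q ^ m ∣ durfeeTerm ℓ i :=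
  ((pow_dvd_pow q h).mul_right _).mul_right _

lemma durfeeTerm_zero (ℓ : ℕ) : durfeeTerm ℓ 0 = (poch ℓ)⁻¹ := by
  simp [durfeeTerm, inv_poch_zero]

lemma durfeeTerm_zero_sub (ℓ : ℕ) :
    durfeeTerm ℓ 0 - durfeeTerm (ℓ + 1) 0 = -(q ^ (ℓ + 1) * durfeeTerm (ℓ + 1) 0) := by
  rw [durfeeTerm_zero, durfeeTerm_zero, inv_poch_eq_mul_inv_poch_succ ℓ]
  ring

lemma durfeeTerm_succ_sub (ℓ i : ℕ) :
    durfeeTerm ℓ (i + 1) - durfeeTerm (ℓ + 1) (i + 1)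
      = q ^ (ℓ + 1) * (durfeeTerm (ℓ + 2) i - durfeeTerm (ℓ + 1) (i + 1)) := by
  simp only [durfeeTerm]
  rw [show i + 1 + ℓ = i + ℓ + 1 by omega, show i + 1 + (ℓ + 1) = i + ℓ + 1 + 1 by omega,
    show i + (ℓ + 2) = i + ℓ + 1 + 1 by omega, inv_poch_eq_mul_inv_poch_succ (i + ℓ + 1),
    inv_poch_eq_mul_inv_poch_succ i]
  ring

lemma durfeeSum_succ_sub (n ℓ : ℕ) :
    durfeeSum (n + 1) ℓ - durfeeSum (n + 1) (ℓ + 1)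
      = q ^ (ℓ + 1) * (durfeeSum n (ℓ + 2) - durfeeSum (n + 1) (ℓ + 1)) := by
  have hsub : durfeeSum (n + 1) ℓ - durfeeSum (n + 1) (ℓ + 1)
      = ∑ i ∈ Finset.range n, (durfeeTerm ℓ (i + 1) - durfeeTerm (ℓ + 1) (i + 1))
        + (durfeeTerm ℓ 0 - durfeeTerm (ℓ + 1) 0) := by
    simp only [durfeeSum, ← Finset.sum_sub_distrib]
    exact Finset.sum_range_succ' _ n
  have hsucc : durfeeSum (n + 1) (ℓ + 1)
      = ∑ i ∈ Finset.range n, durfeeTerm (ℓ + 1) (i + 1) + durfeeTerm (ℓ + 1) 0 :=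
    Finset.sum_range_succ' _ n
  rw [hsub, hsucc, durfeeTerm_zero_sub, Finset.sum_congr rfl fun i _ => durfeeTerm_succ_sub ℓ i,
    ← Finset.mul_sum, Finset.sum_sub_distrib, durfeeSum]
  ring

lemma q_pow_dvd_durfeeSum_sub_of_lt {d ℓ : ℕ} (hdℓ : d < ℓ) :
    q ^ (d + 1) ∣ durfeeSum (d + 1) ℓ - (poch d)⁻¹ := by
  have hsplit : durfeeSum (d + 1) ℓ - (poch d)⁻¹
      = ((poch ℓ)⁻¹ - (poch d)⁻¹) + ∑ i ∈ Finset.range d, durfeeTerm ℓ (i + 1) := by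
    rw [durfeeSum, Finset.sum_range_succ', durfeeTerm_zero]
    ring
  rw [hsplit]
  refine dvd_add (q_pow_dvd_inv_poch_sub hdℓ.le) (Finset.dvd_sum fun i _ => ?_)
  exact q_pow_dvd_durfeeTerm (le_trans (by omega) (Nat.le_mul_of_pos_left _ i.succ_pos))

lemma q_pow_dvd_durfeeSum_sub_of_succ {d ℓ : ℕ}
    (h₁ : q ^ (d + 1) ∣ durfeeSum (d + 1) (ℓ + 1) - (poch d)⁻¹)
    (h₂ : q ^ (d + 1) ∣ durfeeSum (d + 1) (ℓ + 2) - (poch d)⁻¹) :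
    q ^ (d + 1) ∣ durfeeSum (d + 1) ℓ - (poch d)⁻¹ := by
  have hlast : q ^ (d + 1) ∣ q ^ (ℓ + 1) * durfeeTerm (ℓ + 2) d := by
    refine (pow_dvd_pow q (?_ : d + 1 ≤ ℓ + 1 + d * (d + (ℓ + 2)))).trans ?_
    · nlinarith
    · rw [pow_add]
      exact mul_dvd_mul_left _ (q_pow_dvd_durfeeTerm le_rfl)
  have hrec : durfeeSum (d + 1) ℓ - (poch d)⁻¹
      = (durfeeSum (d + 1) (ℓ + 1) - (poch d)⁻¹)
        + q ^ (ℓ + 1) * ((durfeeSum (d + 1) (ℓ + 2) - (poch d)⁻¹)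
          - (durfeeSum (d + 1) (ℓ + 1) - (poch d)⁻¹))
        - q ^ (ℓ + 1) * durfeeTerm (ℓ + 2) d := by
    linear_combination durfeeSum_succ_sub d ℓ
      - q ^ (ℓ + 1) * durfeeSum_succ d (ℓ + 2)
  rw [hrec]
  exact (h₁.add ((h₂.sub h₁).mul_left _)).sub hlast

lemma q_pow_dvd_durfeeSum_sub (d ℓ : ℕ) : q ^ (d + 1) ∣ durfeeSum (d + 1) ℓ - (poch d)⁻¹ :=
  Nat.forall_of_forall_ge_of_two_step_down (N := d + 1)
    (fun _ h => q_pow_dvd_durfeeSum_sub_of_lt h) (fun _ => q_pow_dvd_durfeeSum_sub_of_succ) ℓ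

theorem durfee_rectangle (ℓ : ℕ) (d : ℕ) :
    PowerSeries.coeff (R := ℚ) d
        (∑ i ∈ Finset.range (d + 1), q ^ (i * (i + ℓ)) * (poch i)⁻¹ * (poch (i + ℓ))⁻¹)
    = PowerSeries.coeff (R := ℚ) d (poch d)⁻¹ := by
  have h := X_pow_dvd_iff.mp (q_pow_dvd_durfeeSum_sub d ℓ) d d.lt_succ_self
  rwa [map_sub, sub_eq_zero] at h

end Stmt3
end
end

section
/- Doubly bounded Euler identity: for all nonnegative integers M and L, the polynomial X_{1,1}^{(2,3)}(M,L) defined by X_{r,s}^{(p,p')}(M,L) = ∑_{j∈ℤ} { q^{j(pp'j + p' r − p s)} binq(M+L−(p'−p)j, M+pj) binq(M+L+(p'−p)j, M−pj) − q^{(pj+r)(p'j+s)} binq(M+L−(p'−p)j+r−s, M+pj+r) binq(M+L+(p'−p)j−r+s, M−pj−r) } with (p,p',r,s) = (2,3,1,1) equals binq(2L+M, 2L). -/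
/-!
STATEMENT 6: the doubly bounded Euler identity `X_{1,1}^{(2,3)}(M,L) = binq(2L+M, 2L)`,
over the field of rational functions `K = ℚ(q)`.
-/

noncomputable section

namespace Stmt6

abbrev K : Type := RatFunc ℚ

def q : K := RatFunc.X

def poch (n : ℕ) : K := ∏ k ∈ Finset.range n, (1 - q ^ (k + 1))

def binq (n k : ℤ) : K :=
  if 0 ≤ k ∧ k ≤ n then poch n.toNat / (poch k.toNat * poch (n - k).toNat) else 0

/-- The Burge polynomial `X_{r,s}^{(p,p')}(M₁,L₁,M₂,L₂)`; the sum over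
`j ∈ ℤ` has finite support (for `p ≥ 1`), hence is written as a `finsum`. -/
def X4 (p p' r s M1 L1 M2 L2 : ℤ) : K :=
  ∑ᶠ j : ℤ,
    (q ^ (j * (p * p' * j + p' * (M1 - M2 + r) - p * s)) *
        binq (M1 + L1 - (p' - p) * j) (M1 + p * j) *
        binq (M2 + L2 + (p' - p) * j) (M2 - p * j)
      - q ^ ((p * j + M1 - M2 + r) * (p' * j + s)) *
        binq (M1 + L1 - (p' - p) * j + r - s) (M1 + p * j + r) *
        binq (M2 + L2 + (p' - p) * j - r + s) (M2 - p * j - r))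

/-- The symmetric Burge polynomial `X_{r,s}^{(p,p')}(M,L) = X_{r,s}^{(p,p')}(M,L,M,L)`. -/
def X (p p' r s M L : ℤ) : K := X4 p p' r s M L M L

lemma q_ne_zero : q ≠ 0 := RatFunc.X_ne_zero

lemma one_sub_q_pow_ne_zero (m : ℕ) : (1 : K) - q ^ (m + 1) ≠ 0 := by
  have h : (1 : K) - q ^ (m + 1) =
      algebraMap (Polynomial ℚ) K ((1 : Polynomial ℚ) - Polynomial.X ^ (m + 1)) := by
    rw [map_sub, map_pow, map_one]; rfl
  rw [h]
  apply RatFunc.algebraMap_ne_zero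
  intro hc
  have h2 := congrArg (fun p => Polynomial.coeff p (m + 1)) hc
  simp [Polynomial.coeff_one, Nat.succ_ne_zero] at h2

lemma poch_ne_zero (n : ℕ) : poch n ≠ 0 := by
  unfold poch
  rw [Finset.prod_ne_zero_iff]
  exact fun k _ => one_sub_q_pow_ne_zero k

lemma poch_zero : poch 0 = 1 := Finset.prod_range_zero _

lemma poch_succ (m : ℕ) : poch (m + 1) = poch m * (1 - q ^ (m + 1)) :=
  Finset.prod_range_succ _ _

lemma binq_of_neg {n k : ℤ} (h : ¬(0 ≤ k ∧ k ≤ n)) : binq n k = 0 := if_neg h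

lemma binq_ne_zero_imp {n k : ℤ} (h : binq n k ≠ 0) : 0 ≤ k ∧ k ≤ n := by
  by_contra hc; exact h (binq_of_neg hc)

lemma binq_zero_right {n : ℤ} (h : 0 ≤ n) : binq n 0 = 1 := by
  unfold binq
  rw [if_pos ⟨le_refl 0, h⟩]
  simp [poch_zero, div_self (poch_ne_zero n.toNat)]

lemma binq_self {n : ℤ} (h : 0 ≤ n) : binq n n = 1 := by
  unfold binq
  rw [if_pos ⟨h, le_refl n⟩]
  simp [poch_zero, div_self (poch_ne_zero n.toNat)]

lemma binq_symm (n k : ℤ) : binq n k = binq n (n - k) := by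
  unfold binq
  by_cases h : 0 ≤ k ∧ k ≤ n
  · rw [if_pos h, if_pos ⟨by omega, by omega⟩]
    rw [show n - (n - k) = k by ring]
    rw [mul_comm]
  · rw [if_neg h, if_neg (by omega)]

lemma pascal_nat (K' D : ℕ) :
    poch (K' + D + 2) / (poch (K' + 1) * poch (D + 1)) =
      poch (K' + D + 1) / (poch (K' + 1) * poch D) +
        q ^ (D + 1) * (poch (K' + D + 1) / (poch K' * poch (D + 1))) := by
  have h1 : poch (K' + D + 2) = poch (K' + D + 1) * (1 - q ^ (K' + D + 2)) := by
    have := poch_succ (K' + D + 1); rwa [show K' + D + 1 + 1 = K' + D + 2 by omega] at this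
  have h2 : poch (D + 1) = poch D * (1 - q ^ (D + 1)) := poch_succ D
  have h3 : poch (K' + 1) = poch K' * (1 - q ^ (K' + 1)) := poch_succ K'
  have e1 : (1 : K) - q ^ (K' + D + 2) =
      (1 - q ^ (D + 1)) + q ^ (D + 1) * (1 - q ^ (K' + 1)) := by
    rw [show K' + D + 2 = (D + 1) + (K' + 1) by omega, pow_add]; ring
  have nK := poch_ne_zero K'
  have nD := poch_ne_zero D
  have nKD := poch_ne_zero (K' + D + 1)
  have u1 := one_sub_q_pow_ne_zero K'
  have u2 := one_sub_q_pow_ne_zero D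
  rw [h1, h2, h3, e1]
  field_simp

/-- q-Pascal, version A. -/
lemma pascal {n : ℤ} (k : ℤ) (hn : 1 ≤ n) :
    binq n k = binq (n - 1) k + q ^ (n - k) * binq (n - 1) (k - 1) := by
  by_cases hk0 : 0 ≤ k
  · by_cases hkn : k ≤ n
    · by_cases hk1 : 1 ≤ k
      · by_cases hkn1 : k ≤ n - 1
        · -- main case
          obtain ⟨K', hK⟩ : ∃ K' : ℕ, k = (K' : ℤ) + 1 := ⟨(k - 1).toNat, by omega⟩
          obtain ⟨D, hD⟩ : ∃ D : ℕ, n = (K' : ℤ) + D + 2 := ⟨(n - k - 1).toNat, by omega⟩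
          unfold binq
          rw [if_pos ⟨hk0, hkn⟩, if_pos ⟨by omega, by omega⟩, if_pos ⟨by omega, by omega⟩]
          rw [show n.toNat = K' + D + 2 by omega, show k.toNat = K' + 1 by omega,
            show (n - k).toNat = D + 1 by omega, show (n - 1).toNat = K' + D + 1 by omega,
            show (n - 1 - k).toNat = D by omega, show (k - 1).toNat = K' by omega,
            show (n - 1 - (k - 1)).toNat = D + 1 by omega,
            show n - k = ((D : ℤ) + 1) by omega]
          rw [show (q : K) ^ ((D : ℤ) + 1) = q ^ (D + 1) by
            rw [show ((D : ℤ) + 1) = ((D + 1 : ℕ) : ℤ) by push_cast; ring, zpow_natCast]]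
          exact pascal_nat K' D
        · -- k = n
          have hkn' : k = n := by omega
          subst hkn'
          rw [binq_self (by omega), binq_of_neg (by omega), sub_self, zpow_zero,
            binq_self (by omega)]
          ring
      · -- k = 0
        have : k = 0 := by omega
        subst this
        rw [binq_zero_right (by omega), binq_zero_right (by omega),
          binq_of_neg (by omega)]
        ring
    · rw [binq_of_neg (by omega), binq_of_neg (by omega), binq_of_neg (by omega)]; ring
  · rw [binq_of_neg (by omega), binq_of_neg (by omega), binq_of_neg (by omega)]; ring

/-- q-Pascal, version B. -/
lemma pascal2 {n : ℤ} (k : ℤ) (hn : 1 ≤ n) :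
    binq n k = binq (n - 1) (k - 1) + q ^ k * binq (n - 1) k := by
  rw [binq_symm n k, pascal (n - k) hn, binq_symm (n - 1) (n - k),
    binq_symm (n - 1) (n - k - 1)]
  rw [show n - (n - k) = k by ring, show n - 1 - (n - k) = k - 1 by ring,
    show n - 1 - (n - k - 1) = k by ring]

def t1 (M1 L1 M2 L2 j : ℤ) : K :=
  q ^ (j * (6 * j + 3 * (M1 - M2 + 1) - 2)) *
    (binq (M1 + L1 - j) (M1 + 2 * j) * binq (M2 + L2 + j) (M2 - 2 * j))

def t2 (M1 L1 M2 L2 j : ℤ) : K :=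
  q ^ ((2 * j + M1 - M2 + 1) * (3 * j + 1)) *
    (binq (M1 + L1 - j) (M1 + 2 * j + 1) * binq (M2 + L2 + j) (M2 - 2 * j - 1))

lemma X4_eq (M1 L1 M2 L2 : ℤ) :
    X4 2 3 1 1 M1 L1 M2 L2 = ∑ᶠ j : ℤ, (t1 M1 L1 M2 L2 j - t2 M1 L1 M2 L2 j) := by
  unfold X4 t1 t2
  apply finsum_congr
  intro j
  norm_num
  ring_nf

lemma supp_t1 (M1 L1 M2 L2 : ℤ) : (Function.support (t1 M1 L1 M2 L2)).Finite := by
  apply Set.Finite.subset (Set.finite_Icc (-(M1.natAbs : ℤ) - 1) ((M2.natAbs : ℤ) + 1))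
  intro j hj
  have h : t1 M1 L1 M2 L2 j ≠ 0 := hj
  unfold t1 at h
  have h1 : binq (M1 + L1 - j) (M1 + 2 * j) ≠ 0 := by
    intro hc; rw [hc] at h; simp at h
  have h2 : binq (M2 + L2 + j) (M2 - 2 * j) ≠ 0 := by
    intro hc; rw [hc] at h; simp at h
  have c1 := binq_ne_zero_imp h1
  have c2 := binq_ne_zero_imp h2
  simp only [Set.mem_Icc]
  omega

lemma supp_t2 (M1 L1 M2 L2 : ℤ) : (Function.support (t2 M1 L1 M2 L2)).Finite := by
  apply Set.Finite.subset (Set.finite_Icc (-(M1.natAbs : ℤ) - 1) ((M2.natAbs : ℤ) + 1))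
  intro j hj
  have h : t2 M1 L1 M2 L2 j ≠ 0 := hj
  unfold t2 at h
  have h1 : binq (M1 + L1 - j) (M1 + 2 * j + 1) ≠ 0 := by
    intro hc; rw [hc] at h; simp at h
  have h2 : binq (M2 + L2 + j) (M2 - 2 * j - 1) ≠ 0 := by
    intro hc; rw [hc] at h; simp at h
  have c1 := binq_ne_zero_imp h1
  have c2 := binq_ne_zero_imp h2
  simp only [Set.mem_Icc]
  omega

lemma supp_td (M1 L1 M2 L2 : ℤ) :
    (Function.support fun j => t1 M1 L1 M2 L2 j - t2 M1 L1 M2 L2 j).Finite := by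
  apply Set.Finite.subset ((supp_t1 M1 L1 M2 L2).union (supp_t2 M1 L1 M2 L2))
  intro j hj
  by_contra hc
  simp only [Set.mem_union, Function.mem_support, not_or, not_not] at hc
  have : t1 M1 L1 M2 L2 j - t2 M1 L1 M2 L2 j = 0 := by rw [hc.1, hc.2, sub_zero]
  exact hj this

lemma Z1 (M1 L1 : ℤ) : X4 2 3 1 1 M1 L1 (M1 + 1) (L1 - 1) = 0 := by
  rw [X4_eq, finsum_sub_distrib (supp_t1 _ _ _ _) (supp_t2 _ _ _ _)]
  have h : ∑ᶠ j : ℤ, t2 M1 L1 (M1 + 1) (L1 - 1) j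
      = ∑ᶠ j : ℤ, t1 M1 L1 (M1 + 1) (L1 - 1) j := by
    rw [← finsum_comp_equiv (Equiv.neg ℤ) (f := t2 M1 L1 (M1 + 1) (L1 - 1))]
    apply finsum_congr
    intro j
    show t2 M1 L1 (M1 + 1) (L1 - 1) (-j) = t1 M1 L1 (M1 + 1) (L1 - 1) j
    unfold t1 t2
    ring_nf
  rw [h, sub_self]

lemma Z2 (M1 L1 : ℤ) : X4 2 3 1 1 M1 L1 (M1 - 1) (L1 + 2) = 0 := by
  rw [X4_eq, finsum_sub_distrib (supp_t1 _ _ _ _) (supp_t2 _ _ _ _)]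
  have h : ∑ᶠ j : ℤ, t2 M1 L1 (M1 - 1) (L1 + 2) j
      = ∑ᶠ j : ℤ, t1 M1 L1 (M1 - 1) (L1 + 2) j := by
    rw [← finsum_comp_equiv (Equiv.subLeft (-1 : ℤ)) (f := t2 M1 L1 (M1 - 1) (L1 + 2))]
    apply finsum_congr
    intro j
    show t2 M1 L1 (M1 - 1) (L1 + 2) (-1 - j) = t1 M1 L1 (M1 - 1) (L1 + 2) j
    unfold t1 t2
    ring_nf
  rw [h, sub_self]

lemma key1 (M1 L1 M2 L2 : ℤ) (hM : 1 ≤ M1) (hL : 1 ≤ L1) (j : ℤ) :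
    t1 M1 L1 M2 L2 j - t2 M1 L1 M2 L2 j =
      (t1 M1 (L1 - 1) M2 L2 j - t2 M1 (L1 - 1) M2 L2 j)
        + q ^ L1 * (t1 (M1 - 1) L1 M2 L2 j - t2 (M1 - 1) L1 M2 L2 j) := by
  by_cases h : 1 ≤ M1 + L1 - j
  · unfold t1 t2
    rw [pascal (M1 + 2 * j) h, pascal (M1 + 2 * j + 1) h]
    rw [show M1 + 2 * j + 1 - 1 = M1 + 2 * j by ring,
      show M1 + (L1 - 1) - j = M1 + L1 - j - 1 by ring,
      show M1 - 1 + L1 - j = M1 + L1 - j - 1 by ring,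
      show M1 - 1 + 2 * j + 1 = M1 + 2 * j by ring,
      show M1 - 1 + 2 * j = M1 + 2 * j - 1 by ring]
    have h1 : q ^ (j * (6 * j + 3 * (M1 - M2 + 1) - 2)) * q ^ (M1 + L1 - j - (M1 + 2 * j))
        = q ^ L1 * q ^ (j * (6 * j + 3 * (M1 - 1 - M2 + 1) - 2)) := by
      rw [← zpow_add₀ q_ne_zero, ← zpow_add₀ q_ne_zero]; congr 1; ring
    have h2 : q ^ ((2 * j + M1 - M2 + 1) * (3 * j + 1)) *
          q ^ (M1 + L1 - j - (M1 + 2 * j + 1))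
        = q ^ L1 * q ^ ((2 * j + (M1 - 1) - M2 + 1) * (3 * j + 1)) := by
      rw [← zpow_add₀ q_ne_zero, ← zpow_add₀ q_ne_zero]; congr 1; ring
    ring_nf
    ring_nf at h1 h2
    linear_combination (binq (-1 - j + M1 + L1) (-1 + j * 2 + M1) *
        binq (j + M2 + L2) (-(j * 2) + M2)) * h1 -
      (binq (-1 - j + M1 + L1) (j * 2 + M1) *
        binq (j + M2 + L2) (-1 - j * 2 + M2)) * h2
  · have z1 : t1 M1 L1 M2 L2 j = 0 := by
      unfold t1
      rw [binq_of_neg (show ¬(0 ≤ M1 + 2 * j ∧ M1 + 2 * j ≤ M1 + L1 - j) by omega)]; ring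
    have z2 : t2 M1 L1 M2 L2 j = 0 := by
      unfold t2
      rw [binq_of_neg (show ¬(0 ≤ M1 + 2 * j + 1 ∧ M1 + 2 * j + 1 ≤ M1 + L1 - j) by omega)]
      ring
    have z3 : t1 M1 (L1 - 1) M2 L2 j = 0 := by
      unfold t1
      rw [binq_of_neg (show ¬(0 ≤ M1 + 2 * j ∧ M1 + 2 * j ≤ M1 + (L1 - 1) - j) by omega)]
      ring
    have z4 : t2 M1 (L1 - 1) M2 L2 j = 0 := by
      unfold t2
      rw [binq_of_neg
        (show ¬(0 ≤ M1 + 2 * j + 1 ∧ M1 + 2 * j + 1 ≤ M1 + (L1 - 1) - j) by omega)]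
      ring
    have z5 : t1 (M1 - 1) L1 M2 L2 j = 0 := by
      unfold t1
      rw [binq_of_neg
        (show ¬(0 ≤ M1 - 1 + 2 * j ∧ M1 - 1 + 2 * j ≤ M1 - 1 + L1 - j) by omega)]
      ring
    have z6 : t2 (M1 - 1) L1 M2 L2 j = 0 := by
      unfold t2
      rw [binq_of_neg
        (show ¬(0 ≤ M1 - 1 + 2 * j + 1 ∧ M1 - 1 + 2 * j + 1 ≤ M1 - 1 + L1 - j) by omega)]
      ring
    rw [z1, z2, z3, z4, z5, z6]
    ring

lemma key2 (M1 L1 M2 L2 : ℤ) (hM : 1 ≤ M2) (hL : 1 ≤ L2) (j : ℤ) :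
    t1 M1 L1 M2 L2 j - t2 M1 L1 M2 L2 j =
      (t1 M1 L1 M2 (L2 - 1) j - t2 M1 L1 M2 (L2 - 1) j)
        + q ^ L2 * (t1 M1 L1 (M2 - 1) L2 j - t2 M1 L1 (M2 - 1) L2 j) := by
  by_cases h : 1 ≤ M2 + L2 + j
  · unfold t1 t2
    rw [pascal (M2 - 2 * j) h, pascal (M2 - 2 * j - 1) h]
    rw [show M2 - 2 * j - 1 - 1 = M2 - 2 * j - 2 by ring,
      show M2 + (L2 - 1) + j = M2 + L2 + j - 1 by ring,
      show M2 - 1 + L2 + j = M2 + L2 + j - 1 by ring,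
      show M2 - 1 - 2 * j - 1 = M2 - 2 * j - 2 by ring,
      show M2 - 1 - 2 * j = M2 - 2 * j - 1 by ring]
    have h1 : q ^ (j * (6 * j + 3 * (M1 - M2 + 1) - 2)) *
          q ^ (M2 + L2 + j - (M2 - 2 * j))
        = q ^ L2 * q ^ (j * (6 * j + 3 * (M1 - (M2 - 1) + 1) - 2)) := by
      rw [← zpow_add₀ q_ne_zero, ← zpow_add₀ q_ne_zero]; congr 1; ring
    have h2 : q ^ ((2 * j + M1 - M2 + 1) * (3 * j + 1)) *
          q ^ (M2 + L2 + j - (M2 - 2 * j - 1))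
        = q ^ L2 * q ^ ((2 * j + M1 - (M2 - 1) + 1) * (3 * j + 1)) := by
      rw [← zpow_add₀ q_ne_zero, ← zpow_add₀ q_ne_zero]; congr 1; ring
    ring_nf
    ring_nf at h1 h2
    linear_combination (binq (-j + M1 + L1) (j * 2 + M1) *
        binq (-1 + j + M2 + L2) (-1 - j * 2 + M2)) * h1 -
      (binq (-j + M1 + L1) (1 + j * 2 + M1) *
        binq (-1 + j + M2 + L2) (-2 - j * 2 + M2)) * h2
  · have z1 : t1 M1 L1 M2 L2 j = 0 := by
      unfold t1
      rw [binq_of_neg (show ¬(0 ≤ M2 - 2 * j ∧ M2 - 2 * j ≤ M2 + L2 + j) by omega)]; ring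
    have z2 : t2 M1 L1 M2 L2 j = 0 := by
      unfold t2
      rw [binq_of_neg (show ¬(0 ≤ M2 - 2 * j - 1 ∧ M2 - 2 * j - 1 ≤ M2 + L2 + j) by omega)]
      ring
    have z3 : t1 M1 L1 M2 (L2 - 1) j = 0 := by
      unfold t1
      rw [binq_of_neg (show ¬(0 ≤ M2 - 2 * j ∧ M2 - 2 * j ≤ M2 + (L2 - 1) + j) by omega)]
      ring
    have z4 : t2 M1 L1 M2 (L2 - 1) j = 0 := by
      unfold t2
      rw [binq_of_neg
        (show ¬(0 ≤ M2 - 2 * j - 1 ∧ M2 - 2 * j - 1 ≤ M2 + (L2 - 1) + j) by omega)]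
      ring
    have z5 : t1 M1 L1 (M2 - 1) L2 j = 0 := by
      unfold t1
      rw [binq_of_neg
        (show ¬(0 ≤ M2 - 1 - 2 * j ∧ M2 - 1 - 2 * j ≤ M2 - 1 + L2 + j) by omega)]
      ring
    have z6 : t2 M1 L1 (M2 - 1) L2 j = 0 := by
      unfold t2
      rw [binq_of_neg
        (show ¬(0 ≤ M2 - 1 - 2 * j - 1 ∧ M2 - 1 - 2 * j - 1 ≤ M2 - 1 + L2 + j) by omega)]
      ring
    rw [z1, z2, z3, z4, z5, z6]
    ring

lemma supp_smul (c : K) (M1 L1 M2 L2 : ℤ) :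
    (Function.support fun j => c * (t1 M1 L1 M2 L2 j - t2 M1 L1 M2 L2 j)).Finite := by
  apply Set.Finite.subset (supp_td M1 L1 M2 L2)
  intro j hj
  exact fun hc => hj (by simp only [Function.mem_support] at *; rw [hc, mul_zero])

lemma R1 (M1 L1 M2 L2 : ℤ) (hM : 1 ≤ M1) (hL : 1 ≤ L1) :
    X4 2 3 1 1 M1 L1 M2 L2 =
      X4 2 3 1 1 M1 (L1 - 1) M2 L2 + q ^ L1 * X4 2 3 1 1 (M1 - 1) L1 M2 L2 := by
  rw [X4_eq, X4_eq, X4_eq, mul_finsum _ (q ^ L1),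
    ← finsum_add_distrib (supp_td M1 (L1 - 1) M2 L2) (supp_smul (q ^ L1) (M1 - 1) L1 M2 L2)]
  exact finsum_congr (key1 M1 L1 M2 L2 hM hL)

lemma R2 (M1 L1 M2 L2 : ℤ) (hM : 1 ≤ M2) (hL : 1 ≤ L2) :
    X4 2 3 1 1 M1 L1 M2 L2 =
      X4 2 3 1 1 M1 L1 M2 (L2 - 1) + q ^ L2 * X4 2 3 1 1 M1 L1 (M2 - 1) L2 := by
  rw [X4_eq, X4_eq, X4_eq, mul_finsum _ (q ^ L2),
    ← finsum_add_distrib (supp_td M1 L1 M2 (L2 - 1)) (supp_smul (q ^ L2) M1 L1 (M2 - 1) L2)]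
  exact finsum_congr (key2 M1 L1 M2 L2 hM hL)

lemma base_A0 {M : ℤ} (hM : 0 ≤ M) : X4 2 3 1 1 M 0 M 0 = 1 := by
  rw [X4_eq, finsum_eq_single _ 0]
  · unfold t1 t2
    norm_num
    rw [binq_self hM, binq_of_neg (show ¬(0 ≤ M + 1 ∧ M + 1 ≤ M) by omega)]
    ring
  · intro j hj
    have ht1 : t1 M 0 M 0 j = 0 := by
      unfold t1
      rcases le_or_gt j 0 with hc | hc
      · rw [binq_of_neg (show ¬(0 ≤ M - 2 * j ∧ M - 2 * j ≤ M + 0 + j) by omega)]; ring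
      · rw [binq_of_neg (show ¬(0 ≤ M + 2 * j ∧ M + 2 * j ≤ M + 0 - j) by omega)]; ring
    have ht2 : t2 M 0 M 0 j = 0 := by
      unfold t2
      rcases le_or_gt 0 j with hc | hc
      · rw [binq_of_neg
          (show ¬(0 ≤ M + 2 * j + 1 ∧ M + 2 * j + 1 ≤ M + 0 - j) by omega)]; ring
      · rw [binq_of_neg
          (show ¬(0 ≤ M - 2 * j - 1 ∧ M - 2 * j - 1 ≤ M + 0 + j) by omega)]; ring
    rw [ht1, ht2, sub_zero]

lemma base_0L {L : ℤ} (hL : 0 ≤ L) : X4 2 3 1 1 0 L 0 L = 1 := by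
  rw [X4_eq, finsum_eq_single _ 0]
  · unfold t1 t2
    norm_num
    rw [binq_zero_right hL, binq_of_neg (show ¬(0 ≤ (-1 : ℤ) ∧ (-1 : ℤ) ≤ L) by omega)]
    ring
  · intro j hj
    have ht1 : t1 0 L 0 L j = 0 := by
      unfold t1
      rcases le_or_gt j 0 with hc | hc
      · rw [binq_of_neg (show ¬(0 ≤ 0 + 2 * j ∧ 0 + 2 * j ≤ 0 + L - j) by omega)]; ring
      · rw [binq_of_neg (show ¬(0 ≤ 0 - 2 * j ∧ 0 - 2 * j ≤ 0 + L + j) by omega)]; ring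
    have ht2 : t2 0 L 0 L j = 0 := by
      unfold t2
      rcases le_or_gt 0 j with hc | hc
      · rw [binq_of_neg
          (show ¬(0 ≤ 0 - 2 * j - 1 ∧ 0 - 2 * j - 1 ≤ 0 + L + j) by omega)]; ring
      · rw [binq_of_neg
          (show ¬(0 ≤ 0 + 2 * j + 1 ∧ 0 + 2 * j + 1 ≤ 0 + L - j) by omega)]; ring
    rw [ht1, ht2, sub_zero]

lemma base_S0 {L : ℤ} (hL : 1 ≤ L) : X4 2 3 1 1 0 (L - 1) 0 L = 1 := by
  rw [X4_eq, finsum_eq_single _ 0]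
  · unfold t1 t2
    norm_num
    rw [binq_zero_right (show (0:ℤ) ≤ L - 1 by omega), binq_zero_right (by omega),
      binq_of_neg (show ¬(0 ≤ (-1 : ℤ) ∧ (-1 : ℤ) ≤ L) by omega)]
    ring
  · intro j hj
    have ht1 : t1 0 (L - 1) 0 L j = 0 := by
      unfold t1
      rcases le_or_gt j 0 with hc | hc
      · rw [binq_of_neg (show ¬(0 ≤ 0 + 2 * j ∧ 0 + 2 * j ≤ 0 + (L - 1) - j) by omega)]
        ring
      · rw [binq_of_neg (show ¬(0 ≤ 0 - 2 * j ∧ 0 - 2 * j ≤ 0 + L + j) by omega)]; ring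
    have ht2 : t2 0 (L - 1) 0 L j = 0 := by
      unfold t2
      rcases le_or_gt 0 j with hc | hc
      · rw [binq_of_neg
          (show ¬(0 ≤ 0 - 2 * j - 1 ∧ 0 - 2 * j - 1 ≤ 0 + L + j) by omega)]; ring
      · rw [binq_of_neg
          (show ¬(0 ≤ 0 + 2 * j + 1 ∧ 0 + 2 * j + 1 ≤ 0 + (L - 1) - j) by omega)]; ring
    rw [ht1, ht2, sub_zero]

lemma base_B1 {M : ℤ} (hM : 1 ≤ M) : X4 2 3 1 1 M 0 (M - 1) 1 = binq M 1 := by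
  rw [X4_eq, finsum_eq_single _ 0]
  · unfold t1 t2
    norm_num
    rw [binq_self (show (0:ℤ) ≤ M by omega),
      binq_of_neg (show ¬(0 ≤ M + 1 ∧ M + 1 ≤ M) by omega)]
    rw [binq_symm M (M - 1), show M - (M - 1) = 1 by ring]
    ring
  · intro j hj
    have ht1 : t1 M 0 (M - 1) 1 j = 0 := by
      unfold t1
      rcases le_or_gt j 0 with hc | hc
      · rw [binq_of_neg
          (show ¬(0 ≤ M - 1 - 2 * j ∧ M - 1 - 2 * j ≤ M - 1 + 1 + j) by omega)]; ring
      · rw [binq_of_neg (show ¬(0 ≤ M + 2 * j ∧ M + 2 * j ≤ M + 0 - j) by omega)]; ring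
    have ht2 : t2 M 0 (M - 1) 1 j = 0 := by
      unfold t2
      rcases le_or_gt 0 j with hc | hc
      · rw [binq_of_neg
          (show ¬(0 ≤ M + 2 * j + 1 ∧ M + 2 * j + 1 ≤ M + 0 - j) by omega)]; ring
      · rw [binq_of_neg
          (show ¬(0 ≤ M - 1 - 2 * j - 1 ∧ M - 1 - 2 * j - 1 ≤ M - 1 + 1 + j) by omega)]
        ring
    rw [ht1, ht2, sub_zero]

lemma main (n : ℕ) : ∀ M L : ℤ, 0 ≤ M → 0 ≤ L → M + L ≤ (n : ℤ) →
    (X4 2 3 1 1 M L M L = binq (2 * L + M) (2 * L)) ∧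
    (1 ≤ L → X4 2 3 1 1 M (L - 1) M L = binq (2 * L + M - 1) (2 * L - 1)) ∧
    (1 ≤ M → 1 ≤ L →
      X4 2 3 1 1 M (L - 1) (M - 1) L = q ^ (L - 1) * binq (2 * L + M - 2) (2 * L - 1)) := by
  induction n with
  | zero =>
    intro M L hM hL h
    have hM0 : M = 0 := by omega
    have hL0 : L = 0 := by omega
    subst hM0; subst hL0
    refine ⟨?_, by omega, fun h1 _ => by omega⟩
    rw [base_A0 le_rfl]
    norm_num [binq_zero_right]
  | succ n ih =>
    intro M L hM hL h
    have hB : 1 ≤ M → 1 ≤ L →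
        X4 2 3 1 1 M (L - 1) (M - 1) L = q ^ (L - 1) * binq (2 * L + M - 2) (2 * L - 1) := by
      intro h1 h2
      by_cases hL1 : L = 1
      · subst hL1
        norm_num
        rw [base_B1 h1]
      · have hR := R1 M (L - 1) (M - 1) L h1 (by omega)
        rw [show L - 1 - 1 = L - 2 by ring] at hR
        have hZ := Z2 M (L - 2)
        rw [show L - 2 + 2 = L by ring] at hZ
        have hS := (ih (M - 1) L (by omega) hL (by omega)).2.1 h2
        rw [hZ, hS] at hR
        rw [hR, show 2 * L + (M - 1) - 1 = 2 * L + M - 2 by ring]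
        ring
    refine ⟨?_, ?_, hB⟩
    · by_cases hM0 : M = 0
      · subst hM0
        rw [base_0L hL, show 2 * L + 0 = 2 * L by ring, binq_self (by omega)]
      · by_cases hL0 : L = 0
        · subst hL0
          rw [base_A0 hM, show 2 * 0 + M = M by ring, show (2 : ℤ) * 0 = 0 by ring,
            binq_zero_right hM]
        · have h1 : 1 ≤ M := by omega
          have h2 : 1 ≤ L := by omega
          have e1 := R2 M L M L h1 h2
          have e2 := R1 M L M (L - 1) h1 h2
          have e3 := R1 M L (M - 1) L h1 h2
          have hZ1 := Z1 (M - 1) L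
          rw [show M - 1 + 1 = M by ring] at hZ1
          rw [hZ1] at e2
          have hA1 := (ih M (L - 1) hM (by omega) (by omega)).1
          have hA2 := (ih (M - 1) L (by omega) hL (by omega)).1
          have hBB := hB h1 h2
          rw [e2, e3, hA1, hA2, hBB] at e1
          rw [e1]
          have p1 := pascal2 (2 * L) (show (1 : ℤ) ≤ 2 * L + M by omega)
          have p2 := pascal2 (2 * L - 1) (show (1 : ℤ) ≤ 2 * L + M - 1 by omega)
          rw [show 2 * L + M - 1 - 1 = 2 * L + M - 2 by ring,
            show 2 * L - 1 - 1 = 2 * L - 2 by ring] at p2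
          rw [show 2 * (L - 1) + M = 2 * L + M - 2 by ring,
            show 2 * (L - 1) = 2 * L - 2 by ring,
            show 2 * L + (M - 1) = 2 * L + M - 1 by ring]
          have q1 : q ^ L * q ^ (L - 1) = q ^ (2 * L - 1) := by
            rw [← zpow_add₀ q_ne_zero]; congr 1; ring
          have q2 : q ^ L * q ^ L = q ^ (2 * L) := by
            rw [← zpow_add₀ q_ne_zero]; congr 1; ring
          linear_combination -p1 - p2 + binq (2 * L + M - 2) (2 * L - 1) * q1 +
            binq (2 * L + M - 1) (2 * L) * q2
    · intro h2
      by_cases hM0 : M = 0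
      · subst hM0
        rw [base_S0 h2, show 2 * L + 0 - 1 = 2 * L - 1 by ring, binq_self (by omega)]
      · have h1 : 1 ≤ M := by omega
        have e := R2 M (L - 1) M L h1 h2
        have hA := (ih M (L - 1) hM (by omega) (by omega)).1
        have hBB := hB h1 h2
        rw [hA, hBB] at e
        rw [e]
        have p2 := pascal2 (2 * L - 1) (show (1 : ℤ) ≤ 2 * L + M - 1 by omega)
        rw [show 2 * L + M - 1 - 1 = 2 * L + M - 2 by ring,
          show 2 * L - 1 - 1 = 2 * L - 2 by ring] at p2
        rw [show 2 * (L - 1) + M = 2 * L + M - 2 by ring,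
          show 2 * (L - 1) = 2 * L - 2 by ring]
        have q1 : q ^ L * q ^ (L - 1) = q ^ (2 * L - 1) := by
          rw [← zpow_add₀ q_ne_zero]; congr 1; ring
        linear_combination -p2 + binq (2 * L + M - 2) (2 * L - 1) * q1

theorem doubly_bounded_euler (M L : ℕ) :
    X 2 3 1 1 (M : ℤ) (L : ℤ) = binq (2 * L + M) (2 * L) := by
  have h := (main (M + L) (M : ℤ) (L : ℤ) (by positivity) (by positivity)
    (by push_cast; omega)).1
  exact h

end Stmt6
end
end

section
/- The initial Burge identity X_{0,1}^{(1,2)}(M,L) = δ_{L,0} holds for all nonnegative integers M, L, where X_{0,1}^{(1,2)}(M,L) = ∑_{j∈ℤ}{ q^{j(2j−1)} binq(M+L−j, M+j) binq(M+L+j, M−j) − q^{j(2j+1)} binq(M+L−j−1, M+j) binq(M+L+j+1, M−j) }. -/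
/-!
STATEMENT 10: the initial Burge identity `X_{0,1}^{(1,2)}(M,L) = δ_{L,0}`.
-/

noncomputable section

namespace Stmt10

abbrev K : Type := RatFunc ℚ

def q : K := RatFunc.X

def poch (n : ℕ) : K := ∏ k ∈ Finset.range n, (1 - q ^ (k + 1))

def binq (n k : ℤ) : K :=
  if 0 ≤ k ∧ k ≤ n then poch n.toNat / (poch k.toNat * poch (n - k).toNat) else 0

/-- The Burge polynomial `X_{r,s}^{(p,p')}(M₁,L₁,M₂,L₂)`; the sum over
`j ∈ ℤ` has finite support (for `p ≥ 1`), hence is written as a `finsum`. -/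
def X4 (p p' r s M1 L1 M2 L2 : ℤ) : K :=
  ∑ᶠ j : ℤ,
    (q ^ (j * (p * p' * j + p' * (M1 - M2 + r) - p * s)) *
        binq (M1 + L1 - (p' - p) * j) (M1 + p * j) *
        binq (M2 + L2 + (p' - p) * j) (M2 - p * j)
      - q ^ ((p * j + M1 - M2 + r) * (p' * j + s)) *
        binq (M1 + L1 - (p' - p) * j + r - s) (M1 + p * j + r) *
        binq (M2 + L2 + (p' - p) * j - r + s) (M2 - p * j - r))

/-- The symmetric Burge polynomial `X_{r,s}^{(p,p')}(M,L) = X_{r,s}^{(p,p')}(M,L,M,L)`. -/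
def X (p p' r s M L : ℤ) : K := X4 p p' r s M L M L

-- auxiliary lemmas

lemma qpow_ne_one (k : ℕ) : q ^ (k+1) ≠ 1 := by
  unfold q
  rw [← RatFunc.algebraMap_X (K := ℚ), ← map_pow, ← map_one (algebraMap (Polynomial ℚ) (RatFunc ℚ))]
  intro h
  have h2 := RatFunc.algebraMap_injective (K := ℚ) h
  have := congrArg Polynomial.natDegree h2
  simp at this

lemma q_ne_zero : q ≠ 0 := by unfold q; exact RatFunc.X_ne_zero

lemma poch_ne_zero (n : ℕ) : poch n ≠ 0 := by
  unfold poch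
  rw [Finset.prod_ne_zero_iff]
  intro k _
  exact sub_ne_zero_of_ne (Ne.symm (qpow_ne_one k))

lemma poch_succ (n : ℕ) : poch (n+1) = poch n * (1 - q ^ (n+1)) :=
  Finset.prod_range_succ _ n

lemma poch_zero : poch 0 = 1 := rfl

lemma binq_neg {n k : ℤ} (h : k < 0) : binq n k = 0 := by
  unfold binq; rw [if_neg (by omega)]

lemma binq_gt {n k : ℤ} (h : n < k) : binq n k = 0 := by
  unfold binq; rw [if_neg (by omega)]

lemma binq_zero {n : ℤ} (h : 0 ≤ n) : binq n 0 = 1 := by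
  unfold binq
  rw [if_pos ⟨le_refl 0, h⟩]
  simp [poch_zero]
  exact poch_ne_zero _

lemma binq_self {n : ℤ} (h : 0 ≤ n) : binq n n = 1 := by
  unfold binq
  rw [if_pos ⟨h, le_refl n⟩]
  simp [poch_zero]
  exact poch_ne_zero _

lemma pascal (n k : ℤ) (h : ¬(n = 0 ∧ k = 0)) :
    binq n k = q ^ k * binq (n-1) k + binq (n-1) (k-1) := by
  rcases lt_trichotomy k 0 with hk | hk | hk
  · rw [binq_neg hk, binq_neg hk, binq_neg (by omega)]; ring
  · subst hk
    rw [binq_neg (show (0:ℤ)-1 < 0 by omega), zpow_zero]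
    rcases lt_trichotomy n 0 with hn | hn | hn
    · rw [binq_gt hn, binq_gt (by omega)]; ring
    · exact absurd ⟨hn, rfl⟩ h
    · rw [binq_zero (by omega), binq_zero (by omega)]; ring
  · rcases lt_trichotomy n k with hn | hn | hn
    · rw [binq_gt hn, binq_gt (by omega), binq_gt (by omega)]; ring
    · subst hn
      rw [binq_self (by omega), binq_gt (by omega), binq_self (by omega)]
      ring
    · -- main case 0 < k < n
      obtain ⟨a, ha⟩ : ∃ a : ℕ, k = (a:ℤ) + 1 := ⟨(k-1).toNat, by omega⟩
      obtain ⟨b, hb⟩ : ∃ b : ℕ, n = (a:ℤ) + b + 2 := ⟨(n-k-1).toNat, by omega⟩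
      subst ha hb
      unfold binq
      rw [if_pos (by omega), if_pos (by omega), if_pos (by omega)]
      rw [show ((a:ℤ) + b + 2).toNat = (a+b+1)+1 by omega,
          show ((a:ℤ) + 1).toNat = a+1 by omega,
          show ((a:ℤ) + b + 2 - ((a:ℤ)+1)).toNat = b+1 by omega,
          show ((a:ℤ) + b + 2 - 1).toNat = a+b+1 by omega,
          show ((a:ℤ) + b + 2 - 1 - ((a:ℤ)+1)).toNat = b by omega,
          show ((a:ℤ) + 1 - 1).toNat = a by omega,
          show ((a:ℤ) + b + 2 - 1 - ((a:ℤ)+1-1)).toNat = b+1 by omega,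
          show ((a:ℤ)+1) = ((a+1:ℕ):ℤ) by push_cast; ring, zpow_natCast]
      rw [poch_succ (a+b+1), poch_succ a, poch_succ b]
      have h1 := poch_ne_zero (a+b+1)
      have h2 := poch_ne_zero a
      have h3 := poch_ne_zero b
      have h4 : (1 - q^(a+1)) ≠ 0 := sub_ne_zero_of_ne (Ne.symm (qpow_ne_one a))
      have h5 : (1 - q^(b+1)) ≠ 0 := sub_ne_zero_of_ne (Ne.symm (qpow_ne_one b))
      field_simp
      ring

end Stmt10

namespace Stmt10

def f (M L j : ℤ) : K :=
  q ^ (j*(2*j-1)) * binq (M+L-j) (M+j) * binq (M+L+j) (M-j)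
  - q ^ (j*(2*j+1)) * binq (M+L-j-1) (M+j) * binq (M+L+j+1) (M-j)

def P (M L j : ℤ) : K :=
  q ^ (j*(2*j-1) + (M-j)) * binq (M+L-j-1) (M+j-1) * binq (M+L+j-1) (M-j)

lemma key (M L j : ℤ) (hM : 1 ≤ M) (hL : 0 ≤ L) :
    f M L j = f (M-1) L j + P M L j - P M L (j+1) := by
  have h1 : binq (M+L-j) (M+j)
      = q^(M+j) * binq (M+L-j-1) (M+j) + binq (M+L-j-1) (M+j-1) :=
    pascal (M+L-j) (M+j) (by omega)
  have h2 : binq (M+L+j+1) (M-j)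
      = q^(M-j) * binq (M+L+j) (M-j) + binq (M+L+j) (M-j-1) := by
    have := pascal (M+L+j+1) (M-j) (by omega)
    rwa [show M+L+j+1-1 = M+L+j by ring] at this
  have h3 : binq (M+L+j) (M-j)
      = q^(M-j) * binq (M+L+j-1) (M-j) + binq (M+L+j-1) (M-j-1) :=
    pascal (M+L+j) (M-j) (by omega)
  have h4 : binq (M+L-j-1) (M+j)
      = q^(M+j) * binq (M+L-j-2) (M+j) + binq (M+L-j-2) (M+j-1) := by
    have := pascal (M+L-j-1) (M+j) (by omega)
    rwa [show M+L-j-1-1 = M+L-j-2 by ring] at this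
  unfold f P
  rw [h1, h2, h3, h4]
  rw [show M-1+L-j = M+L-j-1 by ring, show M-1+j = M+j-1 by ring,
      show M-1+L+j = M+L+j-1 by ring, show M-1-j = M-j-1 by ring,
      show M+L-j-1-1 = M+L-j-2 by ring, show M+L+j-1+1 = M+L+j by ring,
      show M+L-(j+1)-1 = M+L-j-2 by ring, show M+(j+1)-1 = M+j by ring,
      show M+L+(j+1)-1 = M+L+j by ring, show M-(j+1) = M-j-1 by ring]
  have eA : q ^ (j*(2*j-1)) * q^(M+j) = q^(j*(2*j+1)) * q^(M-j) := by
    rw [← zpow_add₀ q_ne_zero, ← zpow_add₀ q_ne_zero]; congr 1; ring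
  have eB : q ^ (j*(2*j-1) + (M-j)) = q ^ (j*(2*j-1)) * q^(M-j) :=
    zpow_add₀ q_ne_zero _ _
  have eC : q ^ ((j+1)*(2*(j+1)-1) + (M-j-1)) = q ^ (j*(2*j+1)) * q^(M+j) := by
    rw [← zpow_add₀ q_ne_zero]; congr 1; ring
  rw [eB, eC]
  linear_combination ((q^(M+j) * binq (M+L-j-2) (M+j) + binq (M+L-j-2) (M+j-1)) *
      (q^(M-j) * binq (M+L+j-1) (M-j) + binq (M+L+j-1) (M-j-1))) * eA

end Stmt10

namespace Stmt10

lemma f_vanish (M L j : ℤ) (h : j < -M ∨ M < j) : f M L j = 0 := by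
  unfold f
  rcases h with h | h
  · rw [binq_neg (show M+j < 0 by omega)]
    rw [binq_neg (show M+j < 0 by omega)]
    ring
  · rw [binq_neg (show M-j < 0 by omega)]
    rw [binq_neg (show M-j < 0 by omega)]
    ring

lemma P_vanish (M L j : ℤ) (h : j < -M+1 ∨ M < j) : P M L j = 0 := by
  unfold P
  rcases h with h | h
  · rw [binq_neg (show M+j-1 < 0 by omega)]; ring
  · rw [binq_neg (show M-j < 0 by omega)]; ring

lemma f_sum (M L : ℤ) (hM : 0 ≤ M) (a b : ℤ) (ha : a ≤ -M) (hb : M ≤ b) :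
    ∑ᶠ j, f M L j = ∑ j ∈ Finset.Icc a b, f M L j := by
  apply finsum_eq_sum_of_support_subset
  intro j hj
  simp only [Function.mem_support] at hj
  simp only [Finset.coe_Icc, Set.mem_Icc]
  by_contra hc
  exact hj (f_vanish M L j (by omega))

lemma icc_insert (a b : ℤ) (h : a ≤ b + 1) :
    Finset.Icc a (b+1) = insert (b+1) (Finset.Icc a b) := by
  ext x; simp only [Finset.mem_Icc, Finset.mem_insert]; omega

lemma tele (g : ℤ → K) (a : ℤ) (n : ℕ) :
    ∑ j ∈ Finset.Icc a (a+n), (g j - g (j+1)) = g a - g (a+n+1) := by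
  induction n with
  | zero => simp
  | succ n ih =>
    rw [show a + ((n+1:ℕ):ℤ) = (a+n) + 1 by push_cast; ring, icc_insert _ _ (by omega),
        Finset.sum_insert (by simp [Finset.mem_Icc])]
    push_cast
    rw [ih]
    ring

end Stmt10

namespace Stmt10

lemma S_step (M L : ℤ) (hM : 0 ≤ M) (hL : 0 ≤ L) :
    ∑ᶠ j, f (M+1) L j = ∑ᶠ j, f M L j := by
  rw [f_sum (M+1) L (by omega) (-(M+1)) (M+1) (by omega) (by omega),
      f_sum M L hM (-(M+1)) (M+1) (by omega) (by omega)]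
  have hkey : ∀ j ∈ Finset.Icc (-(M+1)) (M+1),
      f (M+1) L j = f M L j + (P (M+1) L j - P (M+1) L (j+1)) := by
    intro j _
    have := key (M+1) L j (by omega) hL
    rw [show M+1-1 = M by ring] at this
    rw [this]; ring
  rw [Finset.sum_congr rfl hkey, Finset.sum_add_distrib]
  have : ∑ j ∈ Finset.Icc (-(M+1)) (M+1), (P (M+1) L j - P (M+1) L (j+1)) = 0 := by
    obtain ⟨n, hn⟩ : ∃ n : ℕ, (M+1 : ℤ) = -(M+1) + n := ⟨(2*M+2).toNat, by omega⟩
    have ht := tele (fun j => P (M+1) L j) (-(M+1)) n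
    rw [show -(M+1) + (n:ℤ) = M+1 from hn.symm] at ht
    rw [ht, P_vanish _ _ _ (by omega), P_vanish _ _ _ (by omega)]
    ring
  rw [this]; ring

lemma S_zero (L : ℤ) (hL : 0 ≤ L) :
    ∑ᶠ j, f 0 L j = if L = 0 then 1 else 0 := by
  rw [f_sum 0 L le_rfl 0 0 le_rfl le_rfl]
  rw [Finset.Icc_self, Finset.sum_singleton]
  unfold f
  norm_num
  rcases eq_or_lt_of_le hL with h | h
  · rw [if_pos h.symm, ← h]
    norm_num
    rw [binq_gt (show (-1:ℤ) < 0 by omega), binq_zero le_rfl]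
    ring
  · rw [if_neg (by omega)]
    rw [binq_zero hL, binq_zero (by omega), binq_zero (by omega)]
    ring

lemma X_eq (M L : ℤ) : X 1 2 0 1 M L = ∑ᶠ j, f M L j := by
  unfold X X4 f
  apply finsum_congr
  intro j
  norm_num

end Stmt10

namespace Stmt10

theorem burge_initial (M L : ℕ) :
    X 1 2 0 1 (M : ℤ) (L : ℤ) = if L = 0 then 1 else 0 := by
  rw [X_eq]
  induction M with
  | zero =>
    rw [show ((0:ℕ):ℤ) = 0 from rfl, S_zero (L:ℤ) (by positivity)]
    simp
  | succ n ih =>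
    rw [show ((n+1:ℕ):ℤ) = (n:ℤ)+1 by push_cast; ring,
        S_step (n:ℤ) (L:ℤ) (by positivity) (by positivity), ih]

end Stmt10
end
end

section
/- Symmetric Burge transform: let p, p' ≥ 1, 0 ≤ r ≤ p, 0 ≤ s ≤ p', and M, L nonnegative integers. Then X_{r,r+s}^{(p,p+p')}(M,L) = ∑_{i=0}^{M} q^{i²} binq(2L+M−i, 2L) X_{r,s}^{(p,p')}(i, L−i). -/
/-!
STATEMENT 11: the symmetric Burge transform:
for `p, p' ≥ 1`, `0 ≤ r ≤ p`, `0 ≤ s ≤ p'` and `M, L ≥ 0`,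
`X_{r,r+s}^{(p,p+p')}(M,L) = ∑_{i=0}^M q^{i²} binq(2L+M−i, 2L) X_{r,s}^{(p,p')}(i, L−i)`.
The terms with `L − i < 0` vanish.
-/

noncomputable section

namespace Stmt11

abbrev K : Type := RatFunc ℚ

def q : K := RatFunc.X

def poch (n : ℕ) : K := ∏ k ∈ Finset.range n, (1 - q ^ (k + 1))

def binq (n k : ℤ) : K :=
  if 0 ≤ k ∧ k ≤ n then poch n.toNat / (poch k.toNat * poch (n - k).toNat) else 0

/-- The Burge polynomial `X_{r,s}^{(p,p')}(M₁,L₁,M₂,L₂)`; the sum over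
`j ∈ ℤ` has finite support (for `p ≥ 1`), hence is written as a `finsum`. -/
def X4 (p p' r s M1 L1 M2 L2 : ℤ) : K :=
  ∑ᶠ j : ℤ,
    (q ^ (j * (p * p' * j + p' * (M1 - M2 + r) - p * s)) *
        binq (M1 + L1 - (p' - p) * j) (M1 + p * j) *
        binq (M2 + L2 + (p' - p) * j) (M2 - p * j)
      - q ^ ((p * j + M1 - M2 + r) * (p' * j + s)) *
        binq (M1 + L1 - (p' - p) * j + r - s) (M1 + p * j + r) *
        binq (M2 + L2 + (p' - p) * j - r + s) (M2 - p * j - r))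

/-- The symmetric Burge polynomial `X_{r,s}^{(p,p')}(M,L) = X_{r,s}^{(p,p')}(M,L,M,L)`. -/
def X (p p' r s M L : ℤ) : K := X4 p p' r s M L M L

lemma q_ne_zero : q ≠ 0 := RatFunc.X_ne_zero

lemma q_pow_ne_one {m : ℕ} (hm : m ≠ 0) : q ^ m ≠ 1 := by
  intro h
  have h2 : (algebraMap (Polynomial ℚ) K) (Polynomial.X ^ m) = algebraMap (Polynomial ℚ) K 1 := by
    simpa [q, map_pow, RatFunc.algebraMap_X] using h
  have h3 := RatFunc.algebraMap_injective ℚ h2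
  have := congrArg Polynomial.natDegree h3
  simp [Polynomial.natDegree_X_pow] at this
  exact hm this

lemma q_zpow_ne_one {n : ℤ} (hn : n ≠ 0) : q ^ n ≠ 1 := by
  rcases lt_or_gt_of_ne hn with h | h
  · intro he
    have : q ^ (-n) = 1 := by
      rw [← inv_inj]
      rw [← zpow_neg]
      simpa using he
    have hm : (-n).toNat ≠ 0 := by omega
    apply q_pow_ne_one hm
    rw [← zpow_natCast]
    simpa [Int.toNat_of_nonneg (by omega : (0:ℤ) ≤ -n)] using this
  · intro he
    have hm : n.toNat ≠ 0 := by omega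
    apply q_pow_ne_one hm
    rw [← zpow_natCast]
    simpa [Int.toNat_of_nonneg (by omega : (0:ℤ) ≤ n)] using he

lemma one_sub_q_zpow_ne_zero {n : ℤ} (hn : n ≠ 0) : 1 - q ^ n ≠ 0 := by
  intro h
  exact q_zpow_ne_one hn (by linear_combination -h)

lemma one_sub_q_pow_ne_zero {m : ℕ} (hm : m ≠ 0) : 1 - q ^ m ≠ 0 := by
  intro h
  exact q_pow_ne_one hm (by linear_combination -h)

lemma poch_ne_zero (n : ℕ) : poch n ≠ 0 := by
  unfold poch
  apply Finset.prod_ne_zero_iff.2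
  intro k _
  exact one_sub_q_pow_ne_zero (Nat.succ_ne_zero k)

lemma poch_succ (n : ℕ) : poch (n + 1) = poch n * (1 - q ^ (n + 1)) := by
  unfold poch
  rw [Finset.prod_range_succ]

lemma binq_of_neg {n k : ℤ} (h : k < 0) : binq n k = 0 := by
  unfold binq; rw [if_neg]; push_neg; intro h'; omega

lemma binq_of_gt {n k : ℤ} (h : n < k) : binq n k = 0 := by
  unfold binq; rw [if_neg]; push_neg; intro h'; omega

lemma binq_eq {n k : ℤ} (h0 : 0 ≤ k) (h1 : k ≤ n) :
    binq n k = poch n.toNat / (poch k.toNat * poch (n - k).toNat) := by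
  unfold binq; rw [if_pos ⟨h0, h1⟩]

lemma q_zpow_toNat {m : ℤ} (h : 0 ≤ m) : q ^ m = q ^ m.toNat := by
  rw [← zpow_natCast, Int.toNat_of_nonneg h]

/-- R1 : `(1-q^k) binq n k = (1-q^(n-k+1)) binq n (k-1)`, unconditionally. -/
lemma binq_R1 (n k : ℤ) :
    (1 - q ^ k) * binq n k = (1 - q ^ (n - k + 1)) * binq n (k - 1) := by
  rcases lt_trichotomy k 0 with hk | hk | hk
  · rw [binq_of_neg hk, binq_of_neg (by omega), mul_zero, mul_zero]
  · subst hk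
    rw [binq_of_neg (by omega : (0:ℤ) - 1 < 0)]
    simp
  · -- k ≥ 1
    rcases le_or_gt k n with hkn | hkn
    · -- 1 ≤ k ≤ n
      obtain ⟨a, ha⟩ : ∃ a : ℕ, (a : ℤ) = k - 1 := ⟨(k-1).toNat, Int.toNat_of_nonneg (by omega)⟩
      obtain ⟨b, hb⟩ : ∃ b : ℕ, (b : ℤ) = n - k := ⟨(n-k).toNat, Int.toNat_of_nonneg (by omega)⟩
      rw [binq_eq (by omega) hkn, binq_eq (by omega) (by omega)]
      have h1 : k.toNat = a + 1 := by omega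
      have h2 : (n - k).toNat = b := by omega
      have h3 : (k - 1).toNat = a := by omega
      have h4 : (n - (k - 1)).toNat = b + 1 := by omega
      rw [h1, h2, h3, h4, poch_succ a, poch_succ b]
      have e1 : q ^ k = q ^ (a + 1 : ℕ) := by rw [q_zpow_toNat (by omega), h1]
      have e2 : q ^ (n - k + 1) = q ^ (b + 1 : ℕ) := by
        rw [q_zpow_toNat (by omega)]
        congr 1
        omega
      rw [e1, e2]
      have p1 := poch_ne_zero a
      have p2 := poch_ne_zero b
      have p3 := poch_ne_zero n.toNat
      have p4 := one_sub_q_pow_ne_zero (Nat.succ_ne_zero a)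
      have p5 := one_sub_q_pow_ne_zero (Nat.succ_ne_zero b)
      field_simp
    · -- k > n
      by_cases hkn1 : k = n + 1
      · have hz : (1 : K) - q ^ (n - k + 1) = 0 := by
          have : n - k + 1 = 0 := by omega
          rw [this]; simp
        rw [hz, binq_of_gt hkn, mul_zero, zero_mul]
      · rw [binq_of_gt hkn, binq_of_gt (by omega : n < k - 1), mul_zero, mul_zero]

/-- R2 : `(1-q^(n+1-k)) binq (n+1) k = (1-q^(n+1)) binq n k`, unconditionally. -/
lemma binq_R2 (n k : ℤ) :
    (1 - q ^ (n + 1 - k)) * binq (n + 1) k = (1 - q ^ (n + 1)) * binq n k := by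
  rcases lt_or_ge k 0 with hk | hk
  · rw [binq_of_neg hk, binq_of_neg hk, mul_zero, mul_zero]
  · rcases lt_or_ge n k with hkn | hkn
    · by_cases hkn1 : k = n + 1
      · have hz : (1 : K) - q ^ (n + 1 - k) = 0 := by
          rw [(by omega : n + 1 - k = 0)]; simp
        rw [hz, zero_mul, binq_of_gt hkn, mul_zero]
      · rw [binq_of_gt hkn, binq_of_gt (by omega : n + 1 < k), mul_zero, mul_zero]
    · -- 0 ≤ k ≤ n
      obtain ⟨b, hb⟩ : ∃ b : ℕ, (b : ℤ) = n - k := ⟨(n-k).toNat, Int.toNat_of_nonneg (by omega)⟩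
      obtain ⟨m, hm⟩ : ∃ m : ℕ, (m : ℤ) = n := ⟨n.toNat, Int.toNat_of_nonneg (by omega)⟩
      rw [binq_eq hk (by omega), binq_eq hk hkn]
      have h1 : (n + 1).toNat = m + 1 := by omega
      have h2 : (n + 1 - k).toNat = b + 1 := by omega
      have h3 : n.toNat = m := by omega
      have h4 : (n - k).toNat = b := by omega
      rw [h1, h2, h3, h4, poch_succ m, poch_succ b]
      have e1 : q ^ (n + 1 - k) = q ^ (b + 1 : ℕ) := by rw [q_zpow_toNat (by omega), h2]
      have e2 : q ^ (n + 1) = q ^ (m + 1 : ℕ) := by rw [q_zpow_toNat (by omega), h1]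
      rw [e1, e2]
      have p1 := poch_ne_zero m
      have p2 := poch_ne_zero b
      have p3 := poch_ne_zero k.toNat
      have p4 := one_sub_q_pow_ne_zero (Nat.succ_ne_zero m)
      have p5 := one_sub_q_pow_ne_zero (Nat.succ_ne_zero b)
      field_simp

/-- R3 : `(1-q^(k+1)) binq (n+1) (k+1) = (1-q^(n+1)) binq n k`, unconditionally. -/
lemma binq_R3 (n k : ℤ) :
    (1 - q ^ (k + 1)) * binq (n + 1) (k + 1) = (1 - q ^ (n + 1)) * binq n k := by
  have h1 := binq_R1 (n + 1) (k + 1)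
  have h2 := binq_R2 n k
  simp only [add_sub_cancel_right] at h1
  rw [h1, (by ring : n + 1 - (k + 1) + 1 = n + 1 - k), h2]

lemma qz_add (x y : ℤ) : q ^ (x + y) = q ^ x * q ^ y := zpow_add₀ q_ne_zero x y
lemma qz_ne (x : ℤ) : q ^ x ≠ 0 := zpow_ne_zero x q_ne_zero

def tS (Mz a b c i : ℤ) : K :=
  q ^ (i^2 - c^2) * (binq (a+b+Mz-i) (a+b) * binq (a+c) (i+c) * binq (b-c) (i-c))

def GG (Mz a b c i : ℤ) : K :=
  q ^ (i^2 - c^2) * q ^ (Mz+1-i) * ((1 - q ^ (a+1-i)) * (1 - q ^ (b+1-i))) *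
    (binq (a+b+Mz+1-i) (a+b) * binq (a+c) (i+c-1) * binq (b-c) (i-c-1))

lemma wz (Mz a b c i : ℤ) :
    (1 - q ^ (Mz+1+c)) * (1 - q ^ (Mz+1-c)) * tS (Mz+1) a b c i
      - (1 - q ^ (Mz+1+a)) * (1 - q ^ (Mz+1+b)) * tS Mz a b c i
    = GG Mz a b c i - GG Mz a b c (i+1) := by
  have hr1 : (1 - q^i*q^c) * binq (a+c) (i+c) = (1 - q^(a+1-i)) * binq (a+c) (i+c-1) := by
    have h := binq_R1 (a+c) (i+c)
    rw [show a+c-(i+c)+1 = a+1-i by ring, qz_add i c] at h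
    exact h
  have hr2 : (1 - q^(i-c)) * binq (b-c) (i-c) = (1 - q^(b+1-i)) * binq (b-c) (i-c-1) := by
    have h := binq_R1 (b-c) (i-c)
    rw [show b-c-(i-c)+1 = b+1-i by ring] at h
    exact h
  have hr3 : (1 - q^(Mz+1-i)) * binq (a+b+Mz+1-i) (a+b)
      = (1 - q^(a+b+Mz+1-i)) * binq (a+b+Mz-i) (a+b) := by
    have h := binq_R2 (a+b+Mz-i) (a+b)
    rw [show a+b+Mz-i+1 = a+b+Mz+1-i by ring, show a+b+Mz+1-i-(a+b) = Mz+1-i by ring] at h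
    exact h
  have h2 : q^(Mz+1-c) * q^c = q^Mz*q := by
    rw [← qz_add, show Mz+1-c+c = Mz+1 by ring, qz_add Mz 1, zpow_one]
  have h4 : q^(i-c) * q^c = q^i := by
    rw [← qz_add, show i-c+c = i by ring]
  have h5 : q^(a+1-i) * q^i = q^a*q := by
    rw [← qz_add, show a+1-i+i = a+1 by ring, qz_add a 1, zpow_one]
  have h6 : q^(b+1-i) * q^i = q^b*q := by
    rw [← qz_add, show b+1-i+i = b+1 by ring, qz_add b 1, zpow_one]
  have h7 : q^(Mz+1-i) * q^i = q^Mz*q := by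
    rw [← qz_add, show Mz+1-i+i = Mz+1 by ring, qz_add Mz 1, zpow_one]
  have h5p : q^(a-i) * q^i = q^a := by rw [← qz_add, show a-i+i = a by ring]
  have h6p : q^(b-i) * q^i = q^b := by rw [← qz_add, show b-i+i = b by ring]
  have h7m : q^(Mz-i) * q^i = q^Mz := by rw [← qz_add, show Mz-i+i = Mz by ring]
  have h13 : q^(a+b+Mz+1-i) * q^i = q^a*q^b*q^Mz*q := by
    rw [← qz_add, show a+b+Mz+1-i+i = a+b+Mz+1 by ring, qz_add (a+b+Mz) 1,
      qz_add (a+b) Mz, qz_add a b, zpow_one]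
  apply mul_left_cancel₀ (mul_ne_zero (pow_ne_zero 4 (qz_ne i)) (qz_ne c))
  simp only [tS, GG]
  rw [show a+b+(Mz+1)-i = a+b+Mz+1-i by ring, show (i+1)+c-1 = i+c by ring,
    show (i+1)-c-1 = i-c by ring, show a+b+Mz+1-(i+1) = a+b+Mz-i by ring,
    show a+1-(i+1) = a-i by ring, show b+1-(i+1) = b-i by ring,
    show Mz+1-(i+1) = Mz-i by ring,
    show ((i+1)^2 - c^2 : ℤ) = i^2-c^2 + (i+(i+1)) by ring,
    qz_add (i^2-c^2) (i+(i+1)), qz_add i (i+1), qz_add i 1,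
    qz_add (Mz+1) c, qz_add (Mz+1) a, qz_add (Mz+1) b, qz_add Mz 1, zpow_one]
  linear_combination
    (q*(q^i)^3*(q^Mz)*(q^c)*(q^(i^2-c^2))*(binq (b-c) (i-c))*(binq (a+b+Mz+1-i) (a+b)) - q*(q^i)^4*(q^Mz)*(q^(i^2-c^2))*(binq (b-c) (i-c))*(binq (a+b+Mz+1-i) (a+b))) * hr1
    + (q*(q^i)^3*(q^Mz)*(q^c)*(q^(i^2-c^2))*(binq (a+c) (i+c-1))*(binq (a+b+Mz+1-i) (a+b)) - q^2*(q^i)^2*(q^Mz)*(q^a)*(q^c)*(q^(i^2-c^2))*(binq (a+c) (i+c-1))*(binq (a+b+Mz+1-i) (a+b))) * hr2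
    + ((q^i)^4*(q^c)*(q^(i^2-c^2))*(binq (a+c) (i+c))*(binq (b-c) (i-c)) - q*(q^i)^5*(q^Mz)*(q^c)*(q^(i^2-c^2))*(binq (a+c) (i+c))*(binq (b-c) (i-c))) * hr3
    + (-(q^i)^4*(q^(i^2-c^2))*(binq (a+c) (i+c))*(binq (b-c) (i-c))*(binq (a+b+Mz+1-i) (a+b)) + q*(q^i)^4*(q^Mz)*(q^c)*(q^(i^2-c^2))*(binq (a+c) (i+c))*(binq (b-c) (i-c))*(binq (a+b+Mz+1-i) (a+b))) * h2
    + (q*(q^i)^3*(q^Mz)*(q^(i^2-c^2))*(binq (a+c) (i+c-1))*(binq (b-c) (i-c))*(binq (a+b+Mz+1-i) (a+b)) - q^2*(q^i)^2*(q^Mz)*(q^a)*(q^(i^2-c^2))*(binq (a+c) (i+c-1))*(binq (b-c) (i-c))*(binq (a+b+Mz+1-i) (a+b))) * h4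
    + ((q^i)^3*(q^c)*(q^(i^2-c^2))*(q^(Mz+1-i))*(binq (a+c) (i+c-1))*(binq (b-c) (i-c-1))*(binq (a+b+Mz+1-i) (a+b)) - (q^i)^3*(q^c)*(q^(i^2-c^2))*(q^(b+1-i))*(q^(Mz+1-i))*(binq (a+c) (i+c-1))*(binq (b-c) (i-c-1))*(binq (a+b+Mz+1-i) (a+b)) - q*(q^i)^2*(q^Mz)*(q^c)*(q^(i^2-c^2))*(binq (a+c) (i+c-1))*(binq (b-c) (i-c))*(binq (a+b+Mz+1-i) (a+b)) + q*(q^i)^3*(q^Mz)*(q^(i^2-c^2))*(binq (a+c) (i+c-1))*(binq (b-c) (i-c))*(binq (a+b+Mz+1-i) (a+b))) * h5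
    + ((q^i)^3*(q^c)*(q^(i^2-c^2))*(q^(Mz+1-i))*(binq (a+c) (i+c-1))*(binq (b-c) (i-c-1))*(binq (a+b+Mz+1-i) (a+b)) - q*(q^i)^2*(q^a)*(q^c)*(q^(i^2-c^2))*(q^(Mz+1-i))*(binq (a+c) (i+c-1))*(binq (b-c) (i-c-1))*(binq (a+b+Mz+1-i) (a+b)) - q*(q^i)^2*(q^Mz)*(q^c)*(q^(i^2-c^2))*(binq (a+c) (i+c-1))*(binq (b-c) (i-c-1))*(binq (a+b+Mz+1-i) (a+b)) + q^2*(q^i)*(q^Mz)*(q^a)*(q^c)*(q^(i^2-c^2))*(binq (a+c) (i+c-1))*(binq (b-c) (i-c-1))*(binq (a+b+Mz+1-i) (a+b))) * h6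
    + (-(q^i)^3*(q^c)*(q^(i^2-c^2))*(binq (a+c) (i+c-1))*(binq (b-c) (i-c-1))*(binq (a+b+Mz+1-i) (a+b)) + (q^i)^3*(q^c)*(q^(i^2-c^2))*(binq (a+c) (i+c))*(binq (b-c) (i-c))*(binq (a+b+Mz+1-i) (a+b)) + q*(q^i)^2*(q^b)*(q^c)*(q^(i^2-c^2))*(binq (a+c) (i+c-1))*(binq (b-c) (i-c-1))*(binq (a+b+Mz+1-i) (a+b)) + q*(q^i)^2*(q^a)*(q^c)*(q^(i^2-c^2))*(binq (a+c) (i+c-1))*(binq (b-c) (i-c-1))*(binq (a+b+Mz+1-i) (a+b)) - q*(q^i)^4*(q^Mz)*(q^c)*(q^(i^2-c^2))*(binq (a+c) (i+c))*(binq (b-c) (i-c))*(binq (a+b+Mz+1-i) (a+b)) - q^2*(q^i)*(q^a)*(q^b)*(q^c)*(q^(i^2-c^2))*(binq (a+c) (i+c-1))*(binq (b-c) (i-c-1))*(binq (a+b+Mz+1-i) (a+b))) * h7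
    + (-(q^i)^3*(q^c)*(q^(i^2-c^2))*(binq (a+c) (i+c))*(binq (b-c) (i-c))*(binq (a+b+Mz-i) (a+b)) + q*(q^i)^4*(q^Mz)*(q^c)*(q^(i^2-c^2))*(binq (a+c) (i+c))*(binq (b-c) (i-c))*(binq (a+b+Mz-i) (a+b))) * h13
    + (-q*(q^i)^5*(q^c)*(q^(i^2-c^2))*(q^(Mz-i))*(binq (a+c) (i+c))*(binq (b-c) (i-c))*(binq (a+b+Mz-i) (a+b)) + q*(q^i)^5*(q^c)*(q^(i^2-c^2))*(q^(b-i))*(q^(Mz-i))*(binq (a+c) (i+c))*(binq (b-c) (i-c))*(binq (a+b+Mz-i) (a+b))) * h5p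
    + (q*(q^i)^4*(q^a)*(q^c)*(q^(i^2-c^2))*(q^(Mz-i))*(binq (a+c) (i+c))*(binq (b-c) (i-c))*(binq (a+b+Mz-i) (a+b)) - q*(q^i)^5*(q^c)*(q^(i^2-c^2))*(q^(Mz-i))*(binq (a+c) (i+c))*(binq (b-c) (i-c))*(binq (a+b+Mz-i) (a+b))) * h6p
    + (q*(q^i)^3*(q^a)*(q^b)*(q^c)*(q^(i^2-c^2))*(binq (a+c) (i+c))*(binq (b-c) (i-c))*(binq (a+b+Mz-i) (a+b)) - q*(q^i)^4*(q^b)*(q^c)*(q^(i^2-c^2))*(binq (a+c) (i+c))*(binq (b-c) (i-c))*(binq (a+b+Mz-i) (a+b)) - q*(q^i)^4*(q^a)*(q^c)*(q^(i^2-c^2))*(binq (a+c) (i+c))*(binq (b-c) (i-c))*(binq (a+b+Mz-i) (a+b)) + q*(q^i)^5*(q^c)*(q^(i^2-c^2))*(binq (a+c) (i+c))*(binq (b-c) (i-c))*(binq (a+b+Mz-i) (a+b))) * h7m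

lemma binq_zero_right {n : ℤ} (h : 0 ≤ n) : binq n 0 = 1 := by
  rw [binq_eq le_rfl h]
  have : poch (0:ℤ).toNat = 1 := by norm_num [poch]
  rw [this, one_mul, sub_zero, div_self (poch_ne_zero _)]

lemma binq_diag {n : ℤ} (h : 0 ≤ n) : binq n n = 1 := by
  rw [binq_eq h le_rfl, sub_self]
  have : poch (0:ℤ).toNat = 1 := by norm_num [poch]
  rw [this, mul_one, div_self (poch_ne_zero _)]

lemma GG_bot (Mz a b c : ℤ) : GG Mz a b c 0 = 0 := by
  unfold GG
  rcases le_or_gt c 0 with h | h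
  · rw [binq_of_neg (by omega : (0:ℤ)+c-1 < 0)]
    ring
  · rw [binq_of_neg (by omega : (0:ℤ)-c-1 < 0)]
    ring

lemma GG_top (Mz a b c i : ℤ) (h : i = Mz + 2) : GG Mz a b c i = 0 := by
  unfold GG
  rw [binq_of_gt (by omega : a+b+Mz+1-i < a+b)]
  ring

/-- the Saalschütz sum -/
def SS (M : ℕ) (a b c : ℤ) : K := ∑ i ∈ Finset.range (M+1), tS (M:ℤ) a b c (i:ℤ)

lemma tS_top (Mz a b c i : ℤ) (h : Mz < i) : tS Mz a b c i = 0 := by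
  unfold tS
  rw [binq_of_gt (by omega : a+b+Mz-i < a+b)]
  ring

lemma SS_rec (M : ℕ) (a b c : ℤ) :
    (1 - q ^ ((M:ℤ)+1+c)) * (1 - q ^ ((M:ℤ)+1-c)) * SS (M+1) a b c
      = (1 - q ^ ((M:ℤ)+1+a)) * (1 - q ^ ((M:ℤ)+1+b)) * SS M a b c := by
  have tel : ∑ i ∈ Finset.range (M+2),
      (GG (M:ℤ) a b c (i:ℤ) - GG (M:ℤ) a b c ((i:ℤ)+1)) = 0 := by
    have h0 := Finset.sum_range_sub' (f := fun i : ℕ => GG (M:ℤ) a b c (i:ℤ)) (M+2)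
    push_cast at h0
    rw [GG_bot, GG_top (M:ℤ) a b c ((M:ℤ)+2) (by ring)] at h0
    simpa using h0
  have hsum : ∑ i ∈ Finset.range (M+2),
      ((1 - q ^ ((M:ℤ)+1+c)) * (1 - q ^ ((M:ℤ)+1-c)) * tS ((M:ℤ)+1) a b c (i:ℤ)
        - (1 - q ^ ((M:ℤ)+1+a)) * (1 - q ^ ((M:ℤ)+1+b)) * tS (M:ℤ) a b c (i:ℤ)) = 0 := by
    rw [← tel]
    exact Finset.sum_congr rfl fun i _ => wz (M:ℤ) a b c (i:ℤ)
  rw [Finset.sum_sub_distrib, ← Finset.mul_sum, ← Finset.mul_sum, sub_eq_zero] at hsum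
  have e1 : ∑ i ∈ Finset.range (M+2), tS ((M:ℤ)+1) a b c (i:ℤ) = SS (M+1) a b c := by
    unfold SS
    push_cast
    rfl
  have e2 : ∑ i ∈ Finset.range (M+2), tS ((M:ℤ)) a b c (i:ℤ) = SS M a b c := by
    unfold SS
    rw [Finset.sum_range_succ (f := fun i : ℕ => tS ((M:ℤ)) a b c (i:ℤ)) (n := M+1)]
    rw [tS_top (M:ℤ) a b c ((M+1 : ℕ) : ℤ) (by push_cast; omega), add_zero]
  rw [e1, e2] at hsum
  exact hsum

/-- The core q-Saalschütz identity, case `c ≥ 0`. -/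
lemma core_nonneg (a b c : ℤ) (hc : 0 ≤ c) (hca : -a ≤ c) (hcb : c ≤ b) :
    ∀ M : ℕ, binq ((M:ℤ)+a) ((M:ℤ)+c) * binq ((M:ℤ)+b) ((M:ℤ)-c) = SS M a b c := by
  have key : ∀ M : ℕ, (M:ℤ) = c →
      binq ((M:ℤ)+a) ((M:ℤ)+c) * binq ((M:ℤ)+b) ((M:ℤ)-c) = SS M a b c := by
    intro M hM
    have hzero : ∀ i ∈ Finset.range M, tS (M:ℤ) a b c (i:ℤ) = 0 := by
      intro i hi
      simp only [Finset.mem_range] at hi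
      unfold tS
      rw [binq_of_neg (by omega : (i:ℤ)-c < 0)]
      ring
    unfold SS
    rw [Finset.sum_range_succ, Finset.sum_eq_zero hzero, zero_add]
    unfold tS
    rw [hM, show c^2 - c^2 = 0 by ring, zpow_zero, show a+b+c-c = a+b by ring, sub_self,
      binq_zero_right (by omega : (0:ℤ) ≤ c+b), binq_zero_right (by omega : (0:ℤ) ≤ b-c),
      binq_diag (by omega : (0:ℤ) ≤ a+b), show c+a = a+c by ring]
    ring
  have zero : ∀ M : ℕ, (M:ℤ) < c →
      binq ((M:ℤ)+a) ((M:ℤ)+c) * binq ((M:ℤ)+b) ((M:ℤ)-c) = SS M a b c := by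
    intro M hM
    rw [binq_of_neg (by omega : (M:ℤ)-c < 0), mul_zero]
    unfold SS
    symm
    apply Finset.sum_eq_zero
    intro i hi
    simp only [Finset.mem_range] at hi
    unfold tS
    rw [binq_of_neg (by omega : (i:ℤ)-c < 0)]
    ring
  intro M
  induction M with
  | zero =>
    rcases lt_or_eq_of_le hc with h | h
    · exact zero 0 (by omega)
    · exact key 0 (by omega)
  | succ M ih =>
    rcases lt_trichotomy ((M:ℤ)+1) c with h | h | h
    · have := zero (M+1) (by push_cast; omega)
      push_cast at this ⊢
      exact this
    · have := key (M+1) (by push_cast; omega)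
      push_cast at this ⊢
      exact this
    · -- recurrence step, c ≤ M
      have hne1 : ((M:ℤ)+1+c) ≠ 0 := by omega
      have hne2 : ((M:ℤ)+1-c) ≠ 0 := by omega
      have hF : (1 - q ^ ((M:ℤ)+1+c)) * (1 - q ^ ((M:ℤ)+1-c)) *
          (binq ((M:ℤ)+1+a) ((M:ℤ)+1+c) * binq ((M:ℤ)+1+b) ((M:ℤ)+1-c))
          = (1 - q ^ ((M:ℤ)+1+a)) * (1 - q ^ ((M:ℤ)+1+b)) *
            (binq ((M:ℤ)+a) ((M:ℤ)+c) * binq ((M:ℤ)+b) ((M:ℤ)-c)) := by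
        have r1 := binq_R3 ((M:ℤ)+a) ((M:ℤ)+c)
        have r2 := binq_R3 ((M:ℤ)+b) ((M:ℤ)-c)
        rw [show (M:ℤ)+a+1 = (M:ℤ)+1+a by ring, show (M:ℤ)+c+1 = (M:ℤ)+1+c by ring] at r1
        rw [show (M:ℤ)+b+1 = (M:ℤ)+1+b by ring, show (M:ℤ)-c+1 = (M:ℤ)+1-c by ring] at r2
        calc (1 - q ^ ((M:ℤ)+1+c)) * (1 - q ^ ((M:ℤ)+1-c)) *
            (binq ((M:ℤ)+1+a) ((M:ℤ)+1+c) * binq ((M:ℤ)+1+b) ((M:ℤ)+1-c))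
            = ((1 - q ^ ((M:ℤ)+1+c)) * binq ((M:ℤ)+1+a) ((M:ℤ)+1+c)) *
              ((1 - q ^ ((M:ℤ)+1-c)) * binq ((M:ℤ)+1+b) ((M:ℤ)+1-c)) := by ring
          _ = ((1 - q ^ ((M:ℤ)+1+a)) * binq ((M:ℤ)+a) ((M:ℤ)+c)) *
              ((1 - q ^ ((M:ℤ)+1+b)) * binq ((M:ℤ)+b) ((M:ℤ)-c)) := by rw [r1, r2]
          _ = _ := by ring
      push_cast
      apply mul_left_cancel₀
        (mul_ne_zero (one_sub_q_zpow_ne_zero hne1) (one_sub_q_zpow_ne_zero hne2))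
      rw [hF, ih]
      exact (SS_rec M a b c).symm
lemma SS_symm (M : ℕ) (a b c : ℤ) : SS M b a (-c) = SS M a b c := by
  refine Finset.sum_congr rfl fun i _ => ?_
  unfold tS
  rw [show ((-c)^2 : ℤ) = c^2 by ring, show b+a+(M:ℤ)-i = a+b+(M:ℤ)-i by ring,
    show b+a = a+b by ring, show b+(-c) = b-c by ring, show (i:ℤ)+(-c) = i-c by ring,
    show a-(-c) = a+c by ring, show (i:ℤ)-(-c) = i+c by ring]
  ring

/-- the per-term lemma, nonnegative case -/
lemma key_term_nonneg (L M : ℕ) (c d : ℤ) (hc : 0 ≤ c) (hd : 0 ≤ d) :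
    binq ((M:ℤ)+L-d) ((M:ℤ)+c) * binq ((M:ℤ)+L+d) ((M:ℤ)-c)
      = SS M ((L:ℤ)-d) ((L:ℤ)+d) c := by
  rcases le_or_gt c ((L:ℤ)-d) with hgood | hbad
  · have h := core_nonneg ((L:ℤ)-d) ((L:ℤ)+d) c hc (by omega) (by omega) M
    rw [show (M:ℤ)+((L:ℤ)-d) = (M:ℤ)+L-d by ring, show (M:ℤ)+((L:ℤ)+d) = (M:ℤ)+L+d by ring] at h
    exact h
  · -- c > L - d : both sides vanish
    rw [binq_of_gt (by omega : (M:ℤ)+L-d < (M:ℤ)+c), zero_mul]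
    symm
    apply Finset.sum_eq_zero
    intro i _
    unfold tS
    rcases lt_or_ge (i:ℤ) c with hic | hic
    · rw [binq_of_neg (by omega : (i:ℤ)-c < 0)]
      ring
    · rw [binq_of_gt (by omega : (L:ℤ)-d+c < (i:ℤ)+c)]
      ring

lemma key_term (L M : ℕ) (c d : ℤ)
    (hsign : (0 ≤ c ∧ 0 ≤ d) ∨ (c ≤ 0 ∧ d ≤ 0)) :
    binq ((M:ℤ)+L-d) ((M:ℤ)+c) * binq ((M:ℤ)+L+d) ((M:ℤ)-c)
      = SS M ((L:ℤ)-d) ((L:ℤ)+d) c := by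
  rcases hsign with ⟨hc, hd⟩ | ⟨hc, hd⟩
  · exact key_term_nonneg L M c d hc hd
  · have h := key_term_nonneg L M (-c) (-d) (by omega) (by omega)
    rw [show (M:ℤ)+L-(-d) = (M:ℤ)+L+d by ring, show (M:ℤ)+L+(-d) = (M:ℤ)+L-d by ring,
      show (M:ℤ)+(-c) = (M:ℤ)-c by ring, show (M:ℤ)-(-c) = (M:ℤ)+c by ring,
      show (L:ℤ)-(-d) = (L:ℤ)+d by ring, show (L:ℤ)+(-d) = (L:ℤ)-d by ring] at h
    rw [SS_symm] at h
    rw [← h]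
    ring
/-- the summand of `X4` -/
def XW (p p' r s M1 L1 M2 L2 j : ℤ) : K :=
  q ^ (j * (p * p' * j + p' * (M1 - M2 + r) - p * s)) *
      binq (M1 + L1 - (p' - p) * j) (M1 + p * j) *
      binq (M2 + L2 + (p' - p) * j) (M2 - p * j)
    - q ^ ((p * j + M1 - M2 + r) * (p' * j + s)) *
      binq (M1 + L1 - (p' - p) * j + r - s) (M1 + p * j + r) *
      binq (M2 + L2 + (p' - p) * j - r + s) (M2 - p * j - r)

lemma X4_eq_finsum (p p' r s M1 L1 M2 L2 : ℤ) :
    X4 p p' r s M1 L1 M2 L2 = ∑ᶠ j : ℤ, XW p p' r s M1 L1 M2 L2 j := rfl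

lemma XW_zero (p p' r s m L1 L2 j : ℤ) (hm : 0 ≤ m) (hr : 0 ≤ r) (hp : 1 ≤ p)
    (hj : m + r + 1 < j ∨ j < -(m + r + 1)) :
    XW p p' r s m L1 m L2 j = 0 := by
  unfold XW
  rcases hj with hj | hj
  · have hpj : 1 * j ≤ p * j := mul_le_mul_of_nonneg_right hp (by omega)
    rw [binq_of_neg (by linarith : m - p * j < 0), binq_of_neg (by linarith : m - p * j - r < 0)]
    ring
  · have hpj : p * j ≤ 1 * j := mul_le_mul_of_nonpos_right hp (by omega)
    rw [binq_of_neg (by linarith : m + p * j < 0), binq_of_neg (by linarith : m + p * j + r < 0)]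
    ring

lemma X4_eq_sum (p p' r s m L1 L2 : ℤ) (T : Finset ℤ) (hm : 0 ≤ m) (hr : 0 ≤ r) (hp : 1 ≤ p)
    (hT : ∀ j : ℤ, j ∉ T → m + r + 1 < j ∨ j < -(m + r + 1)) :
    X4 p p' r s m L1 m L2 = ∑ j ∈ T, XW p p' r s m L1 m L2 j := by
  rw [X4_eq_finsum]
  apply finsum_eq_finset_sum_of_support_subset
  intro j hj
  by_contra hjT
  exact hj (XW_zero p p' r s m L1 L2 j hm hr hp (hT j hjT))


theorem symmetric_burge_transform (p pp r s : ℤ) (hp : 1 ≤ p) (hpp : 1 ≤ pp)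
    (hr0 : 0 ≤ r) (hrp : r ≤ p) (hs0 : 0 ≤ s) (hsp : s ≤ pp) (M L : ℕ) :
    X p (p + pp) r (r + s) (M : ℤ) (L : ℤ)
      = ∑ i ∈ Finset.range (M + 1),
          q ^ ((i : ℤ) ^ 2) * binq (2 * L + M - i) (2 * L) *
            X p pp r s (i : ℤ) ((L : ℤ) - i) := by
  set J : Finset ℤ := Finset.Icc (-((M:ℤ) + r + 1)) ((M:ℤ) + r + 1) with hJdef
  have hJout : ∀ j : ℤ, j ∉ J → (M:ℤ) + r + 1 < j ∨ j < -((M:ℤ) + r + 1) := by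
    intro j hj
    rw [hJdef, Finset.mem_Icc] at hj
    omega
  -- Step A : LHS as a finite sum over J
  rw [show X p (p + pp) r (r + s) (M : ℤ) (L : ℤ)
      = ∑ j ∈ J, XW p (p+pp) r (r+s) (M:ℤ) (L:ℤ) (M:ℤ) (L:ℤ) j from
    X4_eq_sum p (p+pp) r (r+s) (M:ℤ) (L:ℤ) (L:ℤ) J (by omega) hr0 hp hJout]
  -- Step B : inner X's as finite sums over J
  have hB : ∀ i ∈ Finset.range (M+1), X p pp r s (i:ℤ) ((L:ℤ) - i)
      = ∑ j ∈ J, XW p pp r s (i:ℤ) ((L:ℤ)-i) (i:ℤ) ((L:ℤ)-i) j := by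
    intro i hi
    simp only [Finset.mem_range] at hi
    apply X4_eq_sum p pp r s (i:ℤ) ((L:ℤ)-i) ((L:ℤ)-i) J (by omega) hr0 hp
    intro j hj
    have := hJout j hj
    omega
  -- Step C : expand each XW over i via the key per-term lemma
  have hC : ∀ j : ℤ, XW p (p+pp) r (r+s) (M:ℤ) (L:ℤ) (M:ℤ) (L:ℤ) j
      = ∑ i ∈ Finset.range (M+1), q ^ ((i:ℤ)^2) * binq (2*L+M-(i:ℤ)) (2*L) *
          XW p pp r s (i:ℤ) ((L:ℤ)-i) (i:ℤ) ((L:ℤ)-i) j := by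
    intro j
    have hsign1 : (0 ≤ p*j ∧ 0 ≤ pp*j) ∨ (p*j ≤ 0 ∧ pp*j ≤ 0) := by
      rcases le_or_gt 0 j with h | h
      · exact Or.inl ⟨mul_nonneg (by omega) h, mul_nonneg (by omega) h⟩
      · refine Or.inr ⟨?_, ?_⟩ <;> nlinarith
    have hsign2 : (0 ≤ p*j+r ∧ 0 ≤ pp*j+s) ∨ (p*j+r ≤ 0 ∧ pp*j+s ≤ 0) := by
      rcases le_or_gt 0 j with h | h
      · refine Or.inl ⟨?_, ?_⟩ <;> nlinarith [mul_nonneg (show (0:ℤ) ≤ p by omega) h,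
          mul_nonneg (show (0:ℤ) ≤ pp by omega) h]
      · refine Or.inr ⟨?_, ?_⟩ <;> nlinarith [mul_le_mul_of_nonneg_left (show j ≤ -1 by omega)
          (show (0:ℤ) ≤ p by omega), mul_le_mul_of_nonneg_left (show j ≤ -1 by omega)
          (show (0:ℤ) ≤ pp by omega)]
    unfold XW
    rw [show ((p:ℤ)+pp-p)*j = pp*j by ring]
    rw [show (M:ℤ)+L-pp*j+r-(r+s) = (M:ℤ)+L-(pp*j+s) by ring,
      show (M:ℤ)+L+pp*j-r+(r+s) = (M:ℤ)+L+(pp*j+s) by ring,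
      show (M:ℤ)+p*j+r = (M:ℤ)+(p*j+r) by ring,
      show (M:ℤ)-p*j-r = (M:ℤ)-(p*j+r) by ring]
    rw [mul_assoc (q ^ (j * (p * (p + pp) * j + (p + pp) * ((M:ℤ) - (M:ℤ) + r) - p * (r + s))))
        (binq ((M:ℤ)+L-pp*j) ((M:ℤ)+p*j)) (binq ((M:ℤ)+L+pp*j) ((M:ℤ)-p*j)),
      mul_assoc (q ^ ((p * j + (M:ℤ) - (M:ℤ) + r) * ((p + pp) * j + (r + s))))
        (binq ((M:ℤ)+L-(pp*j+s)) ((M:ℤ)+(p*j+r))) (binq ((M:ℤ)+L+(pp*j+s)) ((M:ℤ)-(p*j+r))),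
      key_term L M (p*j) (pp*j) hsign1,
      key_term L M (p*j+r) (pp*j+s) hsign2]
    unfold SS
    rw [Finset.mul_sum, Finset.mul_sum, ← Finset.sum_sub_distrib]
    refine Finset.sum_congr rfl fun i hi => ?_
    unfold tS
    rw [show ((pp:ℤ)-p)*j = pp*j - p*j by ring]
    rw [show (i:ℤ)+((L:ℤ)-i)-(pp*j-p*j)+r-s = (L:ℤ)-(pp*j+s)+(p*j+r) by ring,
      show (i:ℤ)+((L:ℤ)-i)+(pp*j-p*j)-r+s = (L:ℤ)+(pp*j+s)-(p*j+r) by ring,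
      show (i:ℤ)+((L:ℤ)-i)-(pp*j-p*j) = (L:ℤ)-pp*j+p*j by ring,
      show (i:ℤ)+((L:ℤ)-i)+(pp*j-p*j) = (L:ℤ)+pp*j-p*j by ring,
      show (i:ℤ)+p*j+r = (i:ℤ)+(p*j+r) by ring,
      show (i:ℤ)-p*j-r = (i:ℤ)-(p*j+r) by ring,
      show (L:ℤ)-pp*j+((L:ℤ)+pp*j)+(M:ℤ)-(i:ℤ) = 2*(L:ℤ)+(M:ℤ)-(i:ℤ) by ring,
      show (L:ℤ)-pp*j+((L:ℤ)+pp*j) = 2*(L:ℤ) by ring,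
      show (L:ℤ)-(pp*j+s)+((L:ℤ)+(pp*j+s))+(M:ℤ)-(i:ℤ) = 2*(L:ℤ)+(M:ℤ)-(i:ℤ) by ring,
      show (L:ℤ)-(pp*j+s)+((L:ℤ)+(pp*j+s)) = 2*(L:ℤ) by ring]
    rw [← mul_assoc (q ^ (j * (p * (p + pp) * j + (p + pp) * ((M:ℤ) - (M:ℤ) + r) - p * (r + s))))
        (q ^ ((i:ℤ)^2 - (p*j)^2))
        (binq (2*(L:ℤ)+(M:ℤ)-(i:ℤ)) (2*(L:ℤ)) * binq ((L:ℤ)-pp*j+p*j) ((i:ℤ)+p*j) *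
          binq ((L:ℤ)+pp*j-p*j) ((i:ℤ)-p*j)),
      ← qz_add (j * (p * (p + pp) * j + (p + pp) * ((M:ℤ) - (M:ℤ) + r) - p * (r + s)))
        ((i:ℤ)^2 - (p*j)^2),
      show j * (p * (p + pp) * j + (p + pp) * ((M:ℤ) - (M:ℤ) + r) - p * (r + s)) + ((i:ℤ)^2 - (p*j)^2)
        = (i:ℤ)^2 + (j * (p * pp * j + pp * ((i:ℤ) - (i:ℤ) + r) - p * s)) by ring,
      qz_add ((i:ℤ)^2) (j * (p * pp * j + pp * ((i:ℤ) - (i:ℤ) + r) - p * s))]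
    rw [← mul_assoc (q ^ ((p * j + (M:ℤ) - (M:ℤ) + r) * ((p + pp) * j + (r + s))))
        (q ^ ((i:ℤ)^2 - (p*j+r)^2))
        (binq (2*(L:ℤ)+(M:ℤ)-(i:ℤ)) (2*(L:ℤ)) * binq ((L:ℤ)-(pp*j+s)+(p*j+r)) ((i:ℤ)+(p*j+r)) *
          binq ((L:ℤ)+(pp*j+s)-(p*j+r)) ((i:ℤ)-(p*j+r))),
      ← qz_add ((p * j + (M:ℤ) - (M:ℤ) + r) * ((p + pp) * j + (r + s))) ((i:ℤ)^2 - (p*j+r)^2),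
      show (p * j + (M:ℤ) - (M:ℤ) + r) * ((p + pp) * j + (r + s)) + ((i:ℤ)^2 - (p*j+r)^2)
        = (i:ℤ)^2 + ((p * j + (i:ℤ) - (i:ℤ) + r) * (pp * j + s)) by ring,
      qz_add ((i:ℤ)^2) ((p * j + (i:ℤ) - (i:ℤ) + r) * (pp * j + s))]
    ring
  calc ∑ j ∈ J, XW p (p+pp) r (r+s) (M:ℤ) (L:ℤ) (M:ℤ) (L:ℤ) j
      = ∑ j ∈ J, ∑ i ∈ Finset.range (M+1), q ^ ((i:ℤ)^2) * binq (2*L+M-(i:ℤ)) (2*L) *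
          XW p pp r s (i:ℤ) ((L:ℤ)-i) (i:ℤ) ((L:ℤ)-i) j :=
        Finset.sum_congr rfl fun j _ => hC j
    _ = ∑ i ∈ Finset.range (M+1), ∑ j ∈ J, q ^ ((i:ℤ)^2) * binq (2*L+M-(i:ℤ)) (2*L) *
          XW p pp r s (i:ℤ) ((L:ℤ)-i) (i:ℤ) ((L:ℤ)-i) j := Finset.sum_comm
    _ = _ := by
        refine Finset.sum_congr rfl fun i hi => ?_
        rw [hB i hi, Finset.mul_sum]

end Stmt11
end
end

section
/- Burge reflection symmetry: for all integers p, p' ≥ 1 and all integers r, s, M1, L1, M2, L2 with M1, M2, L1, L2 ≥ 0, X_{r,s}^{(p,p')}(M1,L1,M2,L2) = X_{s−L1+L2, r+M1−M2}^{(p',p)}(L1,M1,L2,M2). -/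
/-!
Substituting `j ↦ -j` in the first sum of `X^{(p',p)}` and using `binq n k = binq n (n - k)` on
both binomials recovers the first sum of `X^{(p,p')}` term by term; in the second sum the same
symmetry simply exchanges the two binomials, with no reindexing. The split of the `finsum` into
its two halves is legitimate because in each half `p * j` is confined to a bounded interval.
-/

noncomputable section

namespace Stmt13

abbrev K : Type := RatFunc ℚ

def q : K := RatFunc.X

def poch (n : ℕ) : K := ∏ k ∈ Finset.range n, (1 - q ^ (k + 1))

def binq (n k : ℤ) : K :=
  if 0 ≤ k ∧ k ≤ n then poch n.toNat / (poch k.toNat * poch (n - k).toNat) else 0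

/-- The Burge polynomial `X_{r,s}^{(p,p')}(M₁,L₁,M₂,L₂)`; the sum over
`j ∈ ℤ` has finite support (for `p ≥ 1`), hence is written as a `finsum`. -/
def X4 (p p' r s M1 L1 M2 L2 : ℤ) : K :=
  ∑ᶠ j : ℤ,
    (q ^ (j * (p * p' * j + p' * (M1 - M2 + r) - p * s)) *
        binq (M1 + L1 - (p' - p) * j) (M1 + p * j) *
        binq (M2 + L2 + (p' - p) * j) (M2 - p * j)
      - q ^ ((p * j + M1 - M2 + r) * (p' * j + s)) *
        binq (M1 + L1 - (p' - p) * j + r - s) (M1 + p * j + r) *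
        binq (M2 + L2 + (p' - p) * j - r + s) (M2 - p * j - r))

/-- The symmetric Burge polynomial `X_{r,s}^{(p,p')}(M,L) = X_{r,s}^{(p,p')}(M,L,M,L)`. -/
def X (p p' r s M L : ℤ) : K := X4 p p' r s M L M L

theorem binq_symm (n k : ℤ) : binq n k = binq n (n - k) := by
  unfold binq
  by_cases h : 0 ≤ k ∧ k ≤ n
  · rw [if_pos h, if_pos ⟨by omega, by omega⟩, sub_sub_cancel, mul_comm]
  · rw [if_neg h, if_neg (by omega)]

theorem le_of_binq_ne_zero {n k : ℤ} (h : binq n k ≠ 0) : 0 ≤ k ∧ k ≤ n := by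
  by_contra hc
  exact h (if_neg hc)

theorem finite_setOf_mul_mem_Icc {p : ℤ} (hp : p ≠ 0) (a b : ℤ) :
    {j : ℤ | p * j ∈ Set.Icc a b}.Finite :=
  (Set.finite_Icc a b).preimage (mul_right_injective₀ hp).injOn

section Summands

variable (p p' r s M1 L1 M2 L2 : ℤ)

def burgeMain (j : ℤ) : K :=
  q ^ (j * (p * p' * j + p' * (M1 - M2 + r) - p * s)) *
    binq (M1 + L1 - (p' - p) * j) (M1 + p * j) *
    binq (M2 + L2 + (p' - p) * j) (M2 - p * j)

def burgeShifted (j : ℤ) : K :=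
  q ^ ((p * j + M1 - M2 + r) * (p' * j + s)) *
    binq (M1 + L1 - (p' - p) * j + r - s) (M1 + p * j + r) *
    binq (M2 + L2 + (p' - p) * j - r + s) (M2 - p * j - r)

theorem X4_eq_finsum :
    X4 p p' r s M1 L1 M2 L2 =
      ∑ᶠ j, (burgeMain p p' r s M1 L1 M2 L2 j - burgeShifted p p' r s M1 L1 M2 L2 j) :=
  rfl

variable {p}

theorem finite_support_burgeMain (hp : p ≠ 0) :
    (Function.support (burgeMain p p' r s M1 L1 M2 L2)).Finite := by
  refine (finite_setOf_mul_mem_Icc hp (-M1) M2).subset fun j hj => ?_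
  rw [Function.mem_support, burgeMain] at hj
  have h1 := le_of_binq_ne_zero (right_ne_zero_of_mul (left_ne_zero_of_mul hj))
  have h2 := le_of_binq_ne_zero (right_ne_zero_of_mul hj)
  exact ⟨by omega, by omega⟩

theorem finite_support_burgeShifted (hp : p ≠ 0) :
    (Function.support (burgeShifted p p' r s M1 L1 M2 L2)).Finite := by
  refine (finite_setOf_mul_mem_Icc hp (-M1 - r) (M2 - r)).subset fun j hj => ?_
  rw [Function.mem_support, burgeShifted] at hj
  have h1 := le_of_binq_ne_zero (right_ne_zero_of_mul (left_ne_zero_of_mul hj))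
  have h2 := le_of_binq_ne_zero (right_ne_zero_of_mul hj)
  exact ⟨by omega, by omega⟩

end Summands

section Reflection

variable (p p' r s M1 L1 M2 L2 j : ℤ)

theorem burgeMain_reflect :
    burgeMain p' p (s - L1 + L2) (r + M1 - M2) L1 M1 L2 M2 j =
      burgeMain p p' r s M1 L1 M2 L2 (-j) := by
  unfold burgeMain
  rw [binq_symm (L1 + M1 - _), binq_symm (L2 + M2 + _)]
  congr 2 <;> ring_nf

theorem burgeShifted_reflect :
    burgeShifted p' p (s - L1 + L2) (r + M1 - M2) L1 M1 L2 M2 j =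
      burgeShifted p p' r s M1 L1 M2 L2 j := by
  unfold burgeShifted
  rw [binq_symm (M1 + L1 - (p' - p) * j + r - s), binq_symm (M2 + L2 + (p' - p) * j - r + s),
    mul_right_comm]
  congr 2 <;> ring_nf

end Reflection

theorem burge_reflection_general (p pp r s M1 L1 M2 L2 : ℤ) (hp : 1 ≤ p) :
    X4 p pp r s M1 L1 M2 L2 = X4 pp p (s - L1 + L2) (r + M1 - M2) L1 M1 L2 M2 := by
  have hp0 : p ≠ 0 := by omega
  set f := burgeMain p pp r s M1 L1 M2 L2
  set g := burgeShifted p pp r s M1 L1 M2 L2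
  have hf := finite_support_burgeMain pp r s M1 L1 M2 L2 hp0
  have hg := finite_support_burgeShifted pp r s M1 L1 M2 L2 hp0
  have hf_neg : (Function.support fun j => f (-j)).Finite :=
    hf.preimage neg_injective.injOn
  calc X4 p pp r s M1 L1 M2 L2
      = ∑ᶠ j, f j - ∑ᶠ j, g j := finsum_sub_distrib hf hg
    _ = ∑ᶠ j, f (-j) - ∑ᶠ j, g j := by rw [← finsum_comp_equiv (Equiv.neg ℤ)]; rfl
    _ = ∑ᶠ j, (f (-j) - g j) := (finsum_sub_distrib hf_neg hg).symm
    _ = X4 pp p (s - L1 + L2) (r + M1 - M2) L1 M1 L2 M2 := by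
      simp only [X4_eq_finsum, burgeMain_reflect, burgeShifted_reflect, f, g]

theorem burge_reflection (p pp r s M1 L1 M2 L2 : ℤ) (hp : 1 ≤ p) (hpp : 1 ≤ pp)
    (hM1 : 0 ≤ M1) (hL1 : 0 ≤ L1) (hM2 : 0 ≤ M2) (hL2 : 0 ≤ L2) :
    X4 p pp r s M1 L1 M2 L2 = X4 pp p (s - L1 + L2) (r + M1 - M2) L1 M1 L2 M2 :=
  burge_reflection_general p pp r s M1 L1 M2 L2 hp

end Stmt13
end
end

section
/- Interchange principle for (conjugate) Bailey pairs: suppose (α, β) is a Bailey pair relative to a, i.e. β_L = ∑_{i=0}^{L} α_i / ((q)_{L−i} (aq)_{L+i}) for all L ≥ 0, and (γ, δ) is a conjugate Bailey pair relative to a, i.e. γ_L = ∑_{r=L}^{∞} δ_r / ((q)_{r−L} (aq)_{r+L}) for all L ≥ 0. Then ∑_{L=0}^{∞} α_L γ_L = ∑_{L=0}^{∞} β_L δ_L, provided all series converge absolutely (e.g. as formal power series with suitable finiteness, or for |q| < 1 with appropriate decay of δ). -/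
/-!
Both sides are sums of the absolutely summable triangular array
`α_i δ_n / ((q)_{n-i} (aq)_{n+i})`, `0 ≤ i ≤ n`: summing each row `i = L` gives `α_L γ_L` by the
conjugate Bailey pair relation, summing each column `n` gives `β_n δ_n` by the Bailey pair relation.
-/

noncomputable section

namespace Stmt16

/-- `(x; q)`-type product `∏_{k=1}^n (1 - x q^k)`. -/
def P (x q : ℂ) (n : ℕ) : ℂ := ∏ k ∈ Finset.range n, (1 - x * q ^ (k + 1))

open Finset

section Summation

variable {E : Type*} [AddCommMonoid E] [TopologicalSpace E] [ContinuousAdd E] [T3Space E]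

theorem _root_.Summable.tsum_eq_tsum_sum_antidiagonal {A : Type*} [AddMonoid A] [HasAntidiagonal A]
    {f : A × A → E} (hf : Summable f) :
    ∑' p, f p = ∑' n, ∑ kl ∈ antidiagonal n, f kl := by
  simp_rw [← sum_finset_coe (f := f), ← tsum_fintype (L := .unconditional _)]
  rw [← HasAntidiagonal.sigmaAntidiagonalEquivProd.tsum_eq f]
  exact (HasAntidiagonal.sigmaAntidiagonalEquivProd.summable_iff.mpr hf).tsum_sigma'
    fun n ↦ (hasSum_fintype _).summable

theorem _root_.Summable.tsum_tsum_add_eq_tsum_sum_range {F : ℕ → ℕ → E}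
    (hF : Summable fun p : ℕ × ℕ ↦ F p.1 (p.1 + p.2)) (hrow : ∀ i, Summable fun j ↦ F i (i + j)) :
    ∑' i, ∑' j, F i (i + j) = ∑' n, ∑ i ∈ range (n + 1), F i n := by
  rw [← hF.tsum_prod' hrow, hF.tsum_eq_tsum_sum_antidiagonal]
  refine tsum_congr fun n ↦ ?_
  rw [Nat.sum_antidiagonal_eq_sum_range_succ (fun i j ↦ F i (i + j))]
  exact sum_congr rfl fun i hi ↦ by rw [Nat.add_sub_cancel' (Nat.lt_succ_iff.mp (mem_range.mp hi))]

end Summation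

theorem tsum_mul_eq_tsum_mul_of_kernel {R : Type*} [CommSemiring R] [TopologicalSpace R]
    [IsTopologicalSemiring R] [T3Space R] (K : ℕ → ℕ → R) {α β γ δ : ℕ → R}
    (hβ : ∀ n, β n = ∑ i ∈ range (n + 1), α i * K i n)
    (hγ : ∀ L, HasSum (fun j ↦ δ (L + j) * K L (L + j)) (γ L))
    (hsum : Summable fun p : ℕ × ℕ ↦ α p.1 * (δ (p.1 + p.2) * K p.1 (p.1 + p.2))) :
    ∑' L, α L * γ L = ∑' n, β n * δ n := by
  have hrow (L : ℕ) : HasSum (fun j ↦ α L * (δ (L + j) * K L (L + j))) (α L * γ L) :=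
    (hγ L).mul_left (α L)
  calc ∑' L, α L * γ L = ∑' L, ∑' j, α L * (δ (L + j) * K L (L + j)) :=
        tsum_congr fun L ↦ (hrow L).tsum_eq.symm
    _ = ∑' n, ∑ i ∈ range (n + 1), α i * (δ n * K i n) :=
        hsum.tsum_tsum_add_eq_tsum_sum_range (F := fun i n ↦ α i * (δ n * K i n))
          fun L ↦ (hrow L).summable
    _ = ∑' n, β n * δ n := by
        simp_rw [hβ, sum_mul, mul_left_comm _ (δ _), mul_comm (δ _)]

theorem bailey_interchange (q a : ℂ) (α β γ δ : ℕ → ℂ)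
    (hβ : ∀ L, β L = ∑ i ∈ Finset.range (L + 1),
        α i / (P 1 q (L - i) * P a q (L + i)))
    (hγ : ∀ L, HasSum
        (fun j : ℕ => δ (L + j) / (P 1 q j * P a q (2 * L + j))) (γ L))
    (habs : Summable (fun p : ℕ × ℕ =>
        ‖α p.1 * (δ (p.1 + p.2) / (P 1 q p.2 * P a q (2 * p.1 + p.2)))‖)) :
    ∑' L, α L * γ L = ∑' L, β L * δ L := by
  have hK (L j : ℕ) :
      (P 1 q (L + j - L) * P a q (L + j + L))⁻¹ = (P 1 q j * P a q (2 * L + j))⁻¹ := by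
    rw [Nat.add_sub_cancel_left, two_mul, add_right_comm]
  refine tsum_mul_eq_tsum_mul_of_kernel (fun i n ↦ (P 1 q (n - i) * P a q (n + i))⁻¹)
    (by simpa only [div_eq_mul_inv] using hβ) (by simpa only [hK, div_eq_mul_inv] using hγ) ?_
  simpa only [hK, div_eq_mul_inv] using habs.of_norm

end Stmt16
end
end

section
/- Durfee-dissection/string-function identity for level 2: for σ ∈ {0,1} and ℓ an integer with ℓ + 2σ even (so ℓ even), ∑_{i=0}^{∞} q^{i(i+ℓ)/2} / ((q)_i (q)_{i+ℓ}) · ∑_{n ≥ 0, n ≡ i + ℓ/2 + σ (mod 2)} q^{n²/2} binq(m+n, n) = (1/(q)_∞) · ∑_{η ≥ 0, η ≡ ℓ/2 + σ (mod 2)} q^{η²/2} / (q)_η, where m = i + ℓ/2 − n (terms with m < 0 vanish since then binq(m+n,n) = 0), as formal power series in q^{1/2} (all exponents combine to integers). -/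
/-!
STATEMENT 18: the `N = 2` (level-2) Durfee-dissection / string-function
identity of Schilling–Warnaar (the `L₁, L₂, M → ∞` limit of the generalized
q-Saalschütz sum):
`∑_{i≥0} q^{i(i+ℓ)/2}/((q)_i (q)_{i+ℓ}) ∑_{n≥0, n≡i+ℓ/2+σ (2)} q^{n²/2} binq(m+n, n)
  = (1/(q)_∞) ∑_{η≥0, η≡ℓ/2+σ (2)} q^{η²/2}/(q)_η`
with `m = i + ℓ/2 − n`, `ℓ = 2*l2` even, `σ ∈ {0,1}`, as formal power series
in `t = q^{1/2}` (so `q = t²`), stated coefficient-wise.  Terms with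
`m < 0` or `i + ℓ < 0` vanish (`binq(m+n,n) = 0` and `1/(q)_n := 0` for
`n < 0`), and `tp e` denotes `t^e` for `e ≥ 0` (junk value `0` for `e < 0`,
which only occurs in terms that vanish anyway).  For the `d`-th coefficient,
the outer sum may be truncated at `i ≤ d + |ℓ|` (term `i` has `t`-order
`≥ i(i+ℓ) > d` beyond that), the `η`-sum at `η ≤ d` (order `η² > d` beyond),
and `1/(q)_∞` replaced by `1/(q)_d` (further factors do not affect
coefficients up to degree `d`).
-/

noncomputable section

namespace Stmt18

abbrev K : Type := PowerSeries ℚ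

/-- `t = q^{1/2}`. -/
def t : K := PowerSeries.X

/-- `t^e` for `e ≥ 0` (and junk value `0` for `e < 0`). -/
def tp (e : ℤ) : K := if 0 ≤ e then t ^ e.toNat else 0

/-- `(q;q)_n` with `q = t²`. -/
def poch (n : ℕ) : K := ∏ k ∈ Finset.range n, (1 - t ^ (2 * (k + 1)))

/-- `1/(q)_n`, zero for `n < 0`. -/
def pochInv (n : ℤ) : K := if 0 ≤ n then (poch n.toNat)⁻¹ else 0

/-- Gaussian binomial with `q = t²`, zero unless `0 ≤ k ≤ n`. -/
def binq (n k : ℤ) : K :=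
  if 0 ≤ k ∧ k ≤ n then poch n.toNat * ((poch k.toNat)⁻¹ * (poch (n - k).toNat)⁻¹) else 0

/-! ### infrastructure -/

lemma const_poch (n : ℕ) : PowerSeries.constantCoeff (poch n) = 1 := by
  rw [poch, map_prod]
  apply Finset.prod_eq_one
  intro k _
  simp [t, PowerSeries.constantCoeff_X, pow_succ]

lemma poch_ne_zero (n : ℕ) : poch n ≠ 0 := fun h => by
  have := const_poch n; rw [h] at this; simp at this

lemma poch_mul_inv (n : ℕ) : poch n * (poch n)⁻¹ = 1 :=
  PowerSeries.mul_inv_cancel _ (by rw [const_poch]; exact one_ne_zero)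

abbrev pinv (n : ℕ) : K := (poch n)⁻¹

lemma poch_succ (n : ℕ) : poch (n + 1) = poch n * (1 - t ^ (2 * (n + 1))) :=
  Finset.prod_range_succ _ n

lemma pinv_mul_poch_succ (n : ℕ) : pinv n * poch (n + 1) = 1 - t ^ (2 * (n + 1)) := by
  rw [poch_succ, ← mul_assoc, mul_comm (pinv n), poch_mul_inv, one_mul]

lemma pinv_poch (n : ℕ) : pinv n * poch n = 1 := by rw [mul_comm]; exact poch_mul_inv n

lemma pinv_succ_mul (n : ℕ) : (1 - t ^ (2 * (n + 1))) * pinv (n + 1) = pinv n := by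
  apply mul_right_cancel₀ (poch_ne_zero (n+1))
  rw [mul_assoc, pinv_poch, mul_one]
  exact (pinv_mul_poch_succ n).symm

lemma poch_add (m n : ℕ) :
    poch (m + n) = poch m * ∏ k ∈ Finset.range n, (1 - t ^ (2 * (m + k + 1))) := by
  rw [poch, poch, Finset.prod_range_add]

/-- congruence mod `t^(d+1)` -/
def MD (d : ℕ) (f g : K) : Prop := (PowerSeries.X : K) ^ (d + 1) ∣ f - g

lemma MD.refl {d : ℕ} (f : K) : MD d f f := by simp [MD]

lemma MD.symm {d : ℕ} {f g : K} (h : MD d f g) : MD d g f := by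
  simpa [MD] using (dvd_neg.2 h)

lemma MD.trans {d : ℕ} {f g h : K} (h1 : MD d f g) (h2 : MD d g h) : MD d f h := by
  have := dvd_add h1 h2
  simpa [MD] using this

lemma MD.add {d : ℕ} {f g f' g' : K} (h1 : MD d f f') (h2 : MD d g g') :
    MD d (f + g) (f' + g') := by
  have := dvd_add h1 h2
  have e : f - f' + (g - g') = f + g - (f' + g') := by ring
  rwa [e] at this

lemma MD.mul {d : ℕ} {f g f' g' : K} (h1 : MD d f f') (h2 : MD d g g') :
    MD d (f * g) (f' * g') := by
  have : f * g - f' * g' = f * (g - g') + (f - f') * g' := by ring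
  rw [MD, this]
  exact dvd_add (Dvd.dvd.mul_left h2 f) (Dvd.dvd.mul_right h1 g')

lemma MD.sum {d : ℕ} {s : Finset ℕ} {f g : ℕ → K} (h : ∀ i ∈ s, MD d (f i) (g i)) :
    MD d (∑ i ∈ s, f i) (∑ i ∈ s, g i) := by
  rw [MD, ← Finset.sum_sub_distrib]
  exact Finset.dvd_sum h

lemma MD.of_dvd {d : ℕ} {f g : K} (h1 : (PowerSeries.X : K) ^ (d+1) ∣ f)
    (h2 : (PowerSeries.X : K) ^ (d+1) ∣ g) : MD d f g := dvd_sub h1 h2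

lemma dvd_tpow {d e : ℕ} (h : d + 1 ≤ e) : (PowerSeries.X : K) ^ (d+1) ∣ t ^ e := by
  rw [t]
  exact pow_dvd_pow _ h

lemma MD.coeff {d : ℕ} {f g : K} (h : MD d f g) :
    PowerSeries.coeff d f = PowerSeries.coeff d g := by
  rw [MD, PowerSeries.X_pow_dvd_iff] at h
  have := h d (Nat.lt_succ_self d)
  rw [map_sub] at this
  linarith

/-- `∏_{k=m}^{m+n-1} (1 - q^{k+1}) ≡ 1 mod t^{2(m+1)}` -/
lemma prod_tail_md (m n : ℕ) :
    (PowerSeries.X : K) ^ (2 * (m+1)) ∣ (∏ k ∈ Finset.range n, (1 - t ^ (2 * (m + k + 1)))) - 1 := by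
  induction n with
  | zero => simp
  | succ n ih =>
    rw [Finset.prod_range_succ]
    have key : (∏ k ∈ Finset.range n, (1 - t ^ (2 * (m + k + 1)))) * (1 - t ^ (2 * (m + n + 1))) - 1
        = ((∏ k ∈ Finset.range n, (1 - t ^ (2 * (m + k + 1)))) - 1) * (1 - t ^ (2 * (m + n + 1)))
          - t ^ (2 * (m + n + 1)) := by ring
    rw [key]
    apply dvd_sub
    · exact Dvd.dvd.mul_right ih _
    · rw [t]; exact pow_dvd_pow _ (by omega)

/-- `pinv m ≡ pinv n mod t^{2(m+1)}` for `m ≤ n`. -/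
lemma pinv_md (m n : ℕ) (h : m ≤ n) :
    (PowerSeries.X : K) ^ (2 * (m+1)) ∣ pinv m - pinv n := by
  obtain ⟨r, rfl⟩ := Nat.exists_eq_add_of_le h
  set R : K := ∏ k ∈ Finset.range r, (1 - t ^ (2 * (m + k + 1))) with hR
  have h1 : pinv m * poch (m + r) = R := by
    rw [poch_add, ← mul_assoc, pinv_poch, one_mul]
  have hp : pinv m = R * pinv (m + r) := by
    have h2 := congrArg (· * pinv (m + r)) h1
    simpa [mul_assoc, poch_mul_inv] using h2
  have : pinv m - pinv (m + r) = (R - 1) * pinv (m + r) := by rw [hp]; ring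
  rw [this]
  exact Dvd.dvd.mul_right (prod_tail_md m r) _


/-! ### q-Pascal and Rogers–Szegő -/

def binqN (s n : ℕ) : K := if n ≤ s then poch s * (pinv n * pinv (s - n)) else 0

lemma pinv_zero : pinv 0 = 1 := by
  show (poch 0)⁻¹ = 1
  have : poch 0 = 1 := by rw [poch]; simp
  rw [this, inv_one]

lemma binqN_zero (s : ℕ) : binqN s 0 = 1 := by
  rw [binqN, if_pos (Nat.zero_le s), Nat.sub_zero, pinv_zero, one_mul, poch_mul_inv]

lemma binqN_self (s : ℕ) : binqN s s = 1 := by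
  rw [binqN, if_pos le_rfl, Nat.sub_self, pinv_zero, mul_one, poch_mul_inv]

lemma binqN_of_gt {s n : ℕ} (h : s < n) : binqN s n = 0 := by
  rw [binqN, if_neg (by omega)]

lemma pascal (s n : ℕ) (h : n ≤ s) :
    binqN (s + 1) (n + 1) = binqN s (n + 1) + t ^ (2 * (s - n)) * binqN s n := by
  apply mul_right_cancel₀ (poch_ne_zero (n + 1))
  apply mul_right_cancel₀ (poch_ne_zero (s - n))
  have e1 : binqN (s+1) (n+1) * poch (n+1) * poch (s - n) = poch (s + 1) := by
    rw [binqN, if_pos (by omega)]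
    have : s + 1 - (n + 1) = s - n := by omega
    rw [this]
    calc poch (s+1) * (pinv (n+1) * pinv (s-n)) * poch (n+1) * poch (s-n)
        = poch (s+1) * ((pinv (n+1) * poch (n+1)) * (pinv (s-n) * poch (s-n))) := by ring
      _ = poch (s+1) := by rw [pinv_poch, pinv_poch]; ring
  have e2 : binqN s (n+1) * poch (n+1) * poch (s - n) = poch s * (1 - t ^ (2 * (s - n))) := by
    rcases Nat.lt_or_ge n s with hlt | hge
    · rw [binqN, if_pos (by omega)]
      obtain ⟨r, hr⟩ : ∃ r, s - n = r + 1 := ⟨s - n - 1, by omega⟩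
      have hsn : s - (n+1) = r := by omega
      rw [hsn, hr]
      calc poch s * (pinv (n+1) * pinv r) * poch (n+1) * poch (r+1)
          = poch s * ((pinv (n+1) * poch (n+1)) * (pinv r * poch (r+1))) := by ring
        _ = poch s * (1 - t ^ (2 * (r+1))) := by rw [pinv_poch, pinv_mul_poch_succ, one_mul]
    · have hs : n = s := le_antisymm h hge
      subst hs
      rw [binqN_of_gt (by omega)]
      simp
  have e3 : (t ^ (2 * (s - n)) * binqN s n) * poch (n+1) * poch (s - n)
      = poch s * (t ^ (2 * (s-n)) * (1 - t ^ (2 * (n+1)))) := by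
    rw [binqN, if_pos h]
    calc t ^ (2*(s-n)) * (poch s * (pinv n * pinv (s-n))) * poch (n+1) * poch (s-n)
        = poch s * (t ^ (2*(s-n)) * ((pinv n * poch (n+1)) * (pinv (s-n) * poch (s-n)))) := by ring
      _ = poch s * (t ^ (2*(s-n)) * (1 - t ^ (2*(n+1)))) := by
          rw [pinv_mul_poch_succ, pinv_poch, mul_one]
  rw [e1, add_mul, add_mul, e2, e3, poch_succ]
  have hexp : 2 * (s - n) + 2 * (n + 1) = 2 * (s + 1) := by omega
  have hA : t ^ (2*(s-n)) * t ^ (2*(n+1)) = t ^ (2*(s+1)) := by rw [← pow_add, hexp]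
  rw [← hA]
  generalize t ^ (2*(s-n)) = A
  ring

def Pi' (x : ℚ) (s : ℕ) : K :=
  ∏ k ∈ Finset.range s, (1 + PowerSeries.C x * t ^ (2 * k + 1))

lemma rsz (x : ℚ) (s : ℕ) :
    ∑ n ∈ Finset.range (s + 1), (PowerSeries.C x) ^ n * t ^ (n ^ 2) * binqN s n
      = Pi' x s := by
  induction s with
  | zero => simp [Pi', binqN_zero]
  | succ s ih =>
    rw [Finset.sum_range_succ' (fun n => (PowerSeries.C x) ^ n * t ^ (n ^ 2) * binqN (s+1) n)]
    have ht0 : (PowerSeries.C x) ^ 0 * t ^ (0 ^ 2) * binqN (s+1) 0 = 1 := by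
      rw [binqN_zero]; norm_num
    have hterm : ∀ n ∈ Finset.range (s + 1),
        (PowerSeries.C x) ^ (n+1) * t ^ ((n+1) ^ 2) * binqN (s+1) (n+1)
          = (PowerSeries.C x) ^ (n+1) * t ^ ((n+1) ^ 2) * binqN s (n+1)
            + (PowerSeries.C x * t ^ (2*s+1))
              * ((PowerSeries.C x) ^ n * t ^ (n ^ 2) * binqN s n) := by
      intro n hn
      rw [Finset.mem_range] at hn
      have hns : n ≤ s := by omega
      rw [pascal s n hns, mul_add]
      congr 1
      have hexp : (n+1)^2 + 2 * (s - n) = (2*s+1) + n^2 := by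
        have : n ≤ s := hns
        nlinarith [Nat.sub_add_cancel this]
      calc (PowerSeries.C x) ^ (n+1) * t ^ ((n+1)^2) * (t ^ (2*(s-n)) * binqN s n)
          = (PowerSeries.C x) ^ (n+1) * t ^ ((n+1)^2 + 2*(s-n)) * binqN s n := by
            rw [pow_add]; ring
        _ = (PowerSeries.C x) ^ (n+1) * t ^ ((2*s+1) + n^2) * binqN s n := by rw [hexp]
        _ = (PowerSeries.C x * t ^ (2*s+1)) * ((PowerSeries.C x) ^ n * t ^ (n^2) * binqN s n) := by
            rw [pow_add, pow_succ]; ring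
    rw [Finset.sum_congr rfl hterm, Finset.sum_add_distrib, ← Finset.mul_sum, ih]
    have hshift : ∑ n ∈ Finset.range (s+1),
        (PowerSeries.C x) ^ (n+1) * t ^ ((n+1) ^ 2) * binqN s (n+1)
          = Pi' x s - 1 := by
      have h2 : ∑ n ∈ Finset.range (s+2), (PowerSeries.C x) ^ n * t ^ (n ^ 2) * binqN s n
          = Pi' x s := by
        rw [Finset.sum_range_succ, binqN_of_gt (by omega), ih]
        simp
      rw [Finset.sum_range_succ' (fun n => (PowerSeries.C x) ^ n * t ^ (n ^ 2) * binqN s n)] at h2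
      have ht0' : (PowerSeries.C x) ^ 0 * t ^ (0 ^ 2) * binqN s 0 = 1 := by
        rw [binqN_zero]; norm_num
      rw [ht0'] at h2
      rw [← h2]; ring
    have hP : Pi' x (s+1) = (1 + PowerSeries.C x * t ^ (2*s+1)) * Pi' x s := by
      rw [Pi', Pi', Finset.prod_range_succ]; ring
    rw [hshift, ht0, hP]
    ring

/-! ### telescoping -/

def Tm (x : ℚ) (a s : ℕ) : K :=
  if a ≤ s then
    (PowerSeries.C x) ^ (s - a) * t ^ (s ^ 2 - a ^ 2) * Pi' x s * pinv (s - a) * pinv (s + a)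
  else 0

def Um (x : ℚ) (a s : ℕ) : K :=
  if a + 1 ≤ s then
    (PowerSeries.C x) ^ (s - (a+1)) * t ^ (s ^ 2 - (a+1) ^ 2) * (1 - PowerSeries.C x * t ^ (2*a+1))
      * Pi' x s * pinv (s - (a+1)) * pinv (s + a)
  else 0

lemma sq_sub (p q : ℕ) (h : p ≤ q) (r : ℕ) (hr : q ^ 2 = r + p ^ 2) : q ^ 2 - p ^ 2 = r := by omega

set_option maxHeartbeats 1000000 in
lemma tel (x : ℚ) (hx : x = 1 ∨ x = -1) (a s : ℕ) :
    Tm x a s - Tm x (a+1) s = Um x a (s+1) - Um x a s := by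
  rcases lt_trichotomy s a with h | heq | h
  · have e1 : Tm x a s = 0 := by rw [Tm, if_neg (by omega)]
    have e2 : Tm x (a+1) s = 0 := by rw [Tm, if_neg (by omega)]
    have e3 : Um x a (s+1) = 0 := by rw [Um, if_neg (by omega)]
    have e4 : Um x a s = 0 := by rw [Um, if_neg (by omega)]
    rw [e1, e2, e3, e4]
  · subst heq
    have e2 : Tm x (s+1) s = 0 := by rw [Tm, if_neg (by omega)]
    have e4 : Um x s s = 0 := by rw [Um, if_neg (by omega)]
    have e1 : Tm x s s = Pi' x s * pinv (2*s) := by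
      rw [Tm, if_pos le_rfl, Nat.sub_self, Nat.sub_self, pow_zero, pow_zero, pinv_zero]
      have h3 : s + s = 2*s := by omega
      rw [h3]; ring
    have e3 : Um x s (s+1) = Pi' x s * pinv (2*s) := by
      rw [Um, if_pos le_rfl, Nat.sub_self, pow_zero]
      have hsq : (s+1)^2 - (s+1)^2 = 0 := by omega
      have h3 : s + 1 + s = 2*s+1 := by omega
      rw [hsq, pow_zero, h3, pinv_zero]
      have hPi : Pi' x (s+1) = Pi' x s * (1 + PowerSeries.C x * t ^ (2*s+1)) := by
        rw [Pi', Pi', Finset.prod_range_succ]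
      have hzz : (t : K) ^ (2*s+1) * t ^ (2*s+1) = t ^ (2*(2*s+1)) := by
        rw [← pow_add]; congr 1; omega
      have key : (1 - PowerSeries.C x * t ^ (2*s+1)) * (1 + PowerSeries.C x * t ^ (2*s+1))
          = 1 - t ^ (2*(2*s+1)) := by
        rcases hx with rfl | rfl <;>
          · simp only [map_one, map_neg, one_mul, neg_mul, neg_neg, sub_neg_eq_add]
            rw [← hzz]; ring
      calc (1:K) * 1 * (1 - PowerSeries.C x * t ^ (2*s+1)) * Pi' x (s+1) * 1 * pinv (2*s+1)
          = ((1 - PowerSeries.C x * t ^ (2*s+1)) * (1 + PowerSeries.C x * t ^ (2*s+1)))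
              * Pi' x s * pinv (2*s+1) := by rw [hPi]; ring
        _ = Pi' x s * ((1 - t ^ (2*(2*s+1))) * pinv (2*s+1)) := by rw [key]; ring
        _ = Pi' x s * pinv (2*s) := by rw [pinv_succ_mul (2*s)]
    rw [e1, e2, e3, e4]
  · obtain ⟨u, rfl⟩ : ∃ u, s = a+1+u := ⟨s - (a+1), by omega⟩
    apply mul_right_cancel₀ (mul_ne_zero (poch_ne_zero (u+1)) (poch_ne_zero (2*a+u+2)))
    have hT1 : Tm x a (a+1+u) * (poch (u+1) * poch (2*a+u+2))
        = (PowerSeries.C x) ^ (u+1) * t ^ ((u+1)*(2*a+u+1)) * Pi' x (a+1+u)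
          * (1 - t ^ (2*(2*a+u+2))) := by
      rw [Tm, if_pos (by omega)]
      have h1 : a+1+u - a = u+1 := by omega
      have h2 : (a+1+u)^2 - a^2 = (u+1)*(2*a+u+1) := sq_sub _ _ (by nlinarith) _ (by ring)
      have h3 : a+1+u + a = 2*a+u+1 := by omega
      rw [h1, h2, h3]
      calc (PowerSeries.C x)^(u+1) * t^((u+1)*(2*a+u+1)) * Pi' x (a+1+u) * pinv (u+1) * pinv (2*a+u+1)
            * (poch (u+1) * poch (2*a+u+2))
          = (PowerSeries.C x)^(u+1) * t^((u+1)*(2*a+u+1)) * Pi' x (a+1+u)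
            * ((pinv (u+1) * poch (u+1)) * (pinv (2*a+u+1) * poch (2*a+u+1+1))) := by
            have : 2*a+u+2 = 2*a+u+1+1 := by omega
            rw [this]; ring
        _ = _ := by rw [pinv_poch, pinv_mul_poch_succ, one_mul]
    have hT2 : Tm x (a+1) (a+1+u) * (poch (u+1) * poch (2*a+u+2))
        = (PowerSeries.C x) ^ u * t ^ (u*(2*a+u+2)) * Pi' x (a+1+u) * (1 - t ^ (2*(u+1))) := by
      rw [Tm, if_pos (by omega)]
      have h1 : a+1+u - (a+1) = u := by omega
      have h2 : (a+1+u)^2 - (a+1)^2 = u*(2*a+u+2) := sq_sub _ _ (by nlinarith) _ (by ring)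
      have h3 : a+1+u + (a+1) = 2*a+u+2 := by omega
      rw [h1, h2, h3]
      calc (PowerSeries.C x)^u * t^(u*(2*a+u+2)) * Pi' x (a+1+u) * pinv u * pinv (2*a+u+2)
            * (poch (u+1) * poch (2*a+u+2))
          = (PowerSeries.C x)^u * t^(u*(2*a+u+2)) * Pi' x (a+1+u)
            * ((pinv u * poch (u+1)) * (pinv (2*a+u+2) * poch (2*a+u+2))) := by ring
        _ = _ := by rw [pinv_poch, pinv_mul_poch_succ, mul_one]
    have hU1 : Um x a (a+1+u+1) * (poch (u+1) * poch (2*a+u+2))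
        = (PowerSeries.C x) ^ (u+1) * t ^ ((u+1)*(2*a+u+3))
            * (1 - PowerSeries.C x * t ^ (2*a+1)) * Pi' x (a+1+u)
            * (1 + PowerSeries.C x * t ^ (2*(a+1+u)+1)) := by
      rw [Um, if_pos (by omega)]
      have h1 : a+1+u+1 - (a+1) = u+1 := by omega
      have h2 : (a+1+u+1)^2 - (a+1)^2 = (u+1)*(2*a+u+3) := sq_sub _ _ (by nlinarith) _ (by ring)
      have h3 : a+1+u+1 + a = 2*a+u+2 := by omega
      have hPi : Pi' x (a+1+u+1) = Pi' x (a+1+u) * (1 + PowerSeries.C x * t ^ (2*(a+1+u)+1)) := by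
        rw [Pi', Pi', Finset.prod_range_succ]
      rw [h1, h2, h3, hPi]
      calc (PowerSeries.C x)^(u+1) * t^((u+1)*(2*a+u+3)) * (1 - PowerSeries.C x * t ^ (2*a+1))
            * (Pi' x (a+1+u) * (1 + PowerSeries.C x * t ^ (2*(a+1+u)+1))) * pinv (u+1) * pinv (2*a+u+2)
            * (poch (u+1) * poch (2*a+u+2))
          = (PowerSeries.C x)^(u+1) * t^((u+1)*(2*a+u+3)) * (1 - PowerSeries.C x * t ^ (2*a+1))
            * Pi' x (a+1+u) * (1 + PowerSeries.C x * t ^ (2*(a+1+u)+1))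
            * ((pinv (u+1) * poch (u+1)) * (pinv (2*a+u+2) * poch (2*a+u+2))) := by ring
        _ = _ := by rw [pinv_poch, pinv_poch]; ring
    have hU2 : Um x a (a+1+u) * (poch (u+1) * poch (2*a+u+2))
        = (PowerSeries.C x) ^ u * t ^ (u*(2*a+u+2)) * (1 - PowerSeries.C x * t ^ (2*a+1))
            * Pi' x (a+1+u) * ((1 - t ^ (2*(u+1))) * (1 - t ^ (2*(2*a+u+2)))) := by
      rw [Um, if_pos (by omega)]
      have h1 : a+1+u - (a+1) = u := by omega
      have h2 : (a+1+u)^2 - (a+1)^2 = u*(2*a+u+2) := sq_sub _ _ (by nlinarith) _ (by ring)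
      have h3 : a+1+u + a = 2*a+u+1 := by omega
      rw [h1, h2, h3]
      calc (PowerSeries.C x)^u * t^(u*(2*a+u+2)) * (1 - PowerSeries.C x * t ^ (2*a+1))
            * Pi' x (a+1+u) * pinv u * pinv (2*a+u+1) * (poch (u+1) * poch (2*a+u+2))
          = (PowerSeries.C x)^u * t^(u*(2*a+u+2)) * (1 - PowerSeries.C x * t ^ (2*a+1))
            * Pi' x (a+1+u)
            * ((pinv u * poch (u+1)) * (pinv (2*a+u+1) * poch (2*a+u+1+1))) := by
            have : 2*a+u+2 = 2*a+u+1+1 := by omega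
            rw [this]; ring
        _ = _ := by rw [pinv_mul_poch_succ, pinv_mul_poch_succ]
    rw [sub_mul, sub_mul, hT1, hT2, hU1, hU2]
    rcases hx with rfl | rfl <;>
    · simp only [map_one, map_neg, one_pow, one_mul, neg_mul, mul_neg, neg_neg]
      ring

/-! ### sums and limits -/

def Gsum (x : ℚ) (a N : ℕ) : K := ∑ s ∈ Finset.range N, Tm x a s

lemma Tm_diag (x : ℚ) (a : ℕ) : Tm x a a = Pi' x a * pinv (2*a) := by
  rw [Tm, if_pos le_rfl, Nat.sub_self, Nat.sub_self, pow_zero, pow_zero, pinv_zero]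
  have h3 : a + a = 2*a := by omega
  rw [h3]; ring

lemma dvd_Tm {d : ℕ} (x : ℚ) (a s : ℕ) (h : d + 1 + a^2 ≤ s^2) :
    (PowerSeries.X : K) ^ (d+1) ∣ Tm x a s := by
  rcases le_or_gt a s with hle | hlt
  · have he : Tm x a s = t ^ (s^2 - a^2) *
        ((PowerSeries.C x) ^ (s - a) * Pi' x s * pinv (s - a) * pinv (s + a)) := by
      rw [Tm, if_pos hle]; ring
    rw [he]
    exact Dvd.dvd.mul_right (dvd_tpow (by omega)) _
  · rw [Tm, if_neg (by omega)]; exact dvd_zero _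

lemma dvd_Um {d : ℕ} (x : ℚ) (a s : ℕ) (h : d + 1 + (a+1)^2 ≤ s^2) :
    (PowerSeries.X : K) ^ (d+1) ∣ Um x a s := by
  rcases le_or_gt (a+1) s with hle | hlt
  · have he : Um x a s = t ^ (s^2 - (a+1)^2) *
        ((PowerSeries.C x) ^ (s - (a+1)) * (1 - PowerSeries.C x * t ^ (2*a+1))
          * Pi' x s * pinv (s - (a+1)) * pinv (s + a)) := by
      rw [Um, if_pos hle]; ring
    rw [he]
    exact Dvd.dvd.mul_right (dvd_tpow (by omega)) _
  · rw [Um, if_neg (by omega)]; exact dvd_zero _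

lemma Gsum_step (x : ℚ) (hx : x = 1 ∨ x = -1) (a N d : ℕ) (hN : d + 1 + (a+1)^2 ≤ N^2) :
    MD d (Gsum x a N) (Gsum x (a+1) N) := by
  rw [MD, Gsum, Gsum, ← Finset.sum_sub_distrib]
  have : ∀ s ∈ Finset.range N, Tm x a s - Tm x (a+1) s = Um x a (s+1) - Um x a s :=
    fun s _ => tel x hx a s
  rw [Finset.sum_congr rfl this, Finset.sum_range_sub (fun s => Um x a s) N]
  have h0 : Um x a 0 = 0 := by rw [Um, if_neg (by omega)]
  rw [h0, sub_zero]
  exact dvd_Um x a N hN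

lemma Gsum_chain (x : ℚ) (hx : x = 1 ∨ x = -1) (a j N d : ℕ)
    (hN : d + 1 + (a+j+1)^2 ≤ N^2) :
    MD d (Gsum x a N) (Gsum x (a+j) N) := by
  induction j with
  | zero => exact MD.refl _
  | succ j ih =>
    have hnorm : a + (j+1) + 1 = a+j+1+1 := by omega
    rw [hnorm] at hN
    have hmon : (a+j+1)^2 ≤ (a+j+1+1)^2 := Nat.pow_le_pow_left (by omega) 2
    have h1 : d + 1 + (a+j+1)^2 ≤ N^2 := by omega
    have hch := ih h1
    refine MD.trans hch ?_
    have heq : a + (j+1) = (a+j) + 1 := by omega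
    rw [heq]
    have hstep := Gsum_step x hx (a+j) N d (by omega)
    exact hstep

lemma Gsum_end (x : ℚ) (a N d : ℕ) (ha : d + 1 ≤ 2*a+1) (hN : a < N) :
    MD d (Gsum x a N) (Pi' x a * pinv (2*a)) := by
  rw [MD, ← Tm_diag]
  have hmem : a ∈ Finset.range N := Finset.mem_range.2 hN
  rw [Gsum, ← Finset.add_sum_erase _ _ hmem, add_sub_cancel_left]
  apply Finset.dvd_sum
  intro s hs
  have hne : s ≠ a := (Finset.mem_erase.1 hs).1
  rcases lt_or_gt_of_ne hne with hlt | hgt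
  · rw [Tm, if_neg (by omega)]; exact dvd_zero _
  · apply dvd_Tm
    have : (a+1)^2 ≤ s^2 := Nat.pow_le_pow_left (by omega) 2
    have : a^2 + 2*a + 1 ≤ s^2 := by nlinarith
    omega

def Hsum (x : ℚ) (d : ℕ) : K :=
  pinv d * ∑ η ∈ Finset.range (d+1), (PowerSeries.C x) ^ η * t ^ (η^2) * pinv η

lemma H_md (x : ℚ) (d A : ℕ) (hA : d + 1 ≤ A) : MD d (Hsum x d) (Pi' x A * pinv (2*A)) := by
  have part1 : MD d (pinv d) (pinv (2*A)) := by
    refine dvd_trans (pow_dvd_pow _ (show d+1 ≤ 2*(d+1) by omega)) (pinv_md d (2*A) (by omega))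
  have part2 : MD d (∑ η ∈ Finset.range (d+1), (PowerSeries.C x) ^ η * t ^ (η^2) * pinv η)
      (Pi' x A) := by
    rw [← rsz x A]
    have hexp2 : (∑ η ∈ Finset.range (A+1), (PowerSeries.C x) ^ η * t ^ (η^2) * binqN A η)
        = (∑ η ∈ Finset.range (d+1), (PowerSeries.C x) ^ η * t ^ (η^2) * binqN A η)
          + ∑ i ∈ Finset.range (A - d), (PowerSeries.C x) ^ (d+1+i) * t ^ ((d+1+i)^2)
              * binqN A (d+1+i) := by
      have hsplit : A + 1 = (d+1) + (A - d) := by omega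
      rw [hsplit]
      exact Finset.sum_range_add _ (d+1) (A-d)
    rw [hexp2]
    have tail : (PowerSeries.X : K) ^ (d+1) ∣
        ∑ i ∈ Finset.range (A - d), (PowerSeries.C x) ^ (d+1+i) * t ^ ((d+1+i)^2)
          * binqN A (d+1+i) := by
      apply Finset.dvd_sum
      intro i _
      have he : (PowerSeries.C x) ^ (d+1+i) * t ^ ((d+1+i)^2) * binqN A (d+1+i)
          = t ^ ((d+1+i)^2) * ((PowerSeries.C x) ^ (d+1+i) * binqN A (d+1+i)) := by ring
      rw [he]
      refine Dvd.dvd.mul_right (dvd_tpow ?_) _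
      have := Nat.le_self_pow (two_ne_zero) (d+1+i)
      omega
    have main : MD d (∑ η ∈ Finset.range (d+1), (PowerSeries.C x) ^ η * t ^ (η^2) * pinv η)
        (∑ η ∈ Finset.range (d+1), (PowerSeries.C x) ^ η * t ^ (η^2) * binqN A η) := by
      apply MD.sum
      intro η hη
      rw [Finset.mem_range] at hη
      have hηA : η ≤ A := by omega
      set Q : K := ∏ k ∈ Finset.range η, (1 - t ^ (2 * (A - η + k + 1))) with hQdef
      have hQ : binqN A η = pinv η * Q := by
        rw [binqN, if_pos hηA]
        have hAe : A = (A - η) + η := by omega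
        have hp : poch A = poch (A - η) * Q := by
          conv_lhs => rw [hAe]
          exact poch_add (A - η) η
        rw [hp]
        have hre : poch (A - η) * Q * (pinv η * pinv (A - η))
            = (poch (A-η) * pinv (A-η)) * pinv η * Q := by ring
        rw [hre, poch_mul_inv, one_mul]
      have hd : (PowerSeries.X : K) ^ (η^2 + 2*(A - η + 1)) ∣
          ((PowerSeries.C x) ^ η * t ^ (η^2) * pinv η
            - (PowerSeries.C x) ^ η * t ^ (η^2) * binqN A η) := by
        have he : (PowerSeries.C x) ^ η * t ^ (η^2) * pinv η
            - (PowerSeries.C x) ^ η * t ^ (η^2) * binqN A η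
            = t ^ (η^2) * ((1 - Q) * ((PowerSeries.C x) ^ η * pinv η)) := by
          rw [hQ]; ring
        rw [he, pow_add]
        apply mul_dvd_mul
        · rw [t]
        · refine Dvd.dvd.mul_right ?_ _
          have := dvd_neg.2 (prod_tail_md (A - η) η)
          simpa [hQdef] using this
      refine dvd_trans (pow_dvd_pow _ ?_) hd
      have hq : 2*η ≤ η^2 + 1 := by nlinarith
      omega
    refine MD.trans main (MD.symm ?_)
    rw [MD]
    have : (∑ η ∈ Finset.range (d+1), (PowerSeries.C x) ^ η * t ^ (η^2) * binqN A η)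
        + (∑ i ∈ Finset.range (A - d), (PowerSeries.C x) ^ (d+1+i) * t ^ ((d+1+i)^2)
            * binqN A (d+1+i))
        - (∑ η ∈ Finset.range (d+1), (PowerSeries.C x) ^ η * t ^ (η^2) * binqN A η)
        = ∑ i ∈ Finset.range (A - d), (PowerSeries.C x) ^ (d+1+i) * t ^ ((d+1+i)^2)
            * binqN A (d+1+i) := by ring
    rw [this]
    exact tail
  have h3 := MD.mul part1 part2
  rw [Hsum, mul_comm (Pi' x A)]
  exact h3

/-! ### core congruence -/

lemma core (x : ℚ) (hx : x = 1 ∨ x = -1) (a d : ℕ) :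
    MD d (Gsum x a (a + 2*d + 3)) (Hsum x d) := by
  set A := a + d + 1 with hA
  set N := a + 2*d + 3 with hN
  have h1 : MD d (Gsum x a N) (Gsum x A N) := by
    have hineq : d + 1 + (a + (d+1) + 1)^2 ≤ N^2 := by
      have hNe : N = (a + d + 2) + (d + 1) := by omega
      have hsq : N^2 = (a+d+2)^2 + 2*(a+d+2)*(d+1) + (d+1)^2 := by rw [hNe]; ring
      have h2 : a + (d+1) + 1 = a+d+2 := by omega
      rw [h2, hsq]
      nlinarith
    have := Gsum_chain x hx a (d+1) N d hineq
    simpa [hA, ← add_assoc] using this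
  have h2 : MD d (Gsum x A N) (Pi' x A * pinv (2*A)) :=
    Gsum_end x A N d (by omega) (by omega)
  have h3 : MD d (Hsum x d) (Pi' x A * pinv (2*A)) := H_md x d A (by omega)
  exact MD.trans (MD.trans h1 h2) (MD.symm h3)

/-! ### parity split -/

def epsZ (M : ℤ) : ℚ := if M % 2 = 0 then 1 else -1

lemma htwo : (PowerSeries.C (1/2:ℚ)) * 2 = 1 := by
  have h2 : (2 : K) = PowerSeries.C 2 := (map_ofNat (PowerSeries.C (R := ℚ)) 2).symm
  rw [h2, ← map_mul]
  norm_num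

lemma split_if (M : ℤ) (n : ℕ) (c : K) :
    (if ((n:ℤ) - M) % 2 = 0 then c else 0)
      = PowerSeries.C (1/2) * (c + PowerSeries.C (epsZ M) * ((PowerSeries.C (-1))^n * c)) := by
  have hp : (PowerSeries.C (-1))^n * c = PowerSeries.C ((-1)^n) * c := by
    rw [← map_pow]
  rw [hp]
  by_cases hn : n % 2 = 0 <;> by_cases hM : M % 2 = 0
  · rw [if_pos (by omega), epsZ, if_pos hM]
    have hpow : ((-1:ℚ))^n = 1 := Even.neg_one_pow (Nat.even_iff.2 hn)
    rw [hpow, map_one, one_mul, one_mul,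
      show c + c = 2 * c by ring, ← mul_assoc, htwo, one_mul]
  · rw [if_neg (by omega), epsZ, if_neg hM]
    have hpow : ((-1:ℚ))^n = 1 := Even.neg_one_pow (Nat.even_iff.2 hn)
    rw [hpow, map_one, one_mul]
    have hneg : PowerSeries.C (-1) * c = -c := by
      have : PowerSeries.C (-1:ℚ) = -1 := by rw [map_neg, map_one]
      rw [this]; ring
    rw [hneg, add_neg_cancel, mul_zero]
  · rw [if_neg (by omega), epsZ, if_pos hM]
    have hpow : ((-1:ℚ))^n = -1 := Odd.neg_one_pow (Nat.odd_iff.2 (by omega))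
    rw [hpow, map_one, one_mul]
    have hneg : PowerSeries.C (-1) * c = -c := by
      have : PowerSeries.C (-1:ℚ) = -1 := by rw [map_neg, map_one]
      rw [this]; ring
    rw [hneg, add_neg_cancel, mul_zero]
  · rw [if_pos (by omega), epsZ, if_neg hM]
    have hpow : ((-1:ℚ))^n = -1 := Odd.neg_one_pow (Nat.odd_iff.2 (by omega))
    rw [hpow]
    have hdd : PowerSeries.C (-1) * (PowerSeries.C (-1) * c) = c := by
      rw [← mul_assoc, ← map_mul]; norm_num
    rw [hdd, show c + c = 2 * c by ring, ← mul_assoc, htwo, one_mul]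

lemma epsZ_natCast (m : ℕ) : epsZ (m : ℤ) = (-1:ℚ)^m := by
  rw [epsZ]
  by_cases h : m % 2 = 0
  · rw [if_pos (by omega)]
    exact (Even.neg_one_pow (Nat.even_iff.2 h)).symm
  · rw [if_neg (by omega)]
    exact (Odd.neg_one_pow (Nat.odd_iff.2 (by omega))).symm

/-! ### the inner sum and J -/

def Inn (σ s : ℕ) : K :=
  ∑ n ∈ Finset.range (s+1),
    (if ((n:ℤ) - ((s:ℤ) + σ)) % 2 = 0 then t^(n^2) * binqN s n else 0)

def J (σ a s : ℕ) : K :=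
  if a ≤ s then t^(s^2 - a^2) * pinv (s-a) * pinv (s+a) * Inn σ s else 0

lemma Inn_split (σ s : ℕ) :
    Inn σ s = PowerSeries.C (1/2) *
      (Pi' 1 s + PowerSeries.C (epsZ ((s:ℤ) + σ)) * Pi' (-1) s) := by
  rw [Inn]
  have hterm : ∀ n ∈ Finset.range (s+1),
      (if ((n:ℤ) - ((s:ℤ) + σ)) % 2 = 0 then t^(n^2) * binqN s n else 0)
        = PowerSeries.C (1/2) * ((PowerSeries.C 1)^n * t^(n^2) * binqN s n
            + PowerSeries.C (epsZ ((s:ℤ) + σ))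
              * ((PowerSeries.C (-1))^n * t^(n^2) * binqN s n)) := by
    intro n _
    rw [split_if ((s:ℤ) + σ) n (t^(n^2) * binqN s n)]
    rw [map_one, one_pow, one_mul]
    ring
  rw [Finset.sum_congr rfl hterm, ← Finset.mul_sum, Finset.sum_add_distrib, ← Finset.mul_sum,
    rsz 1 s, rsz (-1) s]

lemma J_split (σ a s : ℕ) :
    J σ a s = PowerSeries.C (1/2) *
      (Tm 1 a s + PowerSeries.C ((-1:ℚ)^(a+σ)) * Tm (-1) a s) := by
  rcases le_or_gt a s with h | h
  · rw [J, if_pos h, Tm, if_pos h, Tm, if_pos h, Inn_split]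
    have hsign : epsZ ((s:ℤ) + σ) = (-1:ℚ)^(a+σ) * (-1:ℚ)^(s-a) := by
      have h1 : (s:ℤ) + σ = ((s + σ : ℕ) : ℤ) := by push_cast; ring
      rw [h1, epsZ_natCast, ← pow_add]
      congr 1
      omega
    rw [hsign, map_one, one_pow]
    have hC : PowerSeries.C ((-1:ℚ)^(a+σ) * (-1:ℚ)^(s-a))
        = PowerSeries.C ((-1:ℚ)^(a+σ)) * (PowerSeries.C (-1))^(s-a) := by
      rw [map_mul, map_pow, map_pow]
    rw [hC]
    ring
  · rw [J, if_neg (by omega), Tm, if_neg (by omega), Tm, if_neg (by omega)]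
    simp

lemma dvd_J {d : ℕ} (σ a s : ℕ) (h : d + 1 + a^2 ≤ s^2) :
    (PowerSeries.X : K) ^ (d+1) ∣ J σ a s := by
  rcases le_or_gt a s with hle | hlt
  · have he : J σ a s = t ^ (s^2 - a^2) * (pinv (s-a) * pinv (s+a) * Inn σ s) := by
      rw [J, if_pos hle]; ring
    rw [he]
    exact Dvd.dvd.mul_right (dvd_tpow (by omega)) _
  · rw [J, if_neg (by omega)]; exact dvd_zero _

lemma J_extend (σ a d M : ℕ) (h : a + d + 1 ≤ M) :
    MD d (∑ s ∈ Finset.range M, J σ a s) (∑ s ∈ Finset.range (a+d+1), J σ a s) := by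
  obtain ⟨r, rfl⟩ := Nat.exists_eq_add_of_le h
  rw [Finset.sum_range_add]
  rw [MD, add_sub_cancel_left]
  apply Finset.dvd_sum
  intro i _
  apply dvd_J
  have h1 : (a+d+1)^2 ≤ (a+d+1+i)^2 := Nat.pow_le_pow_left (by omega) 2
  nlinarith

/-! ### bridge to the statement's form -/

lemma F_eq_J (σ : ℕ) (l2 : ℤ) (i s : ℕ) (hil2 : (i:ℤ) + l2 = (s:ℤ))
    (hi2 : 0 ≤ (i:ℤ) + 2*l2) :
    tp ((i:ℤ) * ((i:ℤ) + 2 * l2)) * pochInv (i:ℤ) * pochInv ((i:ℤ) + 2 * l2) *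
      (∑ᶠ n : ℕ, if ((n:ℤ) - ((i:ℤ) + l2 + σ)) % 2 = 0 then
        t ^ (n ^ 2) * binq ((i:ℤ) + l2) (n:ℤ) else 0)
    = J σ l2.natAbs s := by
  set a := l2.natAbs with ha
  have has : a ≤ s := by omega
  have hsupp : (Function.support fun n : ℕ =>
      if ((n:ℤ) - ((i:ℤ) + l2 + σ)) % 2 = 0 then
        t ^ (n ^ 2) * binq ((i:ℤ) + l2) (n:ℤ) else 0) ⊆ ↑(Finset.range (s+1)) := by
    intro n hn
    simp only [Function.mem_support] at hn
    by_contra hmem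
    apply hn
    have hns : ¬ ((n:ℤ) ≤ (i:ℤ) + l2) := by
      simp only [Finset.coe_range, Set.mem_Iio] at hmem
      omega
    have hb0 : binq ((i:ℤ) + l2) (n:ℤ) = 0 := by rw [binq, if_neg (by omega)]
    rw [hb0, mul_zero, ite_self]
  rw [finsum_eq_sum_of_support_subset _ hsupp]
  have hbin : ∀ n ∈ Finset.range (s+1),
      (if ((n:ℤ) - ((i:ℤ) + l2 + σ)) % 2 = 0 then
        t ^ (n ^ 2) * binq ((i:ℤ) + l2) (n:ℤ) else 0)
      = (if ((n:ℤ) - ((s:ℤ) + σ)) % 2 = 0 then t^(n^2) * binqN s n else 0) := by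
    intro n hn
    rw [Finset.mem_range] at hn
    have h1 : (i:ℤ) + l2 + σ = (s:ℤ) + σ := by omega
    rw [h1]
    have hb : binq ((i:ℤ) + l2) (n:ℤ) = binqN s n := by
      rw [binq, binqN, if_pos ⟨Int.natCast_nonneg n, by omega⟩, if_pos (by omega)]
      have e1 : ((i:ℤ) + l2).toNat = s := by omega
      have e2 : ((n:ℤ)).toNat = n := Int.toNat_natCast n
      have e3 : ((i:ℤ) + l2 - (n:ℤ)).toNat = s - n := by omega
      rw [e1, e2, e3]
    rw [hb]
  rw [Finset.sum_congr rfl hbin]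
  have hsq : a^2 ≤ s^2 := Nat.pow_le_pow_left has 2
  have htp : tp ((i:ℤ) * ((i:ℤ) + 2*l2)) = t ^ (s^2 - a^2) := by
    have hZ : (i:ℤ) * ((i:ℤ) + 2*l2) = (s:ℤ)^2 - (a:ℤ)^2 := by
      have hi : (i:ℤ) = (s:ℤ) - l2 := by omega
      have hab : (a:ℤ)^2 = l2^2 := by
        have h := Int.natAbs_mul_self' l2
        have : (a:ℤ) * (a:ℤ) = l2 * l2 := by rw [ha]; exact h
        nlinarith [this]
      rw [hab, hi]; ring
    have hnn : 0 ≤ (i:ℤ) * ((i:ℤ) + 2*l2) := mul_nonneg (Int.natCast_nonneg i) hi2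
    rw [tp, if_pos hnn]
    congr 1
    have hcast : ((s^2 - a^2 : ℕ) : ℤ) = (s:ℤ)^2 - (a:ℤ)^2 := by
      push_cast [Nat.cast_sub hsq]
      ring
    omega
  have hpi : pochInv (i:ℤ) * pochInv ((i:ℤ) + 2*l2) = pinv (s-a) * pinv (s+a) := by
    rw [pochInv, if_pos (Int.natCast_nonneg i), pochInv, if_pos hi2]
    rcases le_or_gt 0 l2 with hl | hl
    · have e1 : ((i:ℤ)).toNat = s - a := by omega
      have e2 : ((i:ℤ) + 2*l2).toNat = s + a := by omega
      rw [e1, e2]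
    · have e1 : ((i:ℤ)).toNat = s + a := by omega
      have e2 : ((i:ℤ) + 2*l2).toNat = s - a := by omega
      rw [e1, e2, mul_comm]
  rw [J, if_pos has, Inn]
  rw [mul_assoc (tp ((i:ℤ) * ((i:ℤ) + 2*l2))), hpi, htp]
  ring

/-! ### main assembly -/

lemma main_common (σ a d : ℕ) (l2 : ℤ) (hal2 : a = l2.natAbs) :
    PowerSeries.coeff d (∑ s ∈ Finset.range (a+d+1), J σ a s)
      = PowerSeries.coeff d ((poch d)⁻¹ * ∑ η ∈ Finset.range (d + 1),
          if ((η : ℤ) - (l2 + σ)) % 2 = 0 then t ^ (η ^ 2) * (poch η)⁻¹ else 0) := by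
  set N := a + 2*d + 3 with hN
  have h1 := (J_extend σ a d N (by omega)).coeff
  rw [← h1]
  have hJs : ∑ s ∈ Finset.range N, J σ a s
      = PowerSeries.C (1/2) * (Gsum 1 a N
          + PowerSeries.C ((-1:ℚ)^(a+σ)) * Gsum (-1) a N) := by
    rw [Finset.sum_congr rfl (fun s _ => J_split σ a s), ← Finset.mul_sum,
      Finset.sum_add_distrib, ← Finset.mul_sum]
    rfl
  rw [hJs]
  have hMD : MD d (PowerSeries.C (1/2) * (Gsum 1 a N
        + PowerSeries.C ((-1:ℚ)^(a+σ)) * Gsum (-1) a N))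
      (PowerSeries.C (1/2) * (Hsum 1 d
        + PowerSeries.C ((-1:ℚ)^(a+σ)) * Hsum (-1) d)) :=
    MD.mul (MD.refl _) (MD.add (core 1 (Or.inl rfl) a d)
      (MD.mul (MD.refl _) (core (-1) (Or.inr rfl) a d)))
  rw [hMD.coeff]
  congr 1
  have hee : epsZ (l2 + (σ:ℤ)) = (-1:ℚ)^(a+σ) := by
    have hmod : (l2 + (σ:ℤ)) % 2 = (((a + σ : ℕ)):ℤ) % 2 := by push_cast; omega
    have : epsZ (l2 + (σ:ℤ)) = epsZ ((a+σ : ℕ):ℤ) := by rw [epsZ, epsZ, hmod]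
    rw [this, epsZ_natCast]
  have hterm : ∀ η ∈ Finset.range (d+1),
      (if ((η:ℤ) - (l2 + σ)) % 2 = 0 then t^(η^2) * (poch η)⁻¹ else 0)
        = PowerSeries.C (1/2) * ((PowerSeries.C 1)^η * t^(η^2) * pinv η
            + PowerSeries.C ((-1:ℚ)^(a+σ))
              * ((PowerSeries.C (-1))^η * t^(η^2) * pinv η)) := by
    intro η _
    rw [split_if (l2 + (σ:ℤ)) η (t^(η^2) * (poch η)⁻¹), hee, map_one, one_pow]
    ring
  rw [Finset.sum_congr rfl hterm, ← Finset.mul_sum, Finset.sum_add_distrib, ← Finset.mul_sum,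
    Hsum, Hsum]
  ring

theorem level_two_string_function (l2 : ℤ) (σ : ℕ) (hσ : σ = 0 ∨ σ = 1) (d : ℕ) :
    PowerSeries.coeff d
        (∑ i ∈ Finset.range (d + (2 * l2).natAbs + 1),
          tp ((i : ℤ) * (i + 2 * l2)) * pochInv (i : ℤ) * pochInv ((i : ℤ) + 2 * l2) *
            (∑ᶠ n : ℕ,
              if ((n : ℤ) - ((i : ℤ) + l2 + σ)) % 2 = 0 then
                t ^ (n ^ 2) * binq ((i : ℤ) + l2) (n : ℤ)
              else 0))
      = PowerSeries.coeff d
          ((poch d)⁻¹ *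
            ∑ η ∈ Finset.range (d + 1),
              if ((η : ℤ) - (l2 + σ)) % 2 = 0 then t ^ (η ^ 2) * (poch η)⁻¹ else 0) := by
  have h2a : (2 * l2).natAbs = 2 * l2.natAbs := by omega
  set a := l2.natAbs with ha
  rw [h2a]
  rcases le_or_gt 0 l2 with hl | hl
  · have hFi : ∀ i ∈ Finset.range (d + 2*a + 1),
        tp ((i : ℤ) * (i + 2 * l2)) * pochInv (i : ℤ) * pochInv ((i : ℤ) + 2 * l2) *
            (∑ᶠ n : ℕ,
              if ((n : ℤ) - ((i : ℤ) + l2 + σ)) % 2 = 0 then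
                t ^ (n ^ 2) * binq ((i : ℤ) + l2) (n : ℤ)
              else 0) = J σ a (a + i) := by
      intro i _
      exact F_eq_J σ l2 i (a+i) (by omega) (by omega)
    rw [Finset.sum_congr rfl hFi]
    have hsum : ∑ s ∈ Finset.range (a + (d + 2*a + 1)), J σ a s
        = ∑ i ∈ Finset.range (d + 2*a + 1), J σ a (a + i) := by
      have h0 : ∑ s ∈ Finset.range a, J σ a s = 0 :=
        Finset.sum_eq_zero (fun s hs => by
          rw [Finset.mem_range] at hs; rw [J, if_neg (by omega)])
      rw [Finset.sum_range_add, h0, zero_add]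
    rw [← hsum, (J_extend σ a d (a + (d + 2*a + 1)) (by omega)).coeff]
    exact main_common σ a d l2 ha
  · have hsplit : d + 2*a + 1 = 2*a + (d+1) := by omega
    rw [hsplit, Finset.sum_range_add]
    have h0 : ∑ i ∈ Finset.range (2*a),
        (tp ((i : ℤ) * (i + 2 * l2)) * pochInv (i : ℤ) * pochInv ((i : ℤ) + 2 * l2) *
            (∑ᶠ n : ℕ,
              if ((n : ℤ) - ((i : ℤ) + l2 + σ)) % 2 = 0 then
                t ^ (n ^ 2) * binq ((i : ℤ) + l2) (n : ℤ)
              else 0)) = 0 := by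
      apply Finset.sum_eq_zero
      intro i hi
      rw [Finset.mem_range] at hi
      have hz : pochInv ((i : ℤ) + 2 * l2) = 0 := by
        rw [pochInv, if_neg (by omega)]
      rw [hz, mul_zero, zero_mul]
    rw [h0, zero_add]
    have hFi : ∀ j ∈ Finset.range (d+1),
        tp (((2*a + j : ℕ) : ℤ) * ((2*a + j : ℕ) + 2 * l2)) * pochInv ((2*a + j : ℕ) : ℤ)
          * pochInv (((2*a + j : ℕ) : ℤ) + 2 * l2) *
            (∑ᶠ n : ℕ,
              if ((n : ℤ) - (((2*a + j : ℕ) : ℤ) + l2 + σ)) % 2 = 0 then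
                t ^ (n ^ 2) * binq (((2*a + j : ℕ) : ℤ) + l2) (n : ℤ)
              else 0) = J σ a (a + j) := by
      intro j _
      exact F_eq_J σ l2 (2*a + j) (a+j) (by omega) (by omega)
    rw [Finset.sum_congr rfl hFi]
    have hsum : ∑ s ∈ Finset.range (a + (d + 1)), J σ a s
        = ∑ j ∈ Finset.range (d + 1), J σ a (a + j) := by
      have h0' : ∑ s ∈ Finset.range a, J σ a s = 0 :=
        Finset.sum_eq_zero (fun s hs => by
          rw [Finset.mem_range] at hs; rw [J, if_neg (by omega)])
      rw [Finset.sum_range_add, h0', zero_add]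
    rw [← hsum]
    exact main_common σ a d l2 ha

end Stmt18
end
end
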